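/- arXiv:math/0511310 — 5 statements merged into one kernel-verified Lean document; each statement's English description precedes it below -/
import Mathlib

section
/- Let K be an algebraically closed valued field, let C ≤ A be valued subfields of K which are algebraically closed as fields, let a₁,…,a_n ∈ K, and suppose that A is the algebraic closure of C(a₁,…,a_n) inside K and that Γ_C = Γ_A. Then there exist elements e₁,…,e_m of the subring C[a₁,…,a_n] with |e_i| ≤ 1 for each i, such that e₁,…,e_m are algebraically independent over C and the residues res(e₁),…,res(e_m) form a transcendence basis of k(A) over k(C). -/
/-!
Among the families `e` of integral elements of `C[a]` whose residues are algebraically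
independent over `k(C)`, take one of maximal length. Residue independence implies independence
over `C` (rescale a relation by its largest coefficient, which lies in `C`), so the length is at
most `n`. By maximality the residue of every integral element of `C[a]` is algebraic over
`k(C)[res e]`. An integral `x ∈ A` is a root of a nonzero polynomial over `C[a]`; as `Γ_C = Γ_A`,
dividing by an element of `C` makes its coefficients integral with one of them a unit, and its
reduction is a nonzero polynomial with coefficients algebraic over `k(C)[res e]` vanishing at
`res x`.
-/

universe u w

open MvPolynomial

theorem AlgebraicIndependent.le_of_forall_mem_adjoin {R A : Type*} [CommRing R] [IsDomain R]
    [CommRing A] [Algebra R A] {m n : ℕ} {e : Fin m → A} (he : AlgebraicIndependent R e)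
    (a : Fin n → A) (hea : ∀ i, e i ∈ Algebra.adjoin R (Set.range a)) : m ≤ n := by
  simp_rw [Algebra.adjoin_range_eq_range_aeval] at hea
  choose E hE using hea
  have hE : AlgebraicIndependent R E :=
    .of_comp (aeval a) (by convert he; exact funext hE)
  simpa using hE.lift_cardinalMk_le_trdeg

theorem Subfield.algebraicIndependent_of_forall {K ι : Type*} [Field K] (C : Subfield K)
    (e : ι → K) (he : ∀ p : MvPolynomial ι K, (∀ mon, p.coeff mon ∈ C) → eval e p = 0 → p = 0) :
    AlgebraicIndependent C e := by
  rw [algebraicIndependent_iff]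
  intro p hp
  apply map_injective C.subtype Subtype.val_injective
  rw [map_zero]
  refine he _ (fun mon => by simp [coeff_map]) ?_
  rw [eval_map]
  exact hp

theorem Subfield.subringClosure_union_le_adjoin {K : Type*} [Field K] (C : Subfield K)
    (s : Set K) : Subring.closure ((C : Set K) ∪ s) ≤ (Algebra.adjoin C s).toSubring :=
  Subring.closure_le.2 <| Set.union_subset (fun c hc => Subalgebra.algebraMap_mem _ (⟨c, hc⟩ : C))
    Algebra.subset_adjoin

theorem exists_common_denominator {F ι : Type*} [Field F] [Fintype ι] (S : Set F) (c : ι → F)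
    (hc : ∀ j, c j ∈ Subfield.closure S) :
    ∃ Z : F, Z ≠ 0 ∧ ∀ j, c j * Z ∈ Subring.closure S := by
  classical
  have h : ∀ j, ∃ y ∈ Subring.closure S, ∃ z ∈ Subring.closure S, z ≠ 0 ∧ c j = y / z := by
    intro j
    obtain ⟨y, hy, z, hz, hyz⟩ := Subfield.mem_closure_iff.1 (hc j)
    rcases eq_or_ne z 0 with rfl | hz0
    · exact ⟨0, zero_mem _, 1, one_mem _, one_ne_zero, by simp_all⟩
    · exact ⟨y, hy, z, hz, hz0, hyz.symm⟩
  choose y hy z hz hz0 hc' using h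
  refine ⟨∏ j, z j, Finset.prod_ne_zero_iff.2 fun j _ => hz0 j, fun j => ?_⟩
  rw [hc' j, ← Finset.mul_prod_erase _ z (Finset.mem_univ j), div_mul_eq_mul_div,
    mul_left_comm, mul_div_cancel_left₀ _ (hz0 j)]
  exact mul_mem (hy j) (prod_mem fun k _ => hz k)

theorem Polynomial.exists_sum_eq_zero_of_coeff_mem_closure {F : Type*} [Field F] {T : Set F}
    {P : Polynomial F} (hP : P ≠ 0) (hPT : ∀ j, P.coeff j ∈ Subfield.closure T) {x : F}
    (hx : P.eval x = 0) : ∃ (d : ℕ) (g : Fin (d + 1) → F),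
      (∀ j, g j ∈ Subring.closure T) ∧ (∃ j, g j ≠ 0) ∧ ∑ j, g j * x ^ (j : ℕ) = 0 := by
  obtain ⟨Z, hZ, hZT⟩ := exists_common_denominator T (fun j : Fin (P.natDegree + 1) => P.coeff j)
    fun j => hPT j
  refine ⟨P.natDegree, fun j => P.coeff j * Z, hZT, ⟨Fin.last _, by simpa using ⟨hP, hZ⟩⟩, ?_⟩
  rw [Polynomial.eval_eq_sum_range, ← Fin.sum_univ_eq_sum_range] at hx
  simp only [mul_right_comm _ Z, ← Finset.sum_mul, hx, zero_mul]

theorem isAlgebraic_iff_exists_sum_eq_zero {R A : Type*} [CommRing R] [CommRing A] [Algebra R A]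
    {y : A} : IsAlgebraic R y ↔ ∃ (d : ℕ) (c : Fin (d + 1) → R), (∃ j, c j ≠ 0) ∧
      ∑ j, algebraMap R A (c j) * y ^ (j : ℕ) = 0 := by
  constructor
  · rintro ⟨p, hp, hpy⟩
    refine ⟨p.natDegree, fun j => p.coeff j, ⟨Fin.last _, by simpa using hp⟩, ?_⟩
    rw [Polynomial.aeval_eq_sum_range, ← Fin.sum_univ_eq_sum_range] at hpy
    simpa [Algebra.smul_def] using hpy
  · rintro ⟨d, c, ⟨j, hj⟩, hsum⟩
    refine ⟨∑ j : Fin (d + 1), Polynomial.monomial j (c j), fun hp => hj ?_,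
      by simpa [Algebra.smul_def]⟩
    have := congrArg (Polynomial.coeff · j) hp
    simpa [Polynomial.finsetSum_coeff, Polynomial.coeff_monomial, Fin.val_eq_val] using this

theorem isAlgebraic_of_sum_eq_zero {R A : Type*} [CommRing R] [IsDomain R] [Field A]
    [Algebra R A] {d : ℕ} (c : Fin (d + 1) → A) (hc : ∀ j, IsAlgebraic R (c j))
    (hc0 : ∃ j, c j ≠ 0) {y : A} (hy : ∑ j, c j * y ^ (j : ℕ) = 0) : IsAlgebraic R y := by
  let S := Algebra.adjoin R (Set.range c)
  have : Algebra.IsAlgebraic R S := (Subalgebra.isAlgebraic_iff _).1 <|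
    Algebra.isAlgebraic_adjoin_iff.2 (by rintro _ ⟨j, rfl⟩; exact hc j)
  obtain ⟨j, hj⟩ := hc0
  refine IsAlgebraic.restrictScalars (S := S) _ (isAlgebraic_iff_exists_sum_eq_zero.2
    ⟨d, fun j => ⟨c j, Algebra.subset_adjoin ⟨j, rfl⟩⟩, ⟨j, ?_⟩, hy⟩)
  exact fun h => hj (congrArg Subtype.val h)

namespace Valuation

section Relations

variable {K Γ : Type*} [Field K] [LinearOrderedCommGroupWithZero Γ] (v : Valuation K Γ)
  (C : Subfield K) {ι : Type*}

def IntegralCoeffs (q : MvPolynomial ι K) : Prop :=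
  ∀ mon, q.coeff mon ∈ C ∧ v (q.coeff mon) ≤ 1

/-- The residues of `e` are algebraically independent over `k(C)`. -/
def ResiduallyIndependent (e : ι → K) : Prop :=
  ∀ p : MvPolynomial ι K, v.IntegralCoeffs C p → v (eval e p) < 1 → ∀ mon, v (p.coeff mon) < 1

/-- The residue of `x` is algebraic over `k(C)[res e]`
(see `hasResidualRelation_iff_isAlgebraic`). -/
def HasResidualRelation (e : ι → K) (x : K) : Prop :=
  ∃ (d : ℕ) (q : Fin (d + 1) → MvPolynomial ι K), (∀ j, v.IntegralCoeffs C (q j)) ∧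
    (∃ j, v (eval e (q j)) = 1) ∧ v (∑ j, eval e (q j) * x ^ (j : ℕ)) < 1

variable {v C}

theorem valuation_eval_le_one {e : ι → K} (he : ∀ i, v (e i) ≤ 1) {q : MvPolynomial ι K}
    (hq : v.IntegralCoeffs C q) : v (eval e q) ≤ 1 :=
  show eval e q ∈ v.valuationSubring from eval_mem (fun mon _ => (hq mon).2) he

theorem residuallyIndependent_of_isEmpty [IsEmpty ι] (e : ι → K) :
    v.ResiduallyIndependent C e := by
  intro p _ hp mon
  rwa [Subsingleton.elim mon 0, ← eval_C (f := e) (p.coeff 0), ← eq_C_of_isEmpty p]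

theorem ResiduallyIndependent.valuation_eval_eq_one {e : ι → K} (he : ∀ i, v (e i) ≤ 1)
    (hind : v.ResiduallyIndependent C e) {q : MvPolynomial ι K} (hq : v.IntegralCoeffs C q)
    {mon : ι →₀ ℕ} (hmon : v (q.coeff mon) = 1) : v (eval e q) = 1 :=
  (valuation_eval_le_one he hq).antisymm <| not_lt.1 fun h => (hind q hq h mon).ne hmon

theorem ResiduallyIndependent.eq_zero_of_eval_eq_zero {e : ι → K} (he : ∀ i, v (e i) ≤ 1)
    (hind : v.ResiduallyIndependent C e) {p : MvPolynomial ι K} (hpC : ∀ mon, p.coeff mon ∈ C)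
    (hp : eval e p = 0) : p = 0 := by
  by_contra hp0
  obtain ⟨mon₀, hmon₀, hmax⟩ := p.support.exists_max_image (fun mon => v (p.coeff mon))
    (support_nonempty.2 hp0)
  have hc : p.coeff mon₀ ≠ 0 := mem_support_iff.1 hmon₀
  have hvc : v (p.coeff mon₀) ≠ 0 := v.ne_zero_iff.2 hc
  set p' := MvPolynomial.C (p.coeff mon₀)⁻¹ * p
  have hp' : v.IntegralCoeffs C p' := by
    intro mon
    refine ⟨by simpa [p', coeff_C_mul] using C.mul_mem (C.inv_mem (hpC mon₀)) (hpC mon), ?_⟩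
    rw [coeff_C_mul, map_mul, map_inv₀, inv_mul_le_one₀ (zero_lt_iff.2 hvc)]
    by_cases hmon : mon ∈ p.support
    · exact hmax mon hmon
    · simp [notMem_support_iff.1 hmon]
  have h1 := hind.valuation_eval_eq_one he hp' (mon := mon₀)
    (by rw [coeff_C_mul, inv_mul_cancel₀ hc, map_one])
  simp [p', hp] at h1

theorem ResiduallyIndependent.le_of_forall_mem_closure {m n : ℕ} {e : Fin m → K}
    (he : ∀ i, v (e i) ≤ 1) (hind : v.ResiduallyIndependent C e) (a : Fin n → K)
    (hea : ∀ i, e i ∈ Subring.closure ((C : Set K) ∪ Set.range a)) : m ≤ n :=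
  (C.algebraicIndependent_of_forall e fun _ => hind.eq_zero_of_eval_eq_zero he
    ).le_of_forall_mem_adjoin a fun i => C.subringClosure_union_le_adjoin _ (hea i)

theorem ResiduallyIndependent.hasResidualRelation_of_not_cons {m : ℕ} {e : Fin m → K}
    (he : ∀ i, v (e i) ≤ 1) (hind : v.ResiduallyIndependent C e) {g : K}
    (hcons : ¬ v.ResiduallyIndependent C (Fin.cons g e : Fin (m + 1) → K)) :
    v.HasResidualRelation C e g := by
  simp only [ResiduallyIndependent, not_forall, not_lt] at hcons
  obtain ⟨p, hp, hpg, mon₀, hmon₀⟩ := hcons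
  set P := finSuccEquiv K m p
  have hP : ∀ j, v.IntegralCoeffs C (P.coeff j) := fun j mon => by
    rw [finSuccEquiv_coeff_coeff]; exact hp _
  have hP₀ : v ((P.coeff (mon₀ 0)).coeff (Finsupp.tail mon₀)) = 1 := by
    rw [finSuccEquiv_coeff_coeff, Finsupp.cons_tail]
    exact (hp mon₀).2.antisymm hmon₀
  have hdeg : mon₀ 0 < P.natDegree + 1 := Nat.lt_succ_of_le <|
    Polynomial.le_natDegree_of_ne_zero fun h => by simp [h] at hP₀
  refine ⟨P.natDegree, fun j => P.coeff j, fun j => hP j,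
    ⟨⟨mon₀ 0, hdeg⟩, hind.valuation_eval_eq_one he (hP _) hP₀⟩, ?_⟩
  rw [eval_eq_eval_mv_eval', Polynomial.eval_eq_sum_range' (n := P.natDegree + 1)
    (Polynomial.natDegree_map_le.trans_lt (Nat.lt_succ_self _)),
    ← Fin.sum_univ_eq_sum_range] at hpg
  simpa only [Polynomial.coeff_map] using hpg

theorem exists_normalized_sum_eq_zero {R : Subring K} (hCR : C.toSubring ≤ R)
    (hval : ∀ y ∈ R, y ≠ 0 → ∃ c ∈ C, c ≠ 0 ∧ v c = v y) {d : ℕ} {g : Fin (d + 1) → K}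
    (hgR : ∀ j, g j ∈ R) (hg0 : ∃ j, g j ≠ 0) {x : K} (hx : ∑ j, g j * x ^ (j : ℕ) = 0) :
    ∃ G : Fin (d + 1) → K, (∀ j, G j ∈ R ∧ v (G j) ≤ 1) ∧ (∃ j, v (G j) = 1) ∧
      ∑ j, G j * x ^ (j : ℕ) = 0 := by
  obtain ⟨j₀, -, hmax⟩ := Finset.univ.exists_max_image (fun j => v (g j)) Finset.univ_nonempty
  obtain ⟨j, hj⟩ := hg0
  have hj₀ : g j₀ ≠ 0 := v.ne_zero_iff.1
    ((zero_lt_iff.2 (v.ne_zero_iff.2 hj)).trans_le (hmax j (by simp))).ne'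
  obtain ⟨c, hcC, hc0, hcv⟩ := hval _ (hgR j₀) hj₀
  refine ⟨fun j => g j * c⁻¹, fun j => ⟨R.mul_mem (hgR j) (hCR (C.inv_mem hcC)), ?_⟩,
    ⟨j₀, ?_⟩, ?_⟩
  · rw [map_mul, map_inv₀, hcv]
    exact mul_inv_le_one_of_le₀ (hmax j (by simp)) zero_le
  · rw [map_mul, map_inv₀, hcv, mul_inv_cancel₀ (v.ne_zero_iff.2 hj₀)]
  · simp only [mul_right_comm _ c⁻¹, ← Finset.sum_mul, hx, zero_mul]

theorem exists_residuallyIndependent_maximal (S : Set K) (hS : ∀ x ∈ S, v x ≤ 1) {N : ℕ}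
    (hN : ∀ (m : ℕ) (e : Fin m → K), (∀ i, e i ∈ S) → v.ResiduallyIndependent C e → m ≤ N) :
    ∃ (m : ℕ) (e : Fin m → K), (∀ i, e i ∈ S) ∧ v.ResiduallyIndependent C e ∧
      ∀ g ∈ S, v.HasResidualRelation C e g := by
  classical
  let P (m : ℕ) : Prop := ∃ e : Fin m → K, (∀ i, e i ∈ S) ∧ v.ResiduallyIndependent C e
  obtain ⟨e, heS, hind⟩ : P (Nat.findGreatest P N) :=
    Nat.findGreatest_spec (Nat.zero_le N)
      ⟨Fin.elim0, fun i => i.elim0, residuallyIndependent_of_isEmpty _⟩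
  refine ⟨_, e, heS, hind, fun g hg => ?_⟩
  refine hind.hasResidualRelation_of_not_cons (fun i => hS _ (heS i)) fun hcons => ?_
  have hcons' : ∀ i, (Fin.cons g e : Fin (_ + 1) → K) i ∈ S := Fin.cases hg heS
  exact Nat.findGreatest_is_greatest (Nat.lt_succ_self _) (hN _ _ hcons' hcons) ⟨_, hcons', hcons⟩

end Relations

section Residue

variable {K Γ : Type*} [Field K] [LinearOrderedCommGroupWithZero Γ] (v : Valuation K Γ)
  (C : Subfield K) {ι : Type*}

def integralSubring : Subring v.valuationSubring :=
  C.toSubring.comap v.valuationSubring.subtype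

def integralInclusion : v.integralSubring C →+* K :=
  v.valuationSubring.subtype.comp (v.integralSubring C).subtype

/-- Its range is the ring `k(C)[res e]`. -/
noncomputable def residueEval (e : ι → v.valuationSubring) :
    MvPolynomial ι (v.integralSubring C) →+* IsLocalRing.ResidueField v.valuationSubring :=
  (IsLocalRing.residue _).comp (eval₂Hom (v.integralSubring C).subtype e)

variable {v C}

local notation "ρ" => IsLocalRing.residue v.valuationSubring

theorem residue_eq_zero_iff_lt_one (y : v.valuationSubring) : ρ y = 0 ↔ v y < 1 := by
  rw [IsLocalRing.residue_eq_zero_iff, Valuation.mem_maximalIdeal_iff]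

theorem residue_ne_zero_iff_eq_one (y : v.valuationSubring) : ρ y ≠ 0 ↔ v y = 1 := by
  rw [Ne, residue_eq_zero_iff_lt_one, not_lt]
  exact ⟨(y.2 : v y ≤ 1).antisymm, le_of_eq ∘ Eq.symm⟩

theorem integralCoeffs_map (Q : MvPolynomial ι (v.integralSubring C)) :
    v.IntegralCoeffs C (MvPolynomial.map (v.integralInclusion C) Q) := fun mon => by
  rw [coeff_map]
  exact ⟨(Q.coeff mon).2, (Q.coeff mon).1.2⟩

theorem IntegralCoeffs.exists_map_eq {q : MvPolynomial ι K} (hq : v.IntegralCoeffs C q) :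
    ∃ Q : MvPolynomial ι (v.integralSubring C), MvPolynomial.map (v.integralInclusion C) Q = q := by
  rw [← Set.mem_range, mem_range_map_iff_coeffs_subset]
  intro c hc
  obtain ⟨mon, -, rfl⟩ := mem_coeffs_iff.1 hc
  exact ⟨⟨⟨_, (hq mon).2⟩, (hq mon).1⟩, rfl⟩

theorem coe_eval₂Hom_integralSubring (e : ι → v.valuationSubring)
    (Q : MvPolynomial ι (v.integralSubring C)) :
    (eval₂Hom (v.integralSubring C).subtype e Q : K) =
      eval (fun i => (e i : K)) (MvPolynomial.map (v.integralInclusion C) Q) := by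
  rw [eval_map, coe_eval₂Hom, ← ValuationSubring.coe_subtype, eval₂_comp_left]
  rfl

theorem valuation_eval_map_eq_one_iff (e : ι → v.valuationSubring)
    (Q : MvPolynomial ι (v.integralSubring C)) :
    v (eval (fun i => (e i : K)) (MvPolynomial.map (v.integralInclusion C) Q)) = 1 ↔
      v.residueEval C e Q ≠ 0 := by
  rw [← coe_eval₂Hom_integralSubring, ← residue_ne_zero_iff_eq_one]
  rfl

theorem valuation_sum_eval_map_lt_one_iff (e : ι → v.valuationSubring) (x : v.valuationSubring)
    {d : ℕ} (Q : Fin (d + 1) → MvPolynomial ι (v.integralSubring C)) :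
    v (∑ j, eval (fun i => (e i : K)) (MvPolynomial.map (v.integralInclusion C) (Q j)) *
      x ^ (j : ℕ)) < 1 ↔
      ∑ j, v.residueEval C e (Q j) * ρ x ^ (j : ℕ) = 0 := by
  have hsum : ∑ j, eval (fun i => (e i : K)) (MvPolynomial.map (v.integralInclusion C) (Q j)) *
      x ^ (j : ℕ) =
      ((∑ j, eval₂Hom (v.integralSubring C).subtype e (Q j) * x ^ (j : ℕ) :
        v.valuationSubring) : K) := by
    push_cast [coe_eval₂Hom_integralSubring]
    rfl
  rw [hsum, ← residue_eq_zero_iff_lt_one, map_sum]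
  simp only [map_mul, map_pow]
  rfl

theorem hasResidualRelation_iff_isAlgebraic (e : ι → v.valuationSubring)
    (x : v.valuationSubring) :
    v.HasResidualRelation C (fun i => (e i : K)) x ↔
      IsAlgebraic (v.residueEval C e).range (ρ x) := by
  rw [isAlgebraic_iff_exists_sum_eq_zero]
  constructor
  · rintro ⟨d, q, hq, ⟨j, hj⟩, hsum⟩
    choose Q hQ using fun j => IntegralCoeffs.exists_map_eq (hq j)
    simp only [← hQ] at hj hsum
    refine ⟨d, fun j => ⟨_, Q j, rfl⟩, ⟨j, ?_⟩, (valuation_sum_eval_map_lt_one_iff e x Q).1 hsum⟩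
    exact fun h => (valuation_eval_map_eq_one_iff e (Q j)).1 hj (congrArg Subtype.val h)
  · rintro ⟨d, c, ⟨j, hj⟩, hsum⟩
    choose Q hQ using fun j => (c j).2
    refine ⟨d, fun j => MvPolynomial.map _ (Q j), fun j => integralCoeffs_map _, ⟨j, ?_⟩, ?_⟩
    · exact (valuation_eval_map_eq_one_iff e (Q j)).2
        fun h => hj (Subtype.ext (by rw [← hQ]; exact h))
    · rw [valuation_sum_eval_map_lt_one_iff]
      simp only [hQ]
      exact hsum

theorem hasResidualRelation_of_sum_eq_zero {e : ι → K} (he : ∀ i, v (e i) ≤ 1) {d : ℕ}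
    {G : Fin (d + 1) → K} (hG : ∀ j, v (G j) ≤ 1) (hGe : ∀ j, v.HasResidualRelation C e (G j))
    (hG1 : ∃ j, v (G j) = 1) {x : K} (hx1 : v x ≤ 1) (hx : ∑ j, G j * x ^ (j : ℕ) = 0) :
    v.HasResidualRelation C e x := by
  let eO : ι → v.valuationSubring := fun i => ⟨e i, he i⟩
  let GO : Fin (d + 1) → v.valuationSubring := fun j => ⟨G j, hG j⟩
  let xO : v.valuationSubring := ⟨x, hx1⟩
  change v.HasResidualRelation C (fun i => (eO i : K)) xO
  rw [hasResidualRelation_iff_isAlgebraic]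
  obtain ⟨j, hj⟩ := hG1
  refine isAlgebraic_of_sum_eq_zero _
    (fun j => (hasResidualRelation_iff_isAlgebraic eO (GO j)).1 (hGe j))
    ⟨j, (residue_ne_zero_iff_eq_one (GO j)).2 hj⟩ ?_
  have : ∑ j, GO j * xO ^ (j : ℕ) = 0 := Subtype.ext (by push_cast; exact hx)
  simpa [map_sum] using congrArg (IsLocalRing.residue _) this

end Residue

end Valuation

namespace Stmt12

theorem residue_transcendence_basis_in_ring_general {K : Type u} {Γ : Type w} [Field K]
    [LinearOrderedCommGroupWithZero Γ] (v : Valuation K Γ)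
    (C A : Subfield K) (hCA : C ≤ A)
    (n : ℕ) (a : Fin n → K) (ha : ∀ i, a i ∈ A)
    (hAdef : ∀ x : K, x ∈ A ↔ ∃ p : Polynomial K, p ≠ 0 ∧
      (∀ j, p.coeff j ∈ Subfield.closure ((C : Set K) ∪ Set.range a)) ∧ p.eval x = 0)
    (hval : ∀ x ∈ A, x ≠ 0 → ∃ c ∈ C, c ≠ 0 ∧ v c = v x) :
    ∃ (m : ℕ) (e : Fin m → K),
      (∀ i, e i ∈ Subring.closure ((C : Set K) ∪ Set.range a) ∧ v (e i) ≤ 1) ∧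
      (∀ p : MvPolynomial (Fin m) K, (∀ mon, p.coeff mon ∈ C) →
        MvPolynomial.eval e p = 0 → p = 0) ∧
      (∀ p : MvPolynomial (Fin m) K, (∀ mon, p.coeff mon ∈ C ∧ v (p.coeff mon) ≤ 1) →
        v (MvPolynomial.eval e p) < 1 → ∀ mon, v (p.coeff mon) < 1) ∧
      (∀ x ∈ A, v x ≤ 1 →
        ∃ (d : ℕ) (q : Fin (d + 1) → MvPolynomial (Fin m) K),
          (∀ j mon, (q j).coeff mon ∈ C ∧ v ((q j).coeff mon) ≤ 1) ∧
          (∃ j, v (MvPolynomial.eval e (q j)) = 1) ∧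
          v (∑ j : Fin (d + 1), MvPolynomial.eval e (q j) * x ^ (j : ℕ)) < 1) := by
  set R := Subring.closure ((C : Set K) ∪ Set.range a)
  have hRA : R ≤ A.toSubring := Subring.closure_le.2 <|
    Set.union_subset hCA (Set.range_subset_iff.2 ha)
  obtain ⟨m, e, he, hind, hrel⟩ := Valuation.exists_residuallyIndependent_maximal (v := v) (C := C)
    {x | x ∈ R ∧ v x ≤ 1} (fun x hx => hx.2) (N := n) fun m e he hind =>
      hind.le_of_forall_mem_closure (fun i => (he i).2) a fun i => (he i).1
  refine ⟨m, e, he, fun _ => hind.eq_zero_of_eval_eq_zero fun i => (he i).2, hind,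
    fun x hx hx1 => ?_⟩
  obtain ⟨P, hP, hPc, hPx⟩ := (hAdef x).1 hx
  obtain ⟨d, g, hgR, hg0, hg⟩ := P.exists_sum_eq_zero_of_coeff_mem_closure hP hPc hPx
  obtain ⟨G, hG, hG1, hGx⟩ := Valuation.exists_normalized_sum_eq_zero
    (fun c hc => Subring.subset_closure (Or.inl hc)) (fun y hy => hval y (hRA hy)) hgR hg0 hg
  exact Valuation.hasResidualRelation_of_sum_eq_zero (fun i => (he i).2) (fun j => (hG j).2)
    (fun j => hrel _ (hG j)) hG1 hx1 hGx

/-- Lemma 14.8 of Haskell–Hrushovski–Macpherson.  `K` is an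
algebraically closed valued field; `C ≤ A` are valued subfields that are algebraically
closed as fields; `A` is the algebraic closure inside `K` of `C(a 0, …, a (n-1))`
(hypothesis `hAdef`), and `Γ_C = Γ_A` (`hval`).  Then there are
`e 0, …, e (m-1)` in the subring `C[a 0, …, a (n-1)]` with `|e i| ≤ 1`, algebraically
independent over `C`, whose residues form a transcendence basis of `k(A)` over `k(C)`:
the residues are algebraically independent over `k(C)` (third conjunct, elementwise:
a polynomial with coefficients in `C ∩ R` whose value at `e` has residue `0` has all
coefficient residues `0`) and every residue of an element of `A ∩ R` is algebraic over
`k(C)(res (e 0), …)` (fourth conjunct: it satisfies a nonzero polynomial whose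
coefficients are residues of values at `e` of polynomials over `C ∩ R`). -/
theorem residue_transcendence_basis_in_ring {K : Type u} {Γ : Type w} [Field K]
    [IsAlgClosed K] [LinearOrderedCommGroupWithZero Γ] (v : Valuation K Γ)
    (C A : Subfield K) (hCA : C ≤ A) [IsAlgClosed ↥C] [IsAlgClosed ↥A]
    (n : ℕ) (a : Fin n → K) (ha : ∀ i, a i ∈ A)
    (hAdef : ∀ x : K, x ∈ A ↔ ∃ p : Polynomial K, p ≠ 0 ∧
      (∀ j, p.coeff j ∈ Subfield.closure ((C : Set K) ∪ Set.range a)) ∧ p.eval x = 0)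
    (hval : ∀ x ∈ A, x ≠ 0 → ∃ c ∈ C, c ≠ 0 ∧ v c = v x) :
    ∃ (m : ℕ) (e : Fin m → K),
      (∀ i, e i ∈ Subring.closure ((C : Set K) ∪ Set.range a) ∧ v (e i) ≤ 1) ∧
      (∀ p : MvPolynomial (Fin m) K, (∀ mon, p.coeff mon ∈ C) →
        MvPolynomial.eval e p = 0 → p = 0) ∧
      (∀ p : MvPolynomial (Fin m) K, (∀ mon, p.coeff mon ∈ C ∧ v (p.coeff mon) ≤ 1) →
        v (MvPolynomial.eval e p) < 1 → ∀ mon, v (p.coeff mon) < 1) ∧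
      (∀ x ∈ A, v x ≤ 1 →
        ∃ (d : ℕ) (q : Fin (d + 1) → MvPolynomial (Fin m) K),
          (∀ j mon, (q j).coeff mon ∈ C ∧ v ((q j).coeff mon) ≤ 1) ∧
          (∃ j, v (MvPolynomial.eval e (q j)) = 1) ∧
          v (∑ j : Fin (d + 1), MvPolynomial.eval e (q j) * x ^ (j : ℕ)) < 1) :=
  residue_transcendence_basis_in_ring_general v C A hCA n a ha hAdef hval

end Stmt12
end

section
/- Every divisible ordered abelian group has an i-complete i-extension: for every divisible ordered abelian group A there exist a divisible ordered abelian group B and an embedding of ordered groups A → B which is an i-extension, such that B itself is i-complete. -/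
universe u v

namespace Stmt14

/-- The (ordered abelian) group `A` is divisible: every element is divisible by every
positive natural number. -/
def NatDivisible (A : Type u) [AddCommGroup A] : Prop :=
  ∀ k : ℕ, 0 < k → ∀ a : A, ∃ b : A, k • b = a

/-- The order embedding `e : A → B` is an i-extension: `e` is a strictly monotone group
embedding, and there is no `b ∈ B` with `b > 0` such that the cut
`ct_A(b) = {a ∈ A : 0 ≤ e a ≤ b}` is closed under addition. -/
def IsIExtension {A : Type u} {B : Type v} [AddCommGroup A] [LinearOrder A]
    [IsOrderedAddMonoid A] [AddCommGroup B] [LinearOrder B] [IsOrderedAddMonoid B] (e : A →+ B) : Prop :=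
  StrictMono ⇑e ∧
    ∀ b : B, 0 < b →
      ¬ (∀ x y : A, (0 ≤ e x ∧ e x ≤ b) → (0 ≤ e y ∧ e y ≤ b) →
          (0 ≤ e (x + y) ∧ e (x + y) ≤ b))
/-- `A` is i-complete: every i-extension of `A` (into a divisible linearly ordered
abelian group, taken in the same universe, which is no loss of generality by the
`2 ^ 2 ^ |A|` cardinality bound on i-extensions) is surjective. -/
def IComplete (A : Type u) [AddCommGroup A] [LinearOrder A] [IsOrderedAddMonoid A] : Prop :=
  ∀ (B : Type u) [AddCommGroup B] [LinearOrder B] [IsOrderedAddMonoid B], NatDivisible B →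
    ∀ e : A →+ B, IsIExtension e → Function.Surjective ⇑e


/-! ### Basic lemmas about i-extensions -/

section Crit
variable {A : Type u} {B : Type v} [AddCommGroup A] [LinearOrder A] [IsOrderedAddMonoid A] [AddCommGroup B] [LinearOrder B] [IsOrderedAddMonoid B]

theorem isIExtension_iff (e : A →+ B) :
    IsIExtension e ↔ StrictMono ⇑e ∧ ∀ b : B, 0 < b → ∃ a : A, e a ≤ b ∧ b < e a + e a := by
  constructor
  · rintro ⟨hm, h⟩
    refine ⟨hm, fun b hb => ?_⟩
    have := h b hb
    push_neg at this
    obtain ⟨x, y, ⟨hx0, hxb⟩, ⟨hy0, hyb⟩, hxy⟩ := this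
    have hsum : e (x + y) = e x + e y := map_add e x y
    have h0 : 0 ≤ e (x + y) := hsum ▸ add_nonneg hx0 hy0
    have hgt : b < e (x + y) := hxy h0
    refine ⟨max x y, ?_, ?_⟩
    · rcases max_choice x y with h | h <;> rw [h] <;> assumption
    · have hx' : e x ≤ e (max x y) := hm.monotone (le_max_left x y)
      have hy' : e y ≤ e (max x y) := hm.monotone (le_max_right x y)
      calc b < e (x + y) := hgt
        _ = e x + e y := hsum
        _ ≤ e (max x y) + e (max x y) := add_le_add hx' hy'
  · rintro ⟨hm, h⟩
    refine ⟨hm, fun b hb hall => ?_⟩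
    obtain ⟨a, hab, hba⟩ := h b hb
    have h0 : 0 ≤ e a := by
      rcases le_or_gt 0 (e a) with h' | h'
      · exact h'
      · exfalso
        have h2 : e a + e a < e a := by
          calc e a + e a < e a + 0 := add_lt_add_of_le_of_lt le_rfl h'
            _ = e a := add_zero _
        exact absurd (hba.trans h2) (not_lt.mpr hab)
    obtain ⟨h1, h2⟩ := hall a a ⟨h0, hab⟩ ⟨h0, hab⟩
    rw [map_add] at h2
    exact absurd hba (not_lt.mpr h2)

theorem IsIExtension.comp {C : Type*} [AddCommGroup C] [LinearOrder C] [IsOrderedAddMonoid C]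
    {e₁ : A →+ B} {e₂ : B →+ C} (h₁ : IsIExtension e₁) (h₂ : IsIExtension e₂) :
    IsIExtension (e₂.comp e₁) := by
  rw [isIExtension_iff] at *
  obtain ⟨m1, h1⟩ := h₁
  obtain ⟨m2, h2⟩ := h₂
  refine ⟨m2.comp m1, fun c hc => ?_⟩
  obtain ⟨b, hbc, hcb⟩ := h2 c hc
  have hb : 0 < b := by
    rcases lt_or_ge 0 b with h' | h'
    · exact h'
    · exfalso
      have hEb : e₂ b ≤ 0 := by simpa using m2.monotone h'
      have : c < 0 := hcb.trans_le (by simpa using add_nonpos hEb hEb)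
      exact absurd hc (not_lt.mpr this.le)
  obtain ⟨a, hab, hba⟩ := h1 b hb
  simp only [AddMonoidHom.coe_comp, Function.comp_apply]
  by_cases hcase : c < e₂ (e₁ a) + e₂ (e₁ a)
  · exact ⟨a, le_trans (m2.monotone hab) hbc, hcase⟩
  · push_neg at hcase
    refine ⟨a + a, ?_, ?_⟩
    · rw [map_add, map_add]; exact hcase
    · have hba' : e₂ b < e₂ (e₁ a) + e₂ (e₁ a) := by
        have := m2 hba; rwa [map_add] at this
      have h4 : c < (e₂ (e₁ a) + e₂ (e₁ a)) + (e₂ (e₁ a) + e₂ (e₁ a)) :=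
        hcb.trans (add_lt_add hba' hba')
      rw [map_add, map_add]
      exact h4

theorem IsIExtension.of_comp {C : Type*} [AddCommGroup C] [LinearOrder C] [IsOrderedAddMonoid C]
    {e : A →+ B} {g : B →+ C} (hg : StrictMono ⇑g) (h : IsIExtension (g.comp e)) :
    IsIExtension e := by
  rw [isIExtension_iff] at *
  obtain ⟨m, hi⟩ := h
  constructor
  · intro x y hxy
    have : g (e x) < g (e y) := by
      have := m hxy
      simpa using this
    exact hg.lt_iff_lt.mp this
  · intro b hb
    have hgb : 0 < g b := by
      have : g 0 < g b := hg hb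
      simpa using this
    obtain ⟨a, h1, h2⟩ := hi (g b) hgb
    simp only [AddMonoidHom.coe_comp, Function.comp_apply] at h1 h2
    refine ⟨a, hg.le_iff_le.mp h1, ?_⟩
    have : g b < g (e a + e a) := by rw [map_add]; exact h2
    exact hg.lt_iff_lt.mp this

theorem isIExtension_id : IsIExtension (AddMonoidHom.id A) := by
  rw [isIExtension_iff]
  exact ⟨fun x y h => h, fun b hb => ⟨b, le_refl _, by simpa using lt_add_of_pos_left b hb⟩⟩

end Crit

/-! ### The cardinality bound: any i-extension of `A` injects into `A → Set (ℤ × ℕ)` -/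

section Bound
variable {A : Type u} {B : Type v} [AddCommGroup A] [LinearOrder A] [IsOrderedAddMonoid A] [AddCommGroup B] [LinearOrder B] [IsOrderedAddMonoid B]
  (e : A →+ B)

/-- The setoid "x - y is dominated by `e a`". -/
def domSetoid (a : A) : Setoid B where
  r x y := ∃ n : ℕ, |x - y| ≤ n • e a
  iseqv := by
    constructor
    · intro x; exact ⟨0, by simp⟩
    · rintro x y ⟨n, hn⟩; exact ⟨n, by rwa [abs_sub_comm]⟩
    · rintro x y z ⟨n, hn⟩ ⟨m, hm⟩
      refine ⟨n + m, ?_⟩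
      calc |x - z| = |(x - y) + (y - z)| := by rw [sub_add_sub_cancel]
        _ ≤ |x - y| + |y - z| := abs_add_le _ _
        _ ≤ n • e a + m • e a := add_le_add hn hm
        _ = (n + m) • e a := (add_nsmul _ _ _).symm

noncomputable def rep (a : A) (x : B) : B := (Quotient.mk (domSetoid e a) x).out

lemma rep_spec (a : A) (x : B) : ∃ n : ℕ, |rep e a x - x| ≤ n • e a := by
  exact Quotient.mk_out (s := domSetoid e a) x

lemma rep_eq_of_rel (a : A) {x y : B} (h : ∃ n : ℕ, |x - y| ≤ n • e a) :
    rep e a x = rep e a y := by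
  unfold rep
  congr 1
  exact Quotient.sound h

noncomputable def injB : B → A → Set (ℤ × ℕ) := fun x a =>
  if 0 < a then {p : ℤ × ℕ | p.1 • e a ≤ (p.2 : ℤ) • (x - rep e a x)} else ∅

lemma key {t : B} (ht : 0 < t) {u w : B} (hw : ∃ n : ℕ, |w| ≤ n • t) (hsep : t ≤ u - w) :
    ∃ p : ℤ × ℕ, (p.1 • t ≤ (p.2 : ℤ) • u) ∧ ¬ (p.1 • t ≤ (p.2 : ℤ) • w) := by
  obtain ⟨n₂, hn₂⟩ := hw
  have hwle : w ≤ n₂ • t := (abs_le.mp hn₂).2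
  have hwge : -(n₂ • t) ≤ w := (abs_le.mp hn₂).1
  have hbdd : ∃ b : ℤ, ∀ z : ℤ, z • t ≤ w + w → z ≤ b := by
    refine ⟨2 * n₂, fun z hz => ?_⟩
    have h2 : w + w ≤ (2 * (n₂ : ℤ)) • t := by
      rw [two_mul, add_zsmul, natCast_zsmul]
      exact add_le_add hwle hwle
    have := hz.trans h2
    exact_mod_cast (zsmul_le_zsmul_iff_left ht).mp this
  have hinh : ∃ z : ℤ, z • t ≤ w + w := by
    refine ⟨-(2 * n₂), ?_⟩
    rw [neg_zsmul, two_mul, add_zsmul, natCast_zsmul, neg_add]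
    exact add_le_add hwge hwge
  obtain ⟨k, hk, hmax⟩ := Int.exists_greatest_of_bdd hbdd hinh
  refine ⟨(k + 2, 2), ?_, ?_⟩
  · have h1 : (k + 2) • t = k • t + (t + t) := by
      rw [add_zsmul]; norm_num [two_zsmul]
    have h2 : k • t + (t + t) ≤ (w + w) + ((u - w) + (u - w)) :=
      add_le_add hk (add_le_add hsep hsep)
    have h3 : (w + w) + ((u - w) + (u - w)) = u + u := by abel
    have h4 : ((2 : ℕ) : ℤ) • u = u + u := by norm_num [two_zsmul]
    rw [h1, h4]
    exact h2.trans_eq h3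
  · intro hcon
    have h4 : ((2 : ℕ) : ℤ) • w = w + w := by norm_num [two_zsmul]
    rw [h4] at hcon
    have := hmax (k + 2) hcon
    omega

theorem injective_injB (h : IsIExtension e) : Function.Injective (injB e) := by
  rw [isIExtension_iff] at h
  intro x y hxy
  by_contra hne
  have hd : x - y ≠ 0 := sub_ne_zero.mpr hne
  obtain ⟨a, hab, hba⟩ := h.2 |x - y| (abs_pos.mpr hd)
  have hea : 0 < e a := by
    rcases lt_or_ge 0 (e a) with h' | h'
    · exact h'
    · exfalso
      have : e a + e a ≤ e a := by
        calc e a + e a ≤ e a + 0 := add_le_add le_rfl h'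
          _ = e a := add_zero _
      exact absurd (hba.trans_le (this.trans hab)) (lt_irrefl _)
  have hapos : 0 < a := by
    have : e 0 < e a := by rwa [map_zero]
    exact h.1.lt_iff_lt.mp this
  have hrel : ∃ n : ℕ, |x - y| ≤ n • e a := ⟨2, by rw [two_nsmul]; exact hba.le⟩
  have hrepeq : rep e a x = rep e a y := rep_eq_of_rel e a hrel
  set r := rep e a x with hr
  set u := x - r with hu'
  set w := y - r with hw'
  have huw : u - w = x - y := by rw [hu', hw']; abel
  have hxu : ∃ n : ℕ, |u| ≤ n • e a := by
    obtain ⟨n, hn⟩ := rep_spec e a x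
    exact ⟨n, by rwa [hu', abs_sub_comm x r]⟩
  have hyw : ∃ n : ℕ, |w| ≤ n • e a := by
    obtain ⟨n, hn⟩ := rep_spec e a y
    rw [← hrepeq] at hn
    exact ⟨n, by rw [hw', abs_sub_comm]; exact hn⟩
  have hseteq : injB e x a = injB e y a := congrFun hxy a
  rw [injB, injB, if_pos hapos, if_pos hapos] at hseteq
  rw [← hu'] at hseteq
  have hw'' : y - rep e a y = w := by rw [hw', ← hrepeq]
  rw [hw''] at hseteq
  rcases hd.lt_or_gt.symm with hpos | hneg
  · have habs : |x - y| = x - y := abs_of_pos (sub_pos.mpr (sub_pos.mp hpos))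
    have hsep : e a ≤ u - w := by rw [huw]; exact habs ▸ hab
    obtain ⟨p, hp1, hp2⟩ := key hea hyw hsep
    have : p ∈ {p : ℤ × ℕ | p.1 • e a ≤ (p.2 : ℤ) • u} := hp1
    rw [hseteq] at this
    exact hp2 this
  · have hyx : 0 < y - x := by
      have : x < y := sub_neg.mp hneg
      exact sub_pos.mpr this
    have habs : |x - y| = y - x := by rw [abs_sub_comm]; exact abs_of_pos hyx
    have hsep : e a ≤ w - u := by
      have : w - u = y - x := by rw [hu', hw']; abel
      rw [this]; exact habs ▸ hab
    obtain ⟨p, hp1, hp2⟩ := key hea hxu hsep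
    have : p ∈ {p : ℤ × ℕ | p.1 • e a ≤ (p.2 : ℤ) • w} := hp1
    rw [← hseteq] at this
    exact hp2 this

end Bound

/-! ### Partial structures coded on subsets of a fixed big type -/

variable {X : Type u}

/-- Iterated addition, used to express divisibility without a group structure. -/
def iterAdd (add : X → X → X) (zero : X) : ℕ → X → X
  | 0, _ => zero
  | n + 1, x => add x (iterAdd add zero n x)

/-- A divisible-ordered-abelian-group structure on a subset of `X`, together with
an i-extension embedding of `A`. -/
structure PreExt (A : Type u) [AddCommGroup A] [LinearOrder A] [IsOrderedAddMonoid A] (X : Type u) where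
  S : Set X
  add : X → X → X
  neg : X → X
  zero : X
  le : X → X → Prop
  eA : A → X
  mem_add : ∀ x ∈ S, ∀ y ∈ S, add x y ∈ S
  mem_neg : ∀ x ∈ S, neg x ∈ S
  mem_zero : zero ∈ S
  mem_e : ∀ a, eA a ∈ S
  ax_assoc : ∀ x ∈ S, ∀ y ∈ S, ∀ z ∈ S, add (add x y) z = add x (add y z)
  ax_comm : ∀ x ∈ S, ∀ y ∈ S, add x y = add y x
  ax_zero_add : ∀ x ∈ S, add zero x = x
  ax_neg_add : ∀ x ∈ S, add (neg x) x = zero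
  ax_le_refl : ∀ x ∈ S, le x x
  ax_le_trans : ∀ x ∈ S, ∀ y ∈ S, ∀ z ∈ S, le x y → le y z → le x z
  ax_le_antisymm : ∀ x ∈ S, ∀ y ∈ S, le x y → le y x → x = y
  ax_le_total : ∀ x ∈ S, ∀ y ∈ S, le x y ∨ le y x
  ax_add_le : ∀ x ∈ S, ∀ y ∈ S, ∀ z ∈ S, le y z → le (add x y) (add x z)
  ax_div : ∀ k : ℕ, 0 < k → ∀ x ∈ S, ∃ y ∈ S, iterAdd add zero k y = x
  ax_e_add : ∀ a b, eA (a + b) = add (eA a) (eA b)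
  ax_e_mono : ∀ a b : A, a < b → le (eA a) (eA b) ∧ eA a ≠ eA b
  ax_icond : ∀ b ∈ S, le zero b → b ≠ zero →
    ∃ a : A, le (eA a) b ∧ le b (add (eA a) (eA a)) ∧ b ≠ add (eA a) (eA a)

namespace PreExt
variable {A : Type u} [AddCommGroup A] [LinearOrder A] [IsOrderedAddMonoid A]

def Carrier (M : PreExt A X) : Type u := {x // x ∈ M.S}

/-- The decoded abelian group structure on the carrier. -/
noncomputable def addgrp (M : PreExt A X) : AddCommGroup M.Carrier :=
  letI : Zero M.Carrier := ⟨⟨M.zero, M.mem_zero⟩⟩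
  letI : Add M.Carrier := ⟨fun x y => ⟨M.add x.1 y.1, M.mem_add _ x.2 _ y.2⟩⟩
  letI : Neg M.Carrier := ⟨fun x => ⟨M.neg x.1, M.mem_neg _ x.2⟩⟩
  { add := (· + ·)
    zero := 0
    neg := Neg.neg
    nsmul := nsmulRec
    zsmul := zsmulRec
    add_assoc := fun x y z => Subtype.ext (M.ax_assoc _ x.2 _ y.2 _ z.2)
    zero_add := fun x => Subtype.ext (M.ax_zero_add _ x.2)
    add_zero := fun x => Subtype.ext (show M.add x.1 M.zero = x.1 by
      rw [M.ax_comm _ x.2 _ M.mem_zero]; exact M.ax_zero_add _ x.2)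
    neg_add_cancel := fun x => Subtype.ext (M.ax_neg_add _ x.2)
    add_comm := fun x y => Subtype.ext (M.ax_comm _ x.2 _ y.2) }

noncomputable def lin (M : PreExt A X) : LinearOrder M.Carrier where
  le x y := M.le x.1 y.1
  le_refl x := M.ax_le_refl _ x.2
  le_trans x y z := M.ax_le_trans _ x.2 _ y.2 _ z.2
  le_antisymm x y h1 h2 := Subtype.ext (M.ax_le_antisymm _ x.2 _ y.2 h1 h2)
  le_total x y := M.ax_le_total _ x.2 _ y.2
  toDecidableLE := Classical.decRel _

/-- The decoded linearly ordered abelian group structure on the carrier. -/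
theorem grp (M : PreExt A X) :
    letI := M.addgrp; letI := M.lin; IsOrderedAddMonoid M.Carrier :=
  letI := M.addgrp
  letI := M.lin
  { add_le_add_left := fun x y h z => by
      rw [add_comm x z, add_comm y z]; exact M.ax_add_le _ z.2 _ x.2 _ y.2 h }

lemma iterAdd_mem (M : PreExt A X) (k : ℕ) {x : X} (hx : x ∈ M.S) :
    iterAdd M.add M.zero k x ∈ M.S := by
  induction k with
  | zero => exact M.mem_zero
  | succ n ih => exact M.mem_add _ hx _ ih

lemma coe_add (M : PreExt A X) (x y : M.Carrier) :
    letI := M.addgrp; letI := M.lin; letI := M.grp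
    (x + y).1 = M.add x.1 y.1 := rfl

lemma coe_zero (M : PreExt A X) :
    letI := M.addgrp; letI := M.lin; letI := M.grp
    (0 : M.Carrier).1 = M.zero := rfl

lemma coe_neg (M : PreExt A X) (x : M.Carrier) :
    letI := M.addgrp; letI := M.lin; letI := M.grp
    (-x).1 = M.neg x.1 := rfl

lemma le_def' (M : PreExt A X) (x y : M.Carrier) :
    letI := M.addgrp; letI := M.lin; letI := M.grp
    (x ≤ y) = M.le x.1 y.1 := rfl

lemma iterAdd_eq_nsmul (M : PreExt A X) (k : ℕ) (y : M.Carrier) :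
    letI := M.addgrp; letI := M.lin; letI := M.grp
    iterAdd M.add M.zero k y.1 = (k • y).1 := by
  letI := M.addgrp; letI := M.lin; letI := M.grp
  induction k with
  | zero => rw [zero_smul]; exact (M.coe_zero).symm
  | succ n ih =>
    show M.add y.1 (iterAdd M.add M.zero n y.1) = ((n + 1) • y).1
    rw [ih, succ_nsmul, M.coe_add, M.ax_comm _ (n • y).2 _ y.2]

lemma natDivisible_carrier (M : PreExt A X) :
    letI := M.addgrp; letI := M.lin; letI := M.grp
    NatDivisible M.Carrier := by
  letI := M.addgrp; letI := M.lin; letI := M.grp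
  intro k hk x
  obtain ⟨y, hy, hiter⟩ := M.ax_div k hk x.1 x.2
  refine ⟨⟨y, hy⟩, Subtype.ext ?_⟩
  rw [← M.iterAdd_eq_nsmul k ⟨y, hy⟩]
  exact hiter

/-- The decoded embedding of `A`. -/
noncomputable def emb (M : PreExt A X) :
    letI := M.addgrp; letI := M.lin; letI := M.grp
    A →+ M.Carrier :=
  letI := M.addgrp; letI := M.lin; letI := M.grp
  AddMonoidHom.mk' (fun a => ⟨M.eA a, M.mem_e a⟩)
    (fun a b => Subtype.ext (M.ax_e_add a b))

lemma emb_iext (M : PreExt A X) :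
    letI := M.addgrp; letI := M.lin; letI := M.grp
    IsIExtension M.emb := by
  letI := M.addgrp; letI := M.lin; letI := M.grp
  rw [isIExtension_iff]
  constructor
  · intro a b hab
    obtain ⟨h1, h2⟩ := M.ax_e_mono a b hab
    exact lt_of_le_of_ne h1 (fun hh => h2 (congrArg Subtype.val hh))
  · intro b hb
    have hle : M.le M.zero b.1 := hb.le
    have hne : b.1 ≠ M.zero := fun hh => hb.ne' (Subtype.ext hh)
    obtain ⟨a, h1, h2, h3⟩ := M.ax_icond b.1 b.2 hle hne
    refine ⟨a, h1, lt_of_le_of_ne h2 (fun hh => h3 (congrArg Subtype.val hh))⟩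


/-! ### Encoding an honest group structure onto a subset of `X` -/

section Encode

variable {N : Type u} [AddCommGroup N] [LinearOrder N] [IsOrderedAddMonoid N] (Φ : N → X)

noncomputable def encAdd : X → X → X := fun u v =>
  letI := Classical.propDecidable ((∃ x, Φ x = u) ∧ (∃ y, Φ y = v))
  if h : (∃ x, Φ x = u) ∧ (∃ y, Φ y = v) then Φ (h.1.choose + h.2.choose) else u

noncomputable def encNeg : X → X := fun u =>
  letI := Classical.propDecidable (∃ x, Φ x = u)
  if h : ∃ x, Φ x = u then Φ (-h.choose) else u

def encLe : X → X → Prop := fun u v => ∃ x y, Φ x = u ∧ Φ y = v ∧ x ≤ y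

variable {Φ}

lemma encAdd_apply (hΦ : Function.Injective Φ) (x y : N) :
    encAdd Φ (Φ x) (Φ y) = Φ (x + y) := by
  have h : (∃ x', Φ x' = Φ x) ∧ (∃ y', Φ y' = Φ y) := ⟨⟨x, rfl⟩, ⟨y, rfl⟩⟩
  rw [encAdd, dif_pos h]
  rw [hΦ h.1.choose_spec, hΦ h.2.choose_spec]

lemma encNeg_apply (hΦ : Function.Injective Φ) (x : N) :
    encNeg Φ (Φ x) = Φ (-x) := by
  have h : ∃ x', Φ x' = Φ x := ⟨x, rfl⟩
  rw [encNeg, dif_pos h, hΦ h.choose_spec]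

lemma encLe_iff (hΦ : Function.Injective Φ) (x y : N) :
    encLe Φ (Φ x) (Φ y) ↔ x ≤ y := by
  constructor
  · rintro ⟨x', y', hx, hy, hle⟩
    rwa [hΦ hx, hΦ hy] at hle
  · intro h
    exact ⟨x, y, rfl, rfl, h⟩

lemma encIter (hΦ : Function.Injective Φ) (k : ℕ) (x : N) :
    iterAdd (encAdd Φ) (Φ 0) k (Φ x) = Φ (k • x) := by
  induction k with
  | zero => rw [zero_smul]; rfl
  | succ n ih =>
    show encAdd Φ (Φ x) (iterAdd (encAdd Φ) (Φ 0) n (Φ x)) = Φ ((n + 1) • x)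
    rw [ih, encAdd_apply hΦ, succ_nsmul, add_comm]

/-- Transport of a divisible ordered group with an i-extension of `A` onto a subset
of `X` along an injection. -/
noncomputable def encode (eN : A →+ N) (hmono : StrictMono ⇑eN)
    (hic : ∀ b : N, 0 < b → ∃ a : A, eN a ≤ b ∧ b < eN a + eN a)
    (hdiv : NatDivisible N) (hΦ : Function.Injective Φ) : PreExt A X where
  S := Set.range Φ
  add := encAdd Φ
  neg := encNeg Φ
  zero := Φ 0
  le := encLe Φ
  eA a := Φ (eN a)
  mem_add := by
    rintro _ ⟨x, rfl⟩ _ ⟨y, rfl⟩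
    rw [encAdd_apply hΦ]
    exact ⟨x + y, rfl⟩
  mem_neg := by
    rintro _ ⟨x, rfl⟩
    rw [encNeg_apply hΦ]
    exact ⟨-x, rfl⟩
  mem_zero := ⟨0, rfl⟩
  mem_e a := ⟨eN a, rfl⟩
  ax_assoc := by
    rintro _ ⟨x, rfl⟩ _ ⟨y, rfl⟩ _ ⟨z, rfl⟩
    rw [encAdd_apply hΦ, encAdd_apply hΦ, encAdd_apply hΦ, encAdd_apply hΦ, add_assoc]
  ax_comm := by
    rintro _ ⟨x, rfl⟩ _ ⟨y, rfl⟩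
    rw [encAdd_apply hΦ, encAdd_apply hΦ, add_comm]
  ax_zero_add := by
    rintro _ ⟨x, rfl⟩
    rw [encAdd_apply hΦ, zero_add]
  ax_neg_add := by
    rintro _ ⟨x, rfl⟩
    rw [encNeg_apply hΦ, encAdd_apply hΦ, neg_add_cancel]
  ax_le_refl := by
    rintro _ ⟨x, rfl⟩
    exact ⟨x, x, rfl, rfl, le_refl x⟩
  ax_le_trans := by
    rintro _ ⟨x, rfl⟩ _ ⟨y, rfl⟩ _ ⟨z, rfl⟩ h1 h2
    rw [encLe_iff hΦ] at h1 h2 ⊢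
    exact h1.trans h2
  ax_le_antisymm := by
    rintro _ ⟨x, rfl⟩ _ ⟨y, rfl⟩ h1 h2
    rw [encLe_iff hΦ] at h1 h2
    exact congrArg Φ (le_antisymm h1 h2)
  ax_le_total := by
    rintro _ ⟨x, rfl⟩ _ ⟨y, rfl⟩
    rcases le_total x y with h | h
    · exact Or.inl ((encLe_iff hΦ x y).mpr h)
    · exact Or.inr ((encLe_iff hΦ y x).mpr h)
  ax_add_le := by
    rintro _ ⟨x, rfl⟩ _ ⟨y, rfl⟩ _ ⟨z, rfl⟩ h
    rw [encLe_iff hΦ] at h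
    rw [encAdd_apply hΦ, encAdd_apply hΦ]
    exact (encLe_iff hΦ _ _).mpr (add_le_add (le_refl x) h)
  ax_div := by
    rintro k hk _ ⟨x, rfl⟩
    obtain ⟨y, hy⟩ := hdiv k hk x
    exact ⟨Φ y, ⟨y, rfl⟩, by rw [encIter hΦ, hy]⟩
  ax_e_add := by
    intro a b
    show Φ (eN (a + b)) = encAdd Φ (Φ (eN a)) (Φ (eN b))
    rw [map_add, ← encAdd_apply hΦ (eN a) (eN b)]
  ax_e_mono := by
    intro a b hab
    have h := hmono hab
    exact ⟨(encLe_iff hΦ _ _).mpr h.le, fun hh => h.ne (hΦ hh)⟩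
  ax_icond := by
    rintro _ ⟨x, rfl⟩ hle hne
    have hx0 : (0 : N) ≤ x := (encLe_iff hΦ 0 x).mp hle
    have hxne : x ≠ 0 := fun hh => hne (congrArg Φ hh)
    obtain ⟨a, h1, h2⟩ := hic x (lt_of_le_of_ne hx0 (Ne.symm hxne))
    refine ⟨a, (encLe_iff hΦ _ _).mpr h1, ?_, ?_⟩
    · rw [encAdd_apply hΦ]
      exact (encLe_iff hΦ _ _).mpr h2.le
    · rw [encAdd_apply hΦ]
      exact fun hh => (ne_of_lt h2) (hΦ hh)

end Encode

/-! ### The extension relation and chains -/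

def Le (M N : PreExt A X) : Prop :=
  M.S ⊆ N.S ∧ (∀ x ∈ M.S, ∀ y ∈ M.S, N.add x y = M.add x y) ∧
    (∀ x ∈ M.S, N.neg x = M.neg x) ∧ N.zero = M.zero ∧
    (∀ x ∈ M.S, ∀ y ∈ M.S, (N.le x y ↔ M.le x y)) ∧ N.eA = M.eA

lemma Le.refl' {M : PreExt A X} : Le M M :=
  ⟨subset_rfl, fun _ _ _ _ => Eq.refl _, fun _ _ => Eq.refl _, Eq.refl _,
    fun _ _ _ _ => Iff.rfl, Eq.refl _⟩

lemma Le.trans {M N P : PreExt A X} (h1 : Le M N) (h2 : Le N P) : Le M P := by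
  obtain ⟨s1, a1, n1, z1, l1, e1⟩ := h1
  obtain ⟨s2, a2, n2, z2, l2, e2⟩ := h2
  refine ⟨s1.trans s2, ?_, ?_, z2.trans z1, ?_, e2.trans e1⟩
  · intro x hx y hy
    rw [a2 x (s1 hx) y (s1 hy), a1 x hx y hy]
  · intro x hx
    rw [n2 x (s1 hx), n1 x hx]
  · intro x hx y hy
    rw [l2 x (s1 hx) y (s1 hy), l1 x hx y hy]

section Chain

variable (c : Set (PreExt A X))

lemma directed2 (hc : IsChain Le c) {O₁ O₂ : PreExt A X} (h1 : O₁ ∈ c) (h2 : O₂ ∈ c) :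
    ∃ O ∈ c, Le O₁ O ∧ Le O₂ O := by
  rcases eq_or_ne O₁ O₂ with rfl | hne
  · exact ⟨O₁, h1, Le.refl', Le.refl'⟩
  · rcases hc h1 h2 hne with h | h
    · exact ⟨O₂, h2, h, Le.refl'⟩
    · exact ⟨O₁, h1, Le.refl', h⟩

noncomputable def uAdd : X → X → X := fun x y =>
  letI := Classical.propDecidable (∃ O, O ∈ c ∧ x ∈ O.S ∧ y ∈ O.S)
  if h : ∃ O, O ∈ c ∧ x ∈ O.S ∧ y ∈ O.S then h.choose.add x y else x

noncomputable def uNeg : X → X := fun x =>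
  letI := Classical.propDecidable (∃ O, O ∈ c ∧ x ∈ O.S)
  if h : ∃ O, O ∈ c ∧ x ∈ O.S then h.choose.neg x else x

def uLe : X → X → Prop := fun x y => ∃ O ∈ c, x ∈ O.S ∧ y ∈ O.S ∧ O.le x y

lemma zero_compat (hc : IsChain Le c) {O₁ O₂ : PreExt A X} (h1 : O₁ ∈ c) (h2 : O₂ ∈ c) : O₁.zero = O₂.zero := by
  obtain ⟨O, _, hle1, hle2⟩ := directed2 c hc h1 h2
  rw [← hle1.2.2.2.1, ← hle2.2.2.2.1]

lemma e_compat (hc : IsChain Le c) {O₁ O₂ : PreExt A X} (h1 : O₁ ∈ c) (h2 : O₂ ∈ c) : O₁.eA = O₂.eA := by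
  obtain ⟨O, _, hle1, hle2⟩ := directed2 c hc h1 h2
  rw [← hle1.2.2.2.2.2, ← hle2.2.2.2.2.2]

lemma add_compat (hc : IsChain Le c) {O : PreExt A X} (hO : O ∈ c) {x y : X} (hx : x ∈ O.S) (hy : y ∈ O.S) :
    uAdd c x y = O.add x y := by
  have h : ∃ O', O' ∈ c ∧ x ∈ O'.S ∧ y ∈ O'.S := ⟨O, hO, hx, hy⟩
  rw [uAdd, dif_pos h]
  obtain ⟨hO', hx', hy'⟩ := h.choose_spec
  obtain ⟨O'', _, hle1, hle2⟩ := directed2 c hc hO' hO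
  rw [← hle1.2.1 x hx' y hy', hle2.2.1 x hx y hy]

lemma neg_compat (hc : IsChain Le c) {O : PreExt A X} (hO : O ∈ c) {x : X} (hx : x ∈ O.S) :
    uNeg c x = O.neg x := by
  have h : ∃ O', O' ∈ c ∧ x ∈ O'.S := ⟨O, hO, hx⟩
  rw [uNeg, dif_pos h]
  obtain ⟨hO', hx'⟩ := h.choose_spec
  obtain ⟨O'', _, hle1, hle2⟩ := directed2 c hc hO' hO
  rw [← hle1.2.2.1 x hx', hle2.2.2.1 x hx]

lemma le_compat (hc : IsChain Le c) {O : PreExt A X} (hO : O ∈ c) {x y : X} (hx : x ∈ O.S) (hy : y ∈ O.S) :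
    uLe c x y ↔ O.le x y := by
  constructor
  · rintro ⟨O', hO', hx', hy', hle⟩
    obtain ⟨O'', _, hle1, hle2⟩ := directed2 c hc hO' hO
    rw [← hle2.2.2.2.2.1 x hx y hy, hle1.2.2.2.2.1 x hx' y hy']
    exact hle
  · intro hle
    exact ⟨O, hO, hx, hy, hle⟩

lemma iter_compat (hc : IsChain Le c) {O : PreExt A X} (hO : O ∈ c) {x : X} (hx : x ∈ O.S) (k : ℕ)
    {z : X} (hz : ∀ O' ∈ c, O'.zero = z) :
    iterAdd (uAdd c) z k x = iterAdd O.add O.zero k x := by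
  induction k with
  | zero => exact (hz O hO).symm
  | succ n ih =>
    show uAdd c x (iterAdd (uAdd c) z n x) = O.add x (iterAdd O.add O.zero n x)
    rw [ih, add_compat c hc hO hx (O.iterAdd_mem n hx)]

noncomputable def ubChain (hc : IsChain Le c) (O₀ : PreExt A X) (hO₀ : O₀ ∈ c) : PreExt A X where
  S := ⋃ O ∈ c, O.S
  add := uAdd c
  neg := uNeg c
  zero := O₀.zero
  le := uLe c
  eA := O₀.eA
  mem_add := by
    rintro x hx y hy
    simp only [Set.mem_iUnion] at hx hy ⊢
    obtain ⟨O₁, h1, hx⟩ := hx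
    obtain ⟨O₂, h2, hy⟩ := hy
    obtain ⟨O, hO, hle1, hle2⟩ := directed2 c hc h1 h2
    refine ⟨O, hO, ?_⟩
    rw [add_compat c hc hO (hle1.1 hx) (hle2.1 hy)]
    exact O.mem_add _ (hle1.1 hx) _ (hle2.1 hy)
  mem_neg := by
    rintro x hx
    simp only [Set.mem_iUnion] at hx ⊢
    obtain ⟨O, hO, hx⟩ := hx
    refine ⟨O, hO, ?_⟩
    rw [neg_compat c hc hO hx]
    exact O.mem_neg _ hx
  mem_zero := by
    simp only [Set.mem_iUnion]
    exact ⟨O₀, hO₀, O₀.mem_zero⟩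
  mem_e := by
    intro a
    simp only [Set.mem_iUnion]
    exact ⟨O₀, hO₀, O₀.mem_e a⟩
  ax_assoc := by
    rintro x hx y hy z hz
    simp only [Set.mem_iUnion] at hx hy hz
    obtain ⟨O₁, h1, hx⟩ := hx
    obtain ⟨O₂, h2, hy⟩ := hy
    obtain ⟨O₃, h3, hz⟩ := hz
    obtain ⟨O', hO', hle1, hle2⟩ := directed2 c hc h1 h2
    obtain ⟨O, hO, hle3, hle4⟩ := directed2 c hc hO' h3
    have hx' : x ∈ O.S := hle3.1 (hle1.1 hx)
    have hy' : y ∈ O.S := hle3.1 (hle2.1 hy)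
    have hz' : z ∈ O.S := hle4.1 hz
    rw [add_compat c hc hO hx' hy', add_compat c hc hO hy' hz',
      add_compat c hc hO (O.mem_add _ hx' _ hy') hz',
      add_compat c hc hO hx' (O.mem_add _ hy' _ hz')]
    exact O.ax_assoc _ hx' _ hy' _ hz'
  ax_comm := by
    rintro x hx y hy
    simp only [Set.mem_iUnion] at hx hy
    obtain ⟨O₁, h1, hx⟩ := hx
    obtain ⟨O₂, h2, hy⟩ := hy
    obtain ⟨O, hO, hle1, hle2⟩ := directed2 c hc h1 h2
    have hx' : x ∈ O.S := hle1.1 hx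
    have hy' : y ∈ O.S := hle2.1 hy
    rw [add_compat c hc hO hx' hy', add_compat c hc hO hy' hx']
    exact O.ax_comm _ hx' _ hy'
  ax_zero_add := by
    rintro x hx
    simp only [Set.mem_iUnion] at hx
    obtain ⟨O, hO, hx⟩ := hx
    rw [zero_compat c hc hO₀ hO, add_compat c hc hO O.mem_zero hx]
    exact O.ax_zero_add _ hx
  ax_neg_add := by
    rintro x hx
    simp only [Set.mem_iUnion] at hx
    obtain ⟨O, hO, hx⟩ := hx
    rw [neg_compat c hc hO hx, add_compat c hc hO (O.mem_neg _ hx) hx,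
      zero_compat c hc hO₀ hO]
    exact O.ax_neg_add _ hx
  ax_le_refl := by
    rintro x hx
    simp only [Set.mem_iUnion] at hx
    obtain ⟨O, hO, hx⟩ := hx
    exact ⟨O, hO, hx, hx, O.ax_le_refl _ hx⟩
  ax_le_trans := by
    rintro x hx y hy z hz hxy hyz
    simp only [Set.mem_iUnion] at hx hy hz
    obtain ⟨O₁, h1, hx⟩ := hx
    obtain ⟨O₂, h2, hy⟩ := hy
    obtain ⟨O₃, h3, hz⟩ := hz
    obtain ⟨O', hO', hle1, hle2⟩ := directed2 c hc h1 h2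
    obtain ⟨O, hO, hle3, hle4⟩ := directed2 c hc hO' h3
    have hx' : x ∈ O.S := hle3.1 (hle1.1 hx)
    have hy' : y ∈ O.S := hle3.1 (hle2.1 hy)
    have hz' : z ∈ O.S := hle4.1 hz
    rw [le_compat c hc hO hx' hy'] at hxy
    rw [le_compat c hc hO hy' hz'] at hyz
    exact ⟨O, hO, hx', hz', O.ax_le_trans _ hx' _ hy' _ hz' hxy hyz⟩
  ax_le_antisymm := by
    rintro x hx y hy hxy hyx
    simp only [Set.mem_iUnion] at hx hy
    obtain ⟨O₁, h1, hx⟩ := hx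
    obtain ⟨O₂, h2, hy⟩ := hy
    obtain ⟨O, hO, hle1, hle2⟩ := directed2 c hc h1 h2
    have hx' : x ∈ O.S := hle1.1 hx
    have hy' : y ∈ O.S := hle2.1 hy
    rw [le_compat c hc hO hx' hy'] at hxy
    rw [le_compat c hc hO hy' hx'] at hyx
    exact O.ax_le_antisymm _ hx' _ hy' hxy hyx
  ax_le_total := by
    rintro x hx y hy
    simp only [Set.mem_iUnion] at hx hy
    obtain ⟨O₁, h1, hx⟩ := hx
    obtain ⟨O₂, h2, hy⟩ := hy
    obtain ⟨O, hO, hle1, hle2⟩ := directed2 c hc h1 h2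
    have hx' : x ∈ O.S := hle1.1 hx
    have hy' : y ∈ O.S := hle2.1 hy
    rcases O.ax_le_total _ hx' _ hy' with h | h
    · exact Or.inl ⟨O, hO, hx', hy', h⟩
    · exact Or.inr ⟨O, hO, hy', hx', h⟩
  ax_add_le := by
    rintro x hx y hy z hz hyz
    simp only [Set.mem_iUnion] at hx hy hz
    obtain ⟨O₁, h1, hx⟩ := hx
    obtain ⟨O₂, h2, hy⟩ := hy
    obtain ⟨O₃, h3, hz⟩ := hz
    obtain ⟨O', hO', hle1, hle2⟩ := directed2 c hc h1 h2
    obtain ⟨O, hO, hle3, hle4⟩ := directed2 c hc hO' h3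
    have hx' : x ∈ O.S := hle3.1 (hle1.1 hx)
    have hy' : y ∈ O.S := hle3.1 (hle2.1 hy)
    have hz' : z ∈ O.S := hle4.1 hz
    rw [le_compat c hc hO hy' hz'] at hyz
    rw [add_compat c hc hO hx' hy', add_compat c hc hO hx' hz']
    exact ⟨O, hO, O.mem_add _ hx' _ hy', O.mem_add _ hx' _ hz',
      O.ax_add_le _ hx' _ hy' _ hz' hyz⟩
  ax_div := by
    rintro k hk x hx
    simp only [Set.mem_iUnion] at hx ⊢
    obtain ⟨O, hO, hx⟩ := hx
    obtain ⟨y, hy, hiter⟩ := O.ax_div k hk x hx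
    refine ⟨y, ⟨O, hO, hy⟩, ?_⟩
    rw [iter_compat c hc hO hy k (fun O' hO' => zero_compat c hc hO' hO₀)]
    exact hiter
  ax_e_add := by
    intro a b
    rw [add_compat c hc hO₀ (O₀.mem_e a) (O₀.mem_e b)]
    exact O₀.ax_e_add a b
  ax_e_mono := by
    intro a b hab
    obtain ⟨h1, h2⟩ := O₀.ax_e_mono a b hab
    exact ⟨⟨O₀, hO₀, O₀.mem_e a, O₀.mem_e b, h1⟩, h2⟩
  ax_icond := by
    rintro b hb hle hne
    simp only [Set.mem_iUnion] at hb
    obtain ⟨O, hO, hb⟩ := hb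
    have hz : O₀.zero = O.zero := zero_compat c hc hO₀ hO
    rw [hz] at hle hne
    rw [le_compat c hc hO O.mem_zero hb] at hle
    obtain ⟨a, h1, h2, h3⟩ := O.ax_icond b hb hle hne
    have he : O₀.eA = O.eA := e_compat c hc hO₀ hO
    refine ⟨a, ?_, ?_, ?_⟩
    · rw [he]
      exact ⟨O, hO, O.mem_e a, hb, h1⟩
    · rw [he, add_compat c hc hO (O.mem_e a) (O.mem_e a)]
      exact ⟨O, hO, hb, O.mem_add _ (O.mem_e a) _ (O.mem_e a), h2⟩
    · rw [he, add_compat c hc hO (O.mem_e a) (O.mem_e a)]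
      exact h3

lemma le_ubChain (hc : IsChain Le c) (O₀ : PreExt A X) (hO₀ : O₀ ∈ c) {O : PreExt A X} (hO : O ∈ c) :
    Le O (ubChain c hc O₀ hO₀) := by
  refine ⟨?_, ?_, ?_, ?_, ?_, ?_⟩
  · intro x hx
    simp only [ubChain, Set.mem_iUnion]
    exact ⟨O, hO, hx⟩
  · intro x hx y hy
    exact add_compat c hc hO hx hy
  · intro x hx
    exact neg_compat c hc hO hx
  · show O₀.zero = O.zero
    exact zero_compat c hc hO₀ hO
  · intro x hx y hy
    exact le_compat c hc hO hx hy
  · show O₀.eA = O.eA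
    exact e_compat c hc hO₀ hO

end Chain

end PreExt

/-! ### Divisible hulls in an ambient group -/

section Hull
variable {C : Type v} [AddCommGroup C] [LinearOrder C] [IsOrderedAddMonoid C]

def divHull (s : Set C) : AddSubgroup C where
  carrier := {x | ∃ n : ℕ, 0 < n ∧ n • x ∈ AddSubgroup.closure s}
  add_mem' := by
    rintro x y ⟨n, hn, hx⟩ ⟨m, hm, hy⟩
    refine ⟨n * m, Nat.mul_pos hn hm, ?_⟩
    have h1 : (n * m) • (x + y) = m • (n • x) + n • (m • y) := by
      rw [smul_add]
      congr 1
      · rw [mul_nsmul]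
      · rw [Nat.mul_comm n m, mul_nsmul]
    rw [h1]
    exact add_mem (nsmul_mem hx m) (nsmul_mem hy n)
  zero_mem' := ⟨1, one_pos, by simpa using zero_mem _⟩
  neg_mem' := by
    rintro x ⟨n, hn, hx⟩
    exact ⟨n, hn, by rw [smul_neg]; exact neg_mem hx⟩

lemma subset_divHull {s : Set C} {x : C} (hx : x ∈ s) : x ∈ divHull s :=
  ⟨1, one_pos, by simpa using AddSubgroup.subset_closure hx⟩

/-- Restriction of the linear ordered group structure to a subgroup. -/
theorem subLOAG (D : AddSubgroup C) : IsOrderedAddMonoid ↥D :=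
  { add_le_add_left := fun a b h c => by
      have : (a : C) + c ≤ (b : C) + c := IsOrderedAddMonoid.add_le_add_left _ _ h _
      exact this }

lemma natDivisible_divHull (hC : NatDivisible C) (s : Set C) :
    NatDivisible ↥(divHull s) := by
  intro k hk x
  obtain ⟨y, hy⟩ := hC k hk x.1
  have hymem : y ∈ divHull s := by
    obtain ⟨n, hn, hx⟩ := x.2
    refine ⟨n * k, Nat.mul_pos hn hk, ?_⟩
    rw [Nat.mul_comm n k, mul_nsmul, hy]
    exact hx
  refine ⟨⟨y, hymem⟩, ?_⟩
  apply Subtype.ext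
  rw [← hy]
  exact rfl

lemma strictMono_subtype (D : AddSubgroup C) : StrictMono ⇑D.subtype :=
  fun _ _ h => h

end Hull

/-! ### A room-making cardinality lemma -/

lemma room {W : Type u} (hW : Cardinal.aleph0 ≤ Cardinal.mk W) {T : Type u}
    (hT : Cardinal.mk T ≤ Cardinal.mk W) (S : Set (Set W))
    (hS : Cardinal.mk ↥S ≤ Cardinal.mk W) :
    Nonempty (T ↪ ↥(Sᶜ)) := by
  have h1 : Cardinal.mk (Set W) = 2 ^ Cardinal.mk W := Cardinal.mk_set
  have h2 : Cardinal.mk ↥S + Cardinal.mk ↥(Sᶜ) = Cardinal.mk (Set W) :=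
    Cardinal.mk_sum_compl S
  have h3 : Cardinal.mk W < Cardinal.mk ↥(Sᶜ) := by
    by_contra h
    push_neg at h
    have h4 : (2 : Cardinal) ^ Cardinal.mk W ≤ Cardinal.mk W + Cardinal.mk W := by
      rw [← h1, ← h2]
      exact add_le_add hS h
    rw [Cardinal.add_eq_self hW] at h4
    exact absurd h4 (not_le.mpr (Cardinal.cantor _))
  exact (Cardinal.le_def T ↥(Sᶜ)).mp (hT.trans h3.le)

/-! ### The main theorem -/

/-- Lemma 13.2 (C1) of Haskell–Hrushovski–Macpherson.  Every
divisible (linearly) ordered abelian group has an i-complete i-extension. -/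
theorem icomplete_iextension_exists (A : Type u) [AddCommGroup A] [LinearOrder A]
    [IsOrderedAddMonoid A]
    (hA : NatDivisible A) :
    ∃ (B : Type u) (_ : AddCommGroup B) (_ : LinearOrder B) (_ : IsOrderedAddMonoid B),
      NatDivisible B ∧ ∃ e : A →+ B, IsIExtension e ∧ IComplete B := by
  classical
  -- the ambient coding type
  -- W := A → Set (ℤ × ℕ), X := Set W
  -- infinite-ness of W
  have hWinf : Cardinal.aleph0 ≤ Cardinal.mk (A → Set (ℤ × ℕ)) := by
    rw [Cardinal.aleph0_le_mk_iff]
    have hinj : Function.Injective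
        (fun n : ℕ => (fun _ => {((0 : ℤ), n)} : A → Set (ℤ × ℕ))) := by
      intro m n h
      have h1 : ({((0 : ℤ), m)} : Set (ℤ × ℕ)) = {((0 : ℤ), n)} := congrFun h (0 : A)
      rw [Set.singleton_eq_singleton_iff] at h1
      exact (Prod.ext_iff.mp h1).2
    exact Infinite.of_injective _ hinj
  -- the base injection of A into X
  have hΦA : Function.Injective
      (fun a : A => ({fun a' : A => {p : ℤ × ℕ | a' = a}} : Set (A → Set (ℤ × ℕ)))) := by
    intro a b h
    have h1 : ({fun a' : A => {p : ℤ × ℕ | a' = a}} : Set (A → Set (ℤ × ℕ))) =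
        {fun a' : A => {p : ℤ × ℕ | a' = b}} := h
    rw [Set.singleton_eq_singleton_iff] at h1
    have h2 : ({p : ℤ × ℕ | a = a} : Set (ℤ × ℕ)) = {p : ℤ × ℕ | a = b} := congrFun h1 a
    have h3 : ((0, 0) : ℤ × ℕ) ∈ {p : ℤ × ℕ | a = a} := rfl
    rw [h2] at h3
    exact h3
  -- the base structure
  set Base : PreExt A (Set (A → Set (ℤ × ℕ))) :=
    PreExt.encode (AddMonoidHom.id A) (fun x y h => h)
      (fun b hb => ⟨b, le_rfl, lt_add_of_pos_left _ hb⟩) hA hΦA with hBase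
  -- Zorn's lemma
  obtain ⟨M₀, hmax⟩ := exists_maximal_of_chains_bounded
    (r := PreExt.Le (A := A) (X := Set (A → Set (ℤ × ℕ))))
    (fun c hchain => by
      rcases c.eq_empty_or_nonempty with rfl | ⟨O₀, hO₀⟩
      · exact ⟨Base, fun a ha => absurd ha (Set.notMem_empty a)⟩
      · exact ⟨PreExt.ubChain c hchain O₀ hO₀,
          fun O hO => PreExt.le_ubChain c hchain O₀ hO₀ hO⟩)
    (fun {a b c} h1 h2 => h1.trans h2)
  letI instG1 : AddCommGroup M₀.Carrier := M₀.addgrp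
  letI instG2 : LinearOrder M₀.Carrier := M₀.lin
  haveI instG : IsOrderedAddMonoid M₀.Carrier := M₀.grp
  refine ⟨M₀.Carrier, instG1, instG2, instG, M₀.natDivisible_carrier, M₀.emb, M₀.emb_iext, ?_⟩
  -- i-completeness of the maximal structure
  intro C instC1 instC2 instC hCdiv f hf
  by_contra hns
  unfold Function.Surjective at hns
  push_neg at hns
  obtain ⟨c₀, hc₀⟩ := hns
  -- the one-step extension inside C
  set D : AddSubgroup C := divHull (Set.range ⇑f ∪ {c₀}) with hD
  haveI instD : IsOrderedAddMonoid ↥D := subLOAG D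
  have hDdiv : NatDivisible ↥D := natDivisible_divHull hCdiv _
  have hrange : ∀ m : M₀.Carrier, f m ∈ D :=
    fun m => subset_divHull (Set.mem_union_left _ ⟨m, rfl⟩)
  set f' : M₀.Carrier →+ ↥D := f.codRestrict D.toAddSubmonoid hrange with hf'def
  have hcomp : D.subtype.comp f' = f := AddMonoidHom.ext fun m => rfl
  have hf' : IsIExtension f' :=
    IsIExtension.of_comp (strictMono_subtype D) (by rw [hcomp]; exact hf)
  set eN : A →+ ↥D := f'.comp M₀.emb with heN
  have hiN : IsIExtension eN := (M₀.emb_iext).comp hf'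
  -- cardinality bounds
  have hSM : Cardinal.mk M₀.Carrier ≤ Cardinal.mk (A → Set (ℤ × ℕ)) :=
    Cardinal.mk_le_of_injective (injective_injB M₀.emb M₀.emb_iext)
  have hTle : Cardinal.mk {x : ↥D // ¬∃ m : M₀.Carrier, f m = (x : C)} ≤
      Cardinal.mk (A → Set (ℤ × ℕ)) :=
    Cardinal.mk_le_of_injective
      ((injective_injB eN hiN).comp Subtype.val_injective)
  obtain ⟨ψ⟩ := room hWinf hTle M₀.S hSM
  -- the transplanting injection
  set Φ : ↥D → Set (A → Set (ℤ × ℕ)) := fun x =>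
    if h : ∃ m : M₀.Carrier, f m = (x : C) then (h.choose : M₀.Carrier).1
    else (ψ ⟨x, h⟩).1 with hΦdef
  have hfinj : Function.Injective ⇑f := hf.1.injective
  have hΦf : ∀ m : M₀.Carrier, Φ (f' m) = m.1 := by
    intro m
    have h : ∃ m' : M₀.Carrier, f m' = ((f' m : ↥D) : C) := ⟨m, rfl⟩
    rw [hΦdef]
    simp only
    rw [dif_pos h]
    have := h.choose_spec
    have h2 : h.choose = m := hfinj this
    rw [h2]
  have hΦneg : ∀ (x : ↥D) (h : ¬∃ m : M₀.Carrier, f m = (x : C)), Φ x = (ψ ⟨x, h⟩).1 := by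
    intro x h
    rw [hΦdef]
    simp only
    rw [dif_neg h]
  have hΦinj : Function.Injective Φ := by
    intro x y h
    by_cases hx : ∃ m : M₀.Carrier, f m = (x : C) <;>
      by_cases hy : ∃ m : M₀.Carrier, f m = (y : C)
    · rw [hΦdef] at h
      simp only at h
      rw [dif_pos hx, dif_pos hy] at h
      have h2 : hx.choose = hy.choose := Subtype.val_injective h
      have h3 : f hx.choose = f hy.choose := by rw [h2]
      rw [hx.choose_spec, hy.choose_spec] at h3
      exact Subtype.val_injective h3
    · exfalso
      rw [hΦneg y hy] at h
      rw [hΦdef] at h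
      simp only at h
      rw [dif_pos hx] at h
      have hmem : (hx.choose : M₀.Carrier).1 ∈ M₀.S := (hx.choose : M₀.Carrier).2
      rw [h] at hmem
      exact (ψ ⟨y, hy⟩).2 hmem
    · exfalso
      rw [hΦneg x hx] at h
      rw [hΦdef] at h
      simp only at h
      rw [dif_pos hy] at h
      have hmem : (hy.choose : M₀.Carrier).1 ∈ M₀.S := (hy.choose : M₀.Carrier).2
      rw [← h] at hmem
      exact (ψ ⟨x, hx⟩).2 hmem
    · rw [hΦneg x hx, hΦneg y hy] at h
      have h2 : ψ ⟨x, hx⟩ = ψ ⟨y, hy⟩ := Subtype.val_injective h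
      have h3 := ψ.injective h2
      exact congrArg Subtype.val h3
  -- the new structure
  have hiN' := (isIExtension_iff eN).mp hiN
  set Enc : PreExt A (Set (A → Set (ℤ × ℕ))) :=
    PreExt.encode eN hiN'.1 hiN'.2 hDdiv hΦinj with hEnc
  -- M₀ ≤ Enc
  have hle : PreExt.Le M₀ Enc := by
    refine ⟨?_, ?_, ?_, ?_, ?_, ?_⟩
    · intro x hx
      exact ⟨f' ⟨x, hx⟩, hΦf ⟨x, hx⟩⟩
    · intro x hx y hy
      have h1 : x = Φ (f' ⟨x, hx⟩) := (hΦf ⟨x, hx⟩).symm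
      have h2 : y = Φ (f' ⟨y, hy⟩) := (hΦf ⟨y, hy⟩).symm
      calc Enc.add x y = PreExt.encAdd Φ (Φ (f' ⟨x, hx⟩)) (Φ (f' ⟨y, hy⟩)) := by
            rw [← h1, ← h2]; rfl
        _ = Φ (f' ⟨x, hx⟩ + f' ⟨y, hy⟩) := PreExt.encAdd_apply hΦinj _ _
        _ = Φ (f' (⟨x, hx⟩ + ⟨y, hy⟩)) := congrArg Φ (map_add f' _ _).symm
        _ = ((⟨x, hx⟩ + ⟨y, hy⟩ : M₀.Carrier)).1 := hΦf _
        _ = M₀.add x y := M₀.coe_add _ _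
    · intro x hx
      have h1 : x = Φ (f' ⟨x, hx⟩) := (hΦf ⟨x, hx⟩).symm
      calc Enc.neg x = PreExt.encNeg Φ (Φ (f' ⟨x, hx⟩)) := by rw [← h1]; rfl
        _ = Φ (-(f' ⟨x, hx⟩)) := PreExt.encNeg_apply hΦinj _
        _ = Φ (f' (-⟨x, hx⟩)) := congrArg Φ (map_neg f' _).symm
        _ = ((-⟨x, hx⟩ : M₀.Carrier)).1 := hΦf _
        _ = M₀.neg x := M₀.coe_neg _
    · calc Enc.zero = Φ 0 := rfl
        _ = Φ (f' 0) := by rw [map_zero]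
        _ = ((0 : M₀.Carrier)).1 := hΦf _
        _ = M₀.zero := M₀.coe_zero
    · intro x hx y hy
      have h1 : x = Φ (f' ⟨x, hx⟩) := (hΦf ⟨x, hx⟩).symm
      have h2 : y = Φ (f' ⟨y, hy⟩) := (hΦf ⟨y, hy⟩).symm
      have h3 : Enc.le x y ↔ PreExt.encLe Φ (Φ (f' ⟨x, hx⟩)) (Φ (f' ⟨y, hy⟩)) := by
        rw [← h1, ← h2]; exact Iff.rfl
      rw [h3, PreExt.encLe_iff hΦinj]
      refine (hf'.1.le_iff_le).trans ?_
      exact Iff.rfl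
    · funext a
      calc Enc.eA a = Φ (eN a) := rfl
        _ = Φ (f' (M₀.emb a)) := rfl
        _ = (M₀.emb a).1 := hΦf _
        _ = M₀.eA a := rfl
  -- contradiction with maximality
  have hback := hmax Enc hle
  have hc₀D : c₀ ∈ D := subset_divHull (Set.mem_union_right _ rfl)
  have hx₀ : ¬∃ m : M₀.Carrier, f m = ((⟨c₀, hc₀D⟩ : ↥D) : C) := by
    rintro ⟨m, hm⟩
    exact hc₀ m hm
  have hmem1 : Φ ⟨c₀, hc₀D⟩ ∈ Enc.S := ⟨⟨c₀, hc₀D⟩, rfl⟩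
  have hmem2 := hback.1 hmem1
  rw [hΦneg _ hx₀] at hmem2
  exact (ψ ⟨⟨c₀, hc₀D⟩, hx₀⟩).2 hmem2


end Stmt14
end

section
/- If A ≤ B is an i-extension of divisible ordered abelian groups, then the cardinality of B is at most 2^(2^|A|). -/
universe u v

namespace Stmt15

/-- The (ordered abelian) group `A` is divisible: every element is divisible by every
positive natural number. -/
def NatDivisible (A : Type u) [AddCommGroup A] : Prop :=
  ∀ k : ℕ, 0 < k → ∀ a : A, ∃ b : A, k • b = a

/-- The order embedding `e : A → B` is an i-extension: `e` is a strictly monotone group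
embedding, and there is no `b ∈ B` with `b > 0` such that the cut
`ct_A(b) = {a ∈ A : 0 ≤ e a ≤ b}` is closed under addition. -/
def IsIExtension {A : Type u} {B : Type v} [AddCommGroup A] [LinearOrder A]
    [IsOrderedAddMonoid A] [AddCommGroup B] [LinearOrder B] [IsOrderedAddMonoid B] (e : A →+ B) : Prop :=
  StrictMono ⇑e ∧
    ∀ b : B, 0 < b →
      ¬ (∀ x y : A, (0 ≤ e x ∧ e x ≤ b) → (0 ≤ e y ∧ e y ≤ b) →
          (0 ≤ e (x + y) ∧ e (x + y) ≤ b))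

/-! ### A triangle version of the Erdős–Rado theorem -/

section ER

open Cardinal Set
open scoped Classical

variable {X C : Type u}

/-- A well-founded relation that well-orders `X`. -/
noncomputable abbrev xwf (X : Type u) : WellFounded (@WellOrderingRel X) :=
  (WellOrderingRel.isWellOrder).toIsWellFounded.wf

variable (f : X → X → C)

/-- The ramification sequence of approximations to `x`. -/
noncomputable def seq (x : X) : Ordinal.{u} → X :=
  Ordinal.lt_wf.fix fun η g =>
    if h : ∃ ξ, ∃ hξ : ξ < η, g ξ hξ = x then x
    else
      (xwf X).min {y | ∀ ξ (hξ : ξ < η), f (g ξ hξ) y = f (g ξ hξ) x ∧ y ≠ g ξ hξ}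
        ⟨x, fun ξ hξ => ⟨rfl, fun hc => h ⟨ξ, hξ, hc.symm⟩⟩⟩

theorem seq_eq (x : X) (η : Ordinal.{u}) :
    seq f x η =
      if h : ∃ ξ, ∃ _ : ξ < η, seq f x ξ = x then x
      else
        (xwf X).min {y | ∀ ξ (_ : ξ < η), f (seq f x ξ) y = f (seq f x ξ) x ∧ y ≠ seq f x ξ}
          ⟨x, fun ξ hξ => ⟨rfl, fun hc => h ⟨ξ, hξ, hc.symm⟩⟩⟩ :=
  WellFounded.fix_eq _ _ _

/-- While `x` has not appeared, the next approximation satisfies all the constraints. -/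
theorem seq_run (x : X) (η : Ordinal.{u}) (h : ∀ ξ, ξ < η → seq f x ξ ≠ x) :
    ∀ ξ, ξ < η → f (seq f x ξ) (seq f x η) = f (seq f x ξ) x ∧ seq f x η ≠ seq f x ξ := by
  have hcond : ¬ ∃ ξ, ∃ _ : ξ < η, seq f x ξ = x := by
    rintro ⟨ξ, hξ, hc⟩
    exact h ξ hξ hc
  have := seq_eq f x η
  rw [dif_neg hcond] at this
  rw [this]
  exact WellFounded.min_mem (xwf X)
    {y | ∀ ξ (_ : ξ < η), f (seq f x ξ) y = f (seq f x ξ) x ∧ y ≠ seq f x ξ}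
    ⟨x, fun ξ hξ => ⟨rfl, fun hc => hcond ⟨ξ, hξ, hc.symm⟩⟩⟩

/-- The ramification sequence eventually reaches `x`. -/
theorem exists_reached (x : X) : ∃ η : Ordinal.{u}, seq f x η = x := by
  by_contra hno
  push_neg at hno
  have hrun : ∀ η ξ : Ordinal.{u}, ξ < η → seq f x η ≠ seq f x ξ := fun η ξ hξ =>
    (seq_run f x η (fun ζ _ => hno ζ) ξ hξ).2
  set o₀ : Ordinal.{u} := (Order.succ (#X)).ord with ho₀
  have hinj : Function.Injective
      (fun t : o₀.ToType => seq f x ((Ordinal.ToType.mk (o := o₀)).symm t).1) := by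
    intro s t hst
    rcases lt_trichotomy (((Ordinal.ToType.mk (o := o₀)).symm s).1)
      (((Ordinal.ToType.mk (o := o₀)).symm t).1) with hlt | heq | hgt
    · exact absurd hst.symm (hrun _ _ hlt)
    · have : (Ordinal.ToType.mk (o := o₀)).symm s = (Ordinal.ToType.mk (o := o₀)).symm t :=
        Subtype.ext heq
      exact (Ordinal.ToType.mk (o := o₀)).symm.injective this
    · exact absurd hst (hrun _ _ hgt)
  have hle : #o₀.ToType ≤ #X := Cardinal.mk_le_of_injective hinj
  rw [Cardinal.mk_toType, ho₀, Cardinal.card_ord] at hle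
  exact (Order.lt_succ (#X)).not_ge hle

/-- The stage at which the ramification sequence reaches `x`. -/
noncomputable def stopAt (x : X) : Ordinal.{u} :=
  Ordinal.lt_wf.min {η | seq f x η = x} (exists_reached f x)

theorem seq_stopAt (x : X) : seq f x (stopAt f x) = x :=
  WellFounded.min_mem Ordinal.lt_wf {η | seq f x η = x} (exists_reached f x)

theorem ne_of_lt_stopAt (x : X) {ξ : Ordinal.{u}} (h : ξ < stopAt f x) : seq f x ξ ≠ x :=
  fun hc => Ordinal.lt_wf.not_lt_min _ hc h

theorem run_upto (x : X) {η : Ordinal.{u}} (hη : η ≤ stopAt f x) :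
    ∀ ξ, ξ < η → f (seq f x ξ) (seq f x η) = f (seq f x ξ) x ∧ seq f x η ≠ seq f x ξ :=
  seq_run f x η fun ζ hζ => ne_of_lt_stopAt f x (lt_of_lt_of_le hζ hη)

/-- The colour of the `ξ`-th approximation to `x`. -/
noncomputable def col (x : X) (ξ : Ordinal.{u}) : C :=
  f (seq f x ξ) x

variable (hf : ∀ a b c : X, a ≠ b → a ≠ c → b ≠ c → ¬(f a b = f a c ∧ f a c = f b c))

include hf

/-- The colours along the ramification sequence are pairwise distinct. -/
theorem col_inj (x : X) {ξ ζ : Ordinal.{u}} (hlt : ξ < ζ) (hζ : ζ < stopAt f x) :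
    col f x ξ ≠ col f x ζ := by
  intro hc
  have hξ : ξ < stopAt f x := hlt.trans hζ
  have h1 := run_upto f x hζ.le ξ hlt
  exact hf (seq f x ξ) (seq f x ζ) x h1.2.symm (ne_of_lt_stopAt f x hξ)
    (ne_of_lt_stopAt f x hζ) ⟨h1.1, hc⟩

theorem col_injOn (x : X) {ξ ζ : Ordinal.{u}} (hξ : ξ < stopAt f x) (hζ : ζ < stopAt f x)
    (hc : col f x ξ = col f x ζ) : ξ = ζ := by
  rcases lt_trichotomy ξ ζ with h | h | h
  · exact absurd hc (col_inj f hf x h hζ)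
  · exact h
  · exact absurd hc.symm (col_inj f hf x h hξ)

/-- The encoding of `x` as a set of pairs of colours. -/
def enc (x : X) : Set (C × C) :=
  {p | ∃ ξ ζ : Ordinal.{u}, ξ ≤ ζ ∧ ζ < stopAt f x ∧ p = (col f x ξ, col f x ζ)}

theorem mem_enc_diag (x : X) {ξ : Ordinal.{u}} (hξ : ξ < stopAt f x) :
    (col f x ξ, col f x ξ) ∈ enc f x :=
  ⟨ξ, ξ, le_refl _, hξ, rfl⟩

omit hf in
theorem mem_enc (x : X) {ξ ζ : Ordinal.{u}} (hξ : ξ ≤ ζ) (hζ : ζ < stopAt f x) :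
    (col f x ξ, col f x ζ) ∈ enc f x :=
  ⟨ξ, ζ, hξ, hζ, rfl⟩

/-- If `(t, t)` lies in the encoding of `x` then `t` is a colour along the sequence. -/
theorem diag_mem (x : X) {t : C} (h : (t, t) ∈ enc f x) :
    ∃ ξ : Ordinal.{u}, ξ < stopAt f x ∧ t = col f x ξ := by
  obtain ⟨ξ, ζ, hle, hζ, hp⟩ := h
  have h1 : t = col f x ξ := congrArg Prod.fst hp
  have h2 : t = col f x ζ := congrArg Prod.snd hp
  exact ⟨ζ, hζ, h2⟩

/-- Step 1: equal encodings give equal colour traces (as far as both are defined). -/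
theorem trace_eq {x y : X} (hxy : enc f x = enc f y) :
    ∀ ξ : Ordinal.{u}, ξ < stopAt f x → ξ < stopAt f y → col f x ξ = col f y ξ := by
  intro ξ
  induction ξ using Ordinal.induction with
  | h ξ IH =>
    intro hx hy
    by_contra hne
    -- (col x ξ, col x ξ) ∈ enc y
    have hmem : (col f x ξ, col f x ξ) ∈ enc f y := by
      rw [← hxy]; exact mem_enc f x (le_refl ξ) hx
    obtain ⟨ζ', hζ', ht⟩ := diag_mem f hf y hmem
    rcases lt_trichotomy ζ' ξ with h1 | h1 | h1
    · -- col y ζ' = col x ζ' by IH, contradicting injectivity of col x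
      have : col f x ζ' = col f y ζ' := IH ζ' h1 (h1.trans hx) hζ'
      exact col_inj f hf x h1 hx (this.trans ht.symm)
    · exact hne (h1 ▸ ht)
    · -- (col y ξ, col y ζ') ∈ enc x
      have hmem2 : (col f y ξ, col f y ζ') ∈ enc f x := by
        rw [hxy]; exact mem_enc f y h1.le hζ'
      obtain ⟨ξ1, ξ2, hle, hξ2, hp⟩ := hmem2
      have e1 : col f y ξ = col f x ξ1 := congrArg Prod.fst hp
      have e2 : col f y ζ' = col f x ξ2 := congrArg Prod.snd hp
      have hξ2ξ : ξ2 = ξ := col_injOn f hf x hξ2 hx (e2.symm.trans ht.symm)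
      rcases lt_or_eq_of_le hle with h2 | h2
      · -- ξ1 < ξ2 = ξ
        have hξ1 : ξ1 < ξ := hξ2ξ ▸ h2
        have hIH : col f x ξ1 = col f y ξ1 := IH ξ1 hξ1 (hξ1.trans hx) (hξ1.trans hy)
        -- col y ξ1 = col y ξ, contradicting injectivity
        have : col f y ξ1 = col f y ξ := hIH.symm.trans e1.symm
        exact absurd (col_injOn f hf y (hξ1.trans hy) hy this) (ne_of_lt hξ1)
      · -- ξ1 = ξ2 = ξ, so col y ξ = col x ξ, contradicting hne
        have : col f y ξ = col f x ξ := e1.trans (by rw [h2, hξ2ξ])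
        exact hne this.symm

/-- Step 2: equal encodings give equal stopping times. -/
theorem stop_le {x y : X} (hxy : enc f x = enc f y) : stopAt f y ≤ stopAt f x := by
  by_contra hlt
  push_neg at hlt
  have hmem : (col f y (stopAt f x), col f y (stopAt f x)) ∈ enc f x := by
    rw [hxy]; exact mem_enc f y (le_refl _) hlt
  obtain ⟨ζ, hζ, ht⟩ := diag_mem f hf x hmem
  have h1 : col f x ζ = col f y ζ := trace_eq f hf hxy ζ hζ (hζ.trans hlt)
  exact col_inj f hf y hζ hlt (h1.symm.trans ht.symm)

/-- The encoding is injective. -/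
theorem enc_inj : Function.Injective (enc f) := by
  intro x y hxy
  have hstop : stopAt f x = stopAt f y :=
    le_antisymm (stop_le f hf hxy.symm) (stop_le f hf hxy)
  -- all approximations coincide
  have hseq : ∀ ξ : Ordinal.{u}, ξ ≤ stopAt f x → seq f x ξ = seq f y ξ := by
    intro ξ
    induction ξ using Ordinal.induction with
    | h ξ IH =>
      intro hξ
      have hcx : ¬ ∃ ζ, ∃ _ : ζ < ξ, seq f x ζ = x := by
        rintro ⟨ζ, hζ, hc⟩
        exact ne_of_lt_stopAt f x (lt_of_lt_of_le hζ hξ) hc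
      have hcy : ¬ ∃ ζ, ∃ _ : ζ < ξ, seq f y ζ = y := by
        rintro ⟨ζ, hζ, hc⟩
        exact ne_of_lt_stopAt f y (lt_of_lt_of_le hζ (hstop ▸ hξ)) hc
      have hsets : {z | ∀ ζ (_ : ζ < ξ), f (seq f x ζ) z = f (seq f x ζ) x ∧ z ≠ seq f x ζ}
          = {z | ∀ ζ (_ : ζ < ξ), f (seq f y ζ) z = f (seq f y ζ) y ∧ z ≠ seq f y ζ} := by
        ext z
        have harg : ∀ ζ, ζ < ξ → seq f x ζ = seq f y ζ := fun ζ hζ =>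
          IH ζ hζ ((hζ.le.trans hξ))
        have hcol : ∀ ζ, ζ < ξ → f (seq f x ζ) x = f (seq f y ζ) y := by
          intro ζ hζ
          have h1 : ζ < stopAt f x := lt_of_lt_of_le hζ hξ
          have := trace_eq f hf hxy ζ h1 (hstop ▸ h1)
          rw [col, col] at this
          exact this
        constructor
        · intro hz ζ hζ
          rw [← hcol ζ hζ, ← harg ζ hζ]
          exact hz ζ hζ
        · intro hz ζ hζ
          rw [hcol ζ hζ, harg ζ hζ]
          exact hz ζ hζ
      have ex := seq_eq f x ξ
      have ey := seq_eq f y ξ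
      rw [dif_neg hcx] at ex
      rw [dif_neg hcy] at ey
      rw [ex, ey]
      congr 1
  have h1 : seq f x (stopAt f x) = seq f y (stopAt f x) := hseq _ (le_refl _)
  rw [seq_stopAt f x, hstop, seq_stopAt f y] at h1
  exact h1

/-- **Erdős–Rado for triangles**: if `X` carries a colouring of pairs by `C` with no
monochromatic triangle, then `|X| ≤ 2 ^ |C × C|`. -/
theorem er3 : #X ≤ 2 ^ #(C × C) := by
  have := Cardinal.mk_le_of_injective (enc_inj f hf)
  rwa [Cardinal.mk_set] at this

end ER

/-- the cardinality bound in the proof of Lemma C1 of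
Haskell–Hrushovski–Macpherson, via the Erdős–Rado theorem.  If `A ≤ B` is an
i-extension of divisible ordered abelian groups then `|B| ≤ 2 ^ 2 ^ |A|`. -/
theorem iextension_card_le {A B : Type u} [AddCommGroup A] [LinearOrder A]
    [IsOrderedAddMonoid A] [AddCommGroup B] [LinearOrder B] [IsOrderedAddMonoid B]
    (hA : NatDivisible A) (hB : NatDivisible B)
    (e : A →+ B) (he : IsIExtension e) :
    Cardinal.mk B ≤ (2 : Cardinal) ^ ((2 : Cardinal) ^ Cardinal.mk A) := by
  obtain ⟨hmono, hcut⟩ := he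
  by_cases hpos : ∃ b : B, 0 < b
  · obtain ⟨b0, hb0⟩ := hpos
    -- `A` is infinite, since it contains a positive element
    obtain ⟨x, hx⟩ := not_forall.mp (hcut b0 hb0)
    obtain ⟨y, hy⟩ := not_forall.mp hx
    rw [Classical.not_imp, Classical.not_imp] at hy
    obtain ⟨hx', hy', hR⟩ := hy
    have h0 : 0 ≤ e (x + y) := by rw [map_add]; exact add_nonneg hx'.1 hy'.1
    have hp : (0 : A) < x + y := by
      rcases lt_or_ge 0 (x + y) with h | h
      · exact h
      · exfalso
        apply hR
        refine ⟨h0, ?_⟩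
        have h1 : e (x + y) ≤ e 0 := hmono.monotone h
        rw [map_zero] at h1
        exact h1.trans hb0.le
    have hsm : StrictMono (fun n : ℕ => n • (x + y)) := by
      apply strictMono_nat_of_lt_succ
      intro n
      simp only [succ_nsmul]
      exact lt_add_of_pos_right _ hp
    haveI hAinfty : Infinite A := Infinite.of_injective _ hsm.injective
    have hAinf : Cardinal.aleph0 ≤ Cardinal.mk A := Cardinal.aleph0_le_mk A
    -- the colouring of pairs of `B` by cuts over `A`
    set F : B → B → Set A := fun b b' => {a | 0 ≤ e a ∧ e a ≤ |b' - b|} with hF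
    have Fcomm : ∀ b b' : B, F b b' = F b' b := by
      intro b b'
      simp only [hF, abs_sub_comm]
    have key : ∀ b1 b2 b3 : B, b1 < b2 → b2 < b3 →
        F b1 b2 = F b1 b3 → F b1 b3 = F b2 b3 → False := by
      intro b1 b2 b3 h12 h23 hE1 hE2
      have e12 : |b2 - b1| = b2 - b1 := abs_of_pos (sub_pos.2 h12)
      have e23 : |b3 - b2| = b3 - b2 := abs_of_pos (sub_pos.2 h23)
      have e13 : |b3 - b1| = b3 - b1 := abs_of_pos (sub_pos.2 (h12.trans h23))
      apply hcut (b2 - b1) (sub_pos.2 h12)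
      intro u v hu hv
      have huv0 : 0 ≤ e (u + v) := by rw [map_add]; exact add_nonneg hu.1 hv.1
      refine ⟨huv0, ?_⟩
      -- `v` lies in the cut of `b3 - b2` as well
      have hv' : e v ≤ b3 - b2 := by
        have hmem : v ∈ F b2 b3 := by
          rw [← hE2, ← hE1]
          exact ⟨hv.1, by rw [e12]; exact hv.2⟩
        have := hmem.2
        rwa [e23] at this
      have hsum : e (u + v) ≤ b3 - b1 := by
        rw [map_add]
        calc e u + e v ≤ (b2 - b1) + (b3 - b2) := add_le_add hu.2 hv'
          _ = b3 - b1 := by abel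
      have hmem2 : u + v ∈ F b1 b2 := by
        rw [hE1]
        exact ⟨huv0, by rw [e13]; exact hsum⟩
      have := hmem2.2
      rwa [e12] at this
    have hf : ∀ a b c : B, a ≠ b → a ≠ c → b ≠ c → ¬(F a b = F a c ∧ F a c = F b c) := by
      rintro a b c hab hac hbc ⟨h1, h2⟩
      -- all unordered pairs from `{a,b,c}` get the same colour
      have Hab : F a b = F a b := rfl
      have Hba : F b a = F a b := Fcomm b a
      have Hac : F a c = F a b := h1.symm
      have Hca : F c a = F a b := (Fcomm c a).trans h1.symm
      have Hbc : F b c = F a b := h2.symm.trans h1.symm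
      have Hcb : F c b = F a b := (Fcomm c b).trans (h2.symm.trans h1.symm)
      rcases lt_trichotomy a b with h | h | h
      · rcases lt_trichotomy b c with h' | h' | h'
        · exact key a b c h h' (Hab.trans Hac.symm)
            (Hac.trans Hbc.symm)
        · exact hbc h'
        · rcases lt_trichotomy a c with h'' | h'' | h''
          · exact key a c b h'' h' (Hac.trans Hab.symm)
              (Hab.trans Hcb.symm)
          · exact hac h''
          · exact key c a b h'' h (Hca.trans Hcb.symm)
              (Hcb.trans Hab.symm)
      · exact hab h
      · rcases lt_trichotomy a c with h' | h' | h'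
        · exact key b a c h h' (Hba.trans Hbc.symm)
            (Hbc.trans Hac.symm)
        · exact hac h'
        · rcases lt_trichotomy b c with h'' | h'' | h''
          · exact key b c a h'' h' (Hbc.trans Hba.symm)
              (Hba.trans Hca.symm)
          · exact hbc h''
          · exact key c b a h'' h (Hcb.trans Hca.symm)
              (Hca.trans Hba.symm)
    have hER := er3 F hf
    have hcalc : Cardinal.mk (Set A × Set A) = (2 : Cardinal) ^ Cardinal.mk A := by
      simp only [Cardinal.mk_prod, Cardinal.lift_id, Cardinal.mk_set]
      exact Cardinal.mul_eq_self (hAinf.trans (Cardinal.cantor _).le)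
    rwa [hcalc] at hER
  · -- `B` has no positive element, hence is a subsingleton
    push_neg at hpos
    haveI : Subsingleton B := by
      constructor
      intro b b'
      have h1 : b = 0 := le_antisymm (hpos b) (neg_nonpos.mp (hpos (-b)))
      have h2 : b' = 0 := le_antisymm (hpos b') (neg_nonpos.mp (hpos (-b')))
      rw [h1, h2]
    have h1 : Cardinal.mk B ≤ 1 := Cardinal.le_one_iff_subsingleton.mpr this
    refine h1.trans ?_
    calc (1 : Cardinal) = 1 ^ ((2 : Cardinal) ^ Cardinal.mk A) := (Cardinal.one_power).symm
      _ ≤ 2 ^ ((2 : Cardinal) ^ Cardinal.mk A) := Cardinal.power_le_power_right one_le_two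

end Stmt15
end

section
/- Let A be a divisible ordered abelian group, let X = (X⁻, X⁺) be a cut in A^{≥0} = {a ∈ A : a ≥ 0} (that is, a partition of A^{≥0} with X⁻ downward closed within A^{≥0}), let D = X⁻ ∪ {a ∈ A : a < 0}, and let H = {h ∈ A : h + D = D} be the convex subgroup corresponding to X. Then the following are equivalent: (1) there exist an i-extension B of A and an element b ∈ B ∖ A with b ≥ 0 such that ct_A(b) = X⁻; (2) for every a ∈ X⁻ there is a′ ∈ X⁻ with a′ > a + h for all h ∈ H, and for every a ∈ X⁺ there is a′ ∈ X⁺ with a′ + h < a for all h ∈ H (i.e. the image of X⁻ in A/H has no maximal element and the image of X⁺ in A/H has no minimal element). -/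
universe u v

attribute [-instance] Prod.instLE_mathlib Prod.instPreorder Prod.instPartialOrder
  Prod.instLattice Prod.instIsOrderedAddMonoid
  Prod.instSemilatticeInf Prod.instSemilatticeSup Prod.instDistribLattice

namespace Stmt16

/-- The (ordered abelian) group `A` is divisible: every element is divisible by every
positive natural number. -/
def NatDivisible (A : Type u) [AddCommGroup A] : Prop :=
  ∀ k : ℕ, 0 < k → ∀ a : A, ∃ b : A, k • b = a

/-- The order embedding `e : A → B` is an i-extension: `e` is a strictly monotone group
embedding, and there is no `b ∈ B` with `b > 0` such that the cut
`ct_A(b) = {a ∈ A : 0 ≤ e a ≤ b}` is closed under addition. -/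
def IsIExtension {A : Type u} {B : Type v} [AddCommGroup A] [LinearOrder A]
    [IsOrderedAddMonoid A] [AddCommGroup B] [LinearOrder B] [IsOrderedAddMonoid B]
    (e : A →+ B) : Prop :=
  StrictMono ⇑e ∧
    ∀ b : B, 0 < b →
      ¬ (∀ x y : A, (0 ≤ e x ∧ e x ≤ b) → (0 ≤ e y ∧ e y ≤ b) →
          (0 ≤ e (x + y) ∧ e (x + y) ≤ b))

/-- The pointwise stabilizer `{h : h + D = D}` of a subset `D` of an ordered abelian
group under translation; for `D` the downward closure of a cut this is the convex
subgroup corresponding to the cut. -/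
def cutStabilizer {A : Type u} [AddCommGroup A] [LinearOrder A] [IsOrderedAddMonoid A]
    (D : Set A) : Set A :=
  {h | (fun d => h + d) '' D = D}


section RatModule

variable {A : Type u} [AddCommGroup A] [LinearOrder A] [IsOrderedAddMonoid A]

private theorem qsmul_exists (hA : NatDivisible A) (q : ℚ) (a : A) :
    ∃ x : A, (q.den : ℤ) • x = q.num • a := by
  obtain ⟨x, hx⟩ := hA q.den q.pos (q.num • a)
  exact ⟨x, by rw [natCast_zsmul, hx]⟩

noncomputable def qsmul (hA : NatDivisible A) (q : ℚ) (a : A) : A :=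
  (qsmul_exists hA q a).choose

theorem qsmul_spec (hA : NatDivisible A) (q : ℚ) (a : A) :
    (q.den : ℤ) • qsmul hA q a = q.num • a :=
  (qsmul_exists hA q a).choose_spec

private theorem den_ne (q : ℚ) : (q.den : ℤ) ≠ 0 := by
  exact_mod_cast q.den_nz

/-- key lemma: if q * n = m then n • (q • a) = m • a -/
theorem qsmul_key (hA : NatDivisible A) (q : ℚ) (n m : ℤ) (hnm : q * (n : ℚ) = (m : ℚ))
    (a : A) : n • qsmul hA q a = m • a := by
  apply zsmul_right_injective (den_ne q)
  show (q.den : ℤ) • n • qsmul hA q a = (q.den : ℤ) • m • a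
  have hint : q.num * n = m * q.den := by
    have h1 : ((q.num * n : ℤ) : ℚ) = ((m * q.den : ℤ) : ℚ) := by
      push_cast
      rw [← Rat.num_div_den q] at hnm
      field_simp at hnm
      linarith [hnm]
    exact_mod_cast h1
  rw [smul_comm ((q.den : ℤ)) n, qsmul_spec, smul_smul, smul_smul, mul_comm (q.den : ℤ) m,
    ← hint, mul_comm q.num n, mul_smul]

noncomputable def ratModule (hA : NatDivisible A) : Module ℚ A where
  smul := qsmul hA
  one_smul a := by
    have := qsmul_key hA 1 1 1 (by norm_num) a
    change qsmul hA 1 a = a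
    simpa using this
  mul_smul q r a := by
    apply zsmul_right_injective (mul_ne_zero (den_ne r) (den_ne q))
    show ((r.den : ℤ) * (q.den : ℤ)) • qsmul hA (q * r) a
        = ((r.den : ℤ) * (q.den : ℤ)) • qsmul hA q (qsmul hA r a)
    have h1 : (q * r) * (((r.den : ℤ) * (q.den : ℤ) : ℤ) : ℚ) = ((q.num * r.num : ℤ) : ℚ) := by
      push_cast
      calc q * r * ((r.den : ℚ) * (q.den : ℚ)) = (q * q.den) * (r * r.den) := by ring
        _ = (q.num : ℚ) * (r.num : ℚ) := by rw [Rat.mul_den_eq_num, Rat.mul_den_eq_num]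
    rw [qsmul_key hA (q*r) _ _ h1]
    refine Eq.symm ?_
    calc ((r.den : ℤ) * (q.den : ℤ)) • qsmul hA q (qsmul hA r a)
        = (r.den : ℤ) • ((q.den : ℤ) • qsmul hA q (qsmul hA r a)) := mul_smul _ _ _
      _ = (r.den : ℤ) • (q.num • qsmul hA r a) := by rw [qsmul_spec]
      _ = q.num • ((r.den : ℤ) • qsmul hA r a) := smul_comm _ _ _
      _ = q.num • (r.num • a) := by rw [qsmul_spec]
      _ = (q.num * r.num) • a := (mul_smul _ _ _).symm
  smul_zero q := by
    apply zsmul_right_injective (den_ne q)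
    show (q.den : ℤ) • qsmul hA q 0 = (q.den : ℤ) • (0 : A)
    rw [qsmul_spec, smul_zero, smul_zero]
  smul_add q a b := by
    apply zsmul_right_injective (den_ne q)
    show (q.den : ℤ) • qsmul hA q (a + b) = (q.den : ℤ) • (qsmul hA q a + qsmul hA q b)
    rw [qsmul_spec, smul_add, smul_add, qsmul_spec, qsmul_spec]
  add_smul q r a := by
    apply zsmul_right_injective (mul_ne_zero (den_ne q) (den_ne r))
    show ((q.den : ℤ) * (r.den : ℤ)) • qsmul hA (q + r) a
        = ((q.den : ℤ) * (r.den : ℤ)) • (qsmul hA q a + qsmul hA r a)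

    have h1 : (q + r) * (((q.den : ℤ) * (r.den : ℤ) : ℤ) : ℚ)
        = ((q.num * r.den + r.num * q.den : ℤ) : ℚ) := by
      push_cast
      calc (q + r) * ((q.den : ℚ) * (r.den : ℚ))
          = (q * q.den) * r.den + (r * r.den) * q.den := by ring
        _ = (q.num : ℚ) * r.den + (r.num : ℚ) * q.den := by
            rw [Rat.mul_den_eq_num, Rat.mul_den_eq_num]
    rw [qsmul_key hA (q+r) _ _ h1, smul_add, add_smul]
    congr 1
    · refine Eq.symm ?_
      calc ((q.den : ℤ) * (r.den : ℤ)) • qsmul hA q a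
          = (r.den : ℤ) • ((q.den : ℤ) • qsmul hA q a) := by
            rw [← mul_smul, mul_comm]
        _ = (r.den : ℤ) • (q.num • a) := by rw [qsmul_spec]
        _ = (q.num * (r.den : ℤ)) • a := by rw [smul_comm, ← mul_smul]
    · refine Eq.symm ?_
      calc ((q.den : ℤ) * (r.den : ℤ)) • qsmul hA r a
          = (q.den : ℤ) • ((r.den : ℤ) • qsmul hA r a) := mul_smul _ _ _
        _ = (q.den : ℤ) • (r.num • a) := by rw [qsmul_spec]
        _ = (r.num * (q.den : ℤ)) • a := by rw [smul_comm, ← mul_smul]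
  zero_smul a := by
    have := qsmul_key hA 0 1 0 (by norm_num) a
    change qsmul hA 0 a = 0
    simpa using this

end RatModule



section OrderLemmas

variable {A : Type u} [AddCommGroup A] [LinearOrder A] [IsOrderedAddMonoid A] [Module ℚ A]

theorem den_smul_qsmul (q : ℚ) (a : A) : (q.den : ℤ) • (q • a) = q.num • a := by
  rw [← Int.cast_smul_eq_zsmul ℚ ((q.den : ℤ)), ← Int.cast_smul_eq_zsmul ℚ q.num, smul_smul]
  congr 1
  push_cast
  rw [mul_comm, Rat.mul_den_eq_num]

theorem qsmul_lt_qsmul_iff {q : ℚ} (hq : 0 < q) {a b : A} : q • a < q • b ↔ a < b := by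
  have hd : (0:ℤ) < (q.den : ℤ) := by exact_mod_cast q.pos
  have hn : (0:ℤ) < q.num := Rat.num_pos.mpr hq
  rw [← zsmul_lt_zsmul_iff_right hd, den_smul_qsmul, den_smul_qsmul,
    zsmul_lt_zsmul_iff_right hn]

theorem qsmul_le_qsmul_iff {q : ℚ} (hq : 0 < q) {a b : A} : q • a ≤ q • b ↔ a ≤ b := by
  rw [← not_lt, ← not_lt, qsmul_lt_qsmul_iff hq]

theorem qsmul_pos_iff {q : ℚ} (hq : 0 < q) {a : A} : 0 < q • a ↔ 0 < a := by
  have := qsmul_lt_qsmul_iff (A := A) hq (a := 0) (b := a)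
  rwa [smul_zero] at this

theorem qsmul_lt_qsmul_iff_neg {q : ℚ} (hq : q < 0) {a b : A} : q • a < q • b ↔ b < a := by
  have h : (0:ℚ) < -q := by linarith
  have h2 := qsmul_lt_qsmul_iff (A := A) h (a := b) (b := a)
  rw [neg_smul, neg_smul, neg_lt_neg_iff] at h2
  exact h2

theorem qsmul_le_qsmul_iff_neg {q : ℚ} (hq : q < 0) {a b : A} : q • a ≤ q • b ↔ b ≤ a := by
  rw [← not_lt, ← not_lt, qsmul_lt_qsmul_iff_neg hq]

theorem qsmul_neg_of_pos {q : ℚ} (hq : q < 0) {a : A} (ha : 0 < a) : q • a < 0 := by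
  have := (qsmul_lt_qsmul_iff_neg (A := A) hq (a := a) (b := 0)).mpr ha
  rwa [smul_zero] at this

end OrderLemmas

section Cone

variable {A : Type u} [AddCommGroup A] [LinearOrder A] [IsOrderedAddMonoid A] [Module ℚ A]

/-- positivity predicate on `A × ℚ` determined by a downward-closed set `D`:
`(a, q)` represents `a + q·b` where `b` realizes the cut of `D`. -/
def posP (D : Set A) (x : A × ℚ) : Prop :=
  (x.2 = 0 ∧ 0 < x.1) ∨ (x.2 ≠ 0 ∧ (0 < x.2 ↔ -(x.2⁻¹ • x.1) ∈ D))

theorem crit_smul {q : ℚ} (hq : q ≠ 0) (a : A) : q • (-(q⁻¹ • a)) = -a := by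
  rw [smul_neg, smul_smul, mul_inv_cancel₀ hq, one_smul]

theorem crit_add {q q' : ℚ} (hq : q ≠ 0) (hq' : q' ≠ 0) (hs : q + q' ≠ 0) (a a' : A) :
    (q + q') • (-((q + q')⁻¹ • (a + a'))) = q • (-(q⁻¹ • a)) + q' • (-(q'⁻¹ • a')) := by
  rw [crit_smul hs, crit_smul hq, crit_smul hq', neg_add]

variable {D : Set A} (hD : ∀ s t : A, s ≤ t → t ∈ D → s ∈ D)

include hD

private theorem posP_add_mixed {a a' : A} {q q' : ℚ} (hq : 0 < q) (hq' : q' < 0)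
    (hx : posP D (a, q)) (hy : posP D (a', q')) : posP D ((a, q) + (a', q')) := by
  have hqne : q ≠ 0 := ne_of_gt hq
  have hq'ne : q' ≠ 0 := ne_of_lt hq'
  have hc₁D : -(q⁻¹ • a) ∈ D := by
    rcases hx with ⟨h0, _⟩ | ⟨_, hiff⟩
    · exact absurd h0 hqne
    · exact hiff.mp hq
  have hc₂D : -(q'⁻¹ • a') ∉ D := by
    rcases hy with ⟨h0, _⟩ | ⟨_, hiff⟩
    · exact absurd h0 hq'ne
    · exact fun hmem => absurd (hiff.mpr hmem) (not_lt.mpr (le_of_lt hq'))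
  have hc12 : -(q⁻¹ • a) < -(q'⁻¹ • a') := by
    by_contra hcon
    exact hc₂D (hD _ _ (not_lt.mp hcon) hc₁D)
  rcases lt_trichotomy (q + q') 0 with hs | hs | hs
  · -- sum negative : need crit of sum ∉ D
    have hsne : q + q' ≠ 0 := ne_of_lt hs
    right
    refine ⟨hsne, ?_⟩
    have key : -(q'⁻¹ • a') < -((q + q')⁻¹ • (a + a')) := by
      rw [← qsmul_lt_qsmul_iff_neg hs, crit_add hqne hq'ne hsne, add_smul]
      exact add_lt_add_left ((qsmul_lt_qsmul_iff hq).mpr hc12) _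
    constructor
    · intro h0; exact absurd h0 (not_lt.mpr (le_of_lt hs))
    · intro hmem
      exact absurd (hD _ _ (le_of_lt key) hmem) hc₂D
  · -- sum zero : need first coordinate positive
    left
    refine ⟨by simpa using hs, ?_⟩
    have h2 : q • -(q'⁻¹ • a') = a' := by
      rw [show q = -q' by linarith, neg_smul, crit_smul hq'ne, neg_neg]
    have hval : q • (-(q'⁻¹ • a') - -(q⁻¹ • a)) = a + a' := by
      rw [smul_sub, h2, crit_smul hqne, sub_neg_eq_add, add_comm]
    show (0 : A) < ((a, q) + (a', q')).1
    show (0 : A) < a + a'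
    rw [← hval]
    exact (qsmul_pos_iff hq).mpr (sub_pos.mpr hc12)
  · -- sum positive : need crit of sum ∈ D
    have hsne : q + q' ≠ 0 := ne_of_gt hs
    right
    refine ⟨hsne, ?_⟩
    have key : -((q + q')⁻¹ • (a + a')) < -(q⁻¹ • a) := by
      rw [← qsmul_lt_qsmul_iff hs, crit_add hqne hq'ne hsne, add_smul]
      exact add_lt_add_right ((qsmul_lt_qsmul_iff_neg hq').mpr hc12) _
    exact ⟨fun _ => hD _ _ (le_of_lt key) hc₁D, fun _ => hs⟩

private theorem posP_add_zero_left {a a' : A} {q' : ℚ} (hq' : q' ≠ 0)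
    (ha : 0 < a) (hy : posP D (a', q')) : posP D ((a, 0) + (a', q')) := by
  have hsum : (a, (0:ℚ)) + (a', q') = (a + a', q') := by simp
  rw [hsum]
  have hcrit : -(q'⁻¹ • (a + a')) = -(q'⁻¹ • a') + -(q'⁻¹ • a) := by
    rw [smul_add, neg_add, add_comm]
  rcases hy with ⟨h0, _⟩ | ⟨_, hiff⟩
  · exact absurd h0 hq'
  right
  refine ⟨hq', ?_⟩
  rcases lt_trichotomy q' 0 with hneg | h0 | hpos
  · -- q' < 0 : c₂ ∉ D, and new crit > c₂
    have hc₂D : -(q'⁻¹ • a') ∉ D := fun hmem =>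
      absurd (hiff.mpr hmem) (not_lt.mpr (le_of_lt hneg))
    have hinvneg : q'⁻¹ < 0 := inv_neg''.mpr hneg
    have hgt : -(q'⁻¹ • a') < -(q'⁻¹ • (a + a')) := by
      rw [hcrit]
      have h2 : q'⁻¹ • a < 0 := qsmul_neg_of_pos hinvneg ha
      simpa using add_lt_add_left (neg_pos.mpr h2) (-(q'⁻¹ • a'))
    exact ⟨fun h0' => absurd h0' (not_lt.mpr (le_of_lt hneg)),
      fun hmem => absurd (hD _ _ (le_of_lt hgt) hmem) hc₂D⟩
  · exact absurd h0 hq'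
  · -- q' > 0 : c₂ ∈ D, new crit < c₂
    have hc₂D : -(q'⁻¹ • a') ∈ D := hiff.mp hpos
    have hinvpos : 0 < q'⁻¹ := inv_pos.mpr hpos
    have hlt : -(q'⁻¹ • (a + a')) < -(q'⁻¹ • a') := by
      rw [hcrit]
      have h2 : 0 < q'⁻¹ • a := (qsmul_pos_iff hinvpos).mpr ha
      simpa using add_lt_add_left (neg_lt_zero.mpr h2) (-(q'⁻¹ • a'))
    exact ⟨fun _ => hD _ _ (le_of_lt hlt) hc₂D, fun _ => hpos⟩

theorem posP_add {x y : A × ℚ} (hx : posP D x) (hy : posP D y) : posP D (x + y) := by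
  obtain ⟨a, q⟩ := x
  obtain ⟨a', q'⟩ := y
  rcases eq_or_ne q 0 with hq0 | hqne
  · rcases eq_or_ne q' 0 with hq'0 | hq'ne
    · -- both zero
      subst hq0; subst hq'0
      rcases hx with ⟨_, ha⟩ | ⟨h, _⟩
      · rcases hy with ⟨_, ha'⟩ | ⟨h, _⟩
        · exact Or.inl ⟨by simp, by simpa using add_pos ha ha'⟩
        · exact absurd rfl h
      · exact absurd rfl h
    · subst hq0
      rcases hx with ⟨_, ha⟩ | ⟨h, _⟩
      · exact posP_add_zero_left hD hq'ne ha hy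
      · exact absurd rfl h
  · rcases eq_or_ne q' 0 with hq'0 | hq'ne
    · subst hq'0
      rcases hy with ⟨_, ha'⟩ | ⟨h, _⟩
      · rw [add_comm]; exact posP_add_zero_left hD hqne ha' hx
      · exact absurd rfl h
    · rcases lt_trichotomy q 0 with hqneg | h | hqpos
      · rcases lt_trichotomy q' 0 with hq'neg | h' | hq'pos
        · -- both negative
          have hqD : -(q⁻¹ • a) ∉ D := by
            rcases hx with ⟨h0, _⟩ | ⟨_, hiff⟩
            · exact absurd h0 hqne
            · exact fun hmem => absurd (hiff.mpr hmem) (not_lt.mpr (le_of_lt hqneg))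
          have hq'D : -(q'⁻¹ • a') ∉ D := by
            rcases hy with ⟨h0, _⟩ | ⟨_, hiff⟩
            · exact absurd h0 hq'ne
            · exact fun hmem => absurd (hiff.mpr hmem) (not_lt.mpr (le_of_lt hq'neg))
          have hs : q + q' < 0 := by linarith
          have hsne : q + q' ≠ 0 := ne_of_lt hs
          right
          refine ⟨hsne, ?_⟩
          have hmD : min (-(q⁻¹ • a)) (-(q'⁻¹ • a')) ∉ D := by
            rcases min_choice (-(q⁻¹ • a)) (-(q'⁻¹ • a')) with h | h <;> rw [h]
            exacts [hqD, hq'D]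
          have key : min (-(q⁻¹ • a)) (-(q'⁻¹ • a')) ≤ -((q + q')⁻¹ • (a + a')) := by
            rw [← qsmul_le_qsmul_iff_neg hs, crit_add hqne hq'ne hsne, add_smul]
            have h1 : q • (-(q⁻¹ • a)) ≤ q • (min (-(q⁻¹ • a)) (-(q'⁻¹ • a'))) :=
              (qsmul_le_qsmul_iff_neg hqneg).mpr (min_le_left _ _)
            have h2 : q' • (-(q'⁻¹ • a')) ≤ q' • (min (-(q⁻¹ • a)) (-(q'⁻¹ • a'))) :=
              (qsmul_le_qsmul_iff_neg hq'neg).mpr (min_le_right _ _)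
            exact add_le_add h1 h2
          exact ⟨fun h0 => absurd h0 (not_lt.mpr (le_of_lt hs)),
            fun hmem => absurd (hD _ _ key hmem) hmD⟩
        · exact absurd h' hq'ne
        · rw [add_comm]
          exact posP_add_mixed hD hq'pos hqneg hy hx
      · exact absurd h hqne
      · rcases lt_trichotomy q' 0 with hq'neg | h' | hq'pos
        · exact posP_add_mixed hD hqpos hq'neg hx hy
        · exact absurd h' hq'ne
        · -- both positive
          have hqD : -(q⁻¹ • a) ∈ D := by
            rcases hx with ⟨h0, _⟩ | ⟨_, hiff⟩
            · exact absurd h0 hqne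
            · exact hiff.mp hqpos
          have hq'D : -(q'⁻¹ • a') ∈ D := by
            rcases hy with ⟨h0, _⟩ | ⟨_, hiff⟩
            · exact absurd h0 hq'ne
            · exact hiff.mp hq'pos
          have hs : 0 < q + q' := by linarith
          have hsne : q + q' ≠ 0 := ne_of_gt hs
          right
          refine ⟨hsne, ?_⟩
          have hMD : max (-(q⁻¹ • a)) (-(q'⁻¹ • a')) ∈ D := by
            rcases max_choice (-(q⁻¹ • a)) (-(q'⁻¹ • a')) with h | h <;> rw [h]
            exacts [hqD, hq'D]
          have key : -((q + q')⁻¹ • (a + a')) ≤ max (-(q⁻¹ • a)) (-(q'⁻¹ • a')) := by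
            rw [← qsmul_le_qsmul_iff hs, crit_add hqne hq'ne hsne, add_smul]
            have h1 : q • (-(q⁻¹ • a)) ≤ q • (max (-(q⁻¹ • a)) (-(q'⁻¹ • a'))) :=
              (qsmul_le_qsmul_iff hqpos).mpr (le_max_left _ _)
            have h2 : q' • (-(q'⁻¹ • a')) ≤ q' • (max (-(q⁻¹ • a)) (-(q'⁻¹ • a'))) :=
              (qsmul_le_qsmul_iff hq'pos).mpr (le_max_right _ _)
            exact add_le_add h1 h2
          exact ⟨fun _ => hD _ _ key hMD, fun _ => hs⟩

end Cone


section Stab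
variable {A : Type u} [AddCommGroup A] [LinearOrder A] [IsOrderedAddMonoid A] {D : Set A}

theorem stab_zero : (0 : A) ∈ cutStabilizer D := by
  simp [cutStabilizer]

theorem stab_add_mem {h t : A} (hh : h ∈ cutStabilizer D) (ht : t ∈ D) : t + h ∈ D := by
  have : h + t ∈ (fun d => h + d) '' D := ⟨t, ht, rfl⟩
  rw [hh] at this
  rwa [add_comm]

end Stab

section Forward
variable {A : Type u} {B : Type v} [AddCommGroup A] [LinearOrder A] [IsOrderedAddMonoid A]
  [AddCommGroup B] [LinearOrder B] [IsOrderedAddMonoid B]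

theorem forwardDir (Xm : Set A) (hXpos : ∀ a ∈ Xm, 0 ≤ a)
    (hdc : ∀ a b : A, 0 ≤ a → a ≤ b → b ∈ Xm → a ∈ Xm)
    (e : A →+ B) (hie : IsIExtension e) (b : B) (hb0 : 0 ≤ b)
    (hbnr : b ∉ Set.range ⇑e) (hcut : {a : A | 0 ≤ a ∧ e a ≤ b} = Xm) :
    (∀ a ∈ Xm, ∃ a' ∈ Xm, ∀ h ∈ cutStabilizer (Xm ∪ {x : A | x < 0}), a + h < a') ∧
      (∀ a : A, 0 ≤ a → a ∉ Xm →
        ∃ a' : A, 0 ≤ a' ∧ a' ∉ Xm ∧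
          ∀ h ∈ cutStabilizer (Xm ∪ {x : A | x < 0}), a' + h < a) := by
  obtain ⟨hmono, hiext⟩ := hie
  set D : Set A := Xm ∪ {x : A | x < 0} with hDdef
  have hcut' : ∀ t : A, 0 ≤ t → (e t ≤ b ↔ t ∈ Xm) := by
    intro t ht
    constructor
    · intro h; exact hcut ▸ (⟨ht, h⟩ : t ∈ {a : A | 0 ≤ a ∧ e a ≤ b})
    · intro h
      have : t ∈ {a : A | 0 ≤ a ∧ e a ≤ b} := hcut.symm ▸ h
      exact this.2
  have hneq : ∀ t : A, e t ≠ b := fun t h => hbnr ⟨t, h⟩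
  have hDiff : ∀ t : A, e t ≤ b ↔ t ∈ D := by
    intro t
    rcases lt_or_ge t 0 with h | h
    · constructor
      · intro _; exact Or.inr h
      · intro _
        calc e t ≤ e 0 := hmono.monotone h.le
          _ = 0 := map_zero e
          _ ≤ b := hb0
    · rw [hcut' t h]
      constructor
      · exact Or.inl
      · rintro (hx | hx)
        · exact hx
        · exact absurd hx (not_lt.mpr h)
  have hDdc : ∀ s t : A, s ≤ t → t ∈ D → s ∈ D := by
    intro s t hst ht
    rcases lt_or_ge s 0 with h | h
    · exact Or.inr h
    · rcases ht with ht | ht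
      · exact Or.inl (hdc s t h hst ht)
      · exact absurd (lt_of_le_of_lt hst ht) (not_lt.mpr h)
  have hle_e : ∀ s t : A, s ≤ t ↔ e s ≤ e t := fun s t => (hmono.le_iff_le).symm
  -- main extraction from the i-extension property
  have hmain : ∀ c : B, 0 < c → ∃ z : A, 0 ≤ z ∧ e z ≤ c ∧ c < e (z + z) := by
    intro c hc
    have h2 := hiext c hc
    push_neg at h2
    obtain ⟨x, y, hx, hy, hne⟩ := h2
    have hx0 : 0 ≤ x := by
      rw [hle_e 0 x, map_zero]; exact hx.1
    have hy0 : 0 ≤ y := by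
      rw [hle_e 0 y, map_zero]; exact hy.1
    have hxy0 : 0 ≤ e (x + y) := by
      rw [← map_zero e, ← hle_e 0 (x + y)]
      exact add_nonneg hx0 hy0
    have hgt : c < e (x + y) := hne hxy0
    refine ⟨max x y, le_trans hx0 (le_max_left _ _), ?_, ?_⟩
    · rcases max_choice x y with h | h <;> rw [h]
      exacts [hx.2, hy.2]
    · refine lt_of_lt_of_le hgt (hmono.monotone ?_)
      exact add_le_add (le_max_left _ _) (le_max_right _ _)
  constructor
  · -- no max in Xm mod H
    intro a ha
    have ha0 : 0 ≤ a := hXpos a ha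
    have hab : e a < b := lt_of_le_of_ne ((hcut' a ha0).mpr ha) (hneq a)
    obtain ⟨z, hz0, hz1, hz2⟩ := hmain (b - e a) (sub_pos.mpr hab)
    refine ⟨a + z, ?_, ?_⟩
    · rw [← hcut' (a + z) (add_nonneg ha0 hz0)]
      rw [map_add]
      calc e a + e z ≤ e a + (b - e a) := add_le_add_right hz1 _
        _ = b := by abel
    · intro h hh
      by_contra hcon
      have hzh : z ≤ h := by
        have := not_lt.mp hcon
        exact (add_le_add_iff_left a).mp this
      have hmem : a + (z + z) ∈ D := by
        refine hDdc _ ((a + h) + h) ?_ ?_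
        · have : z + z ≤ h + h := add_le_add hzh hzh
          calc a + (z + z) ≤ a + (h + h) := add_le_add_right this _
            _ = (a + h) + h := by abel
        · exact stab_add_mem hh (stab_add_mem hh (Or.inl ha))
      have : e (a + (z + z)) ≤ b := (hDiff _).mpr hmem
      rw [map_add] at this
      have hb2 : b < e a + e (z + z) := by
        have := add_lt_add_right hz2 (e a)
        calc b = e a + (b - e a) := by abel
          _ < e a + e (z + z) := this
      exact absurd (lt_of_lt_of_le hb2 this) (lt_irrefl b)
  · -- no min in the complement mod H
    intro a ha0 ha
    have hab : b < e a := by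
      rcases lt_or_ge b (e a) with h | h
      · exact h
      · exact absurd ((hcut' a ha0).mp h) ha
    obtain ⟨z, hz0, hz1, hz2⟩ := hmain (e a - b) (sub_pos.mpr hab)
    have haz : b ≤ e (a - z) := by
      rw [map_sub]
      calc b = e a - (e a - b) := by abel
        _ ≤ e a - e z := by
            exact sub_le_sub_left hz1 _
    have hazlt : b < e (a - z) := lt_of_le_of_ne haz (Ne.symm (hneq _))
    have haznD : a - z ∉ D := by
      intro hmem
      exact absurd (lt_of_le_of_lt ((hDiff _).mpr hmem) hazlt) (lt_irrefl _)
    have haz0 : 0 ≤ a - z := by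
      rcases lt_or_ge (a - z) 0 with h | h
      · exact absurd (Or.inr h) haznD
      · exact h
    refine ⟨a - z, haz0, ?_, ?_⟩
    · intro hmem; exact haznD (Or.inl hmem)
    · intro h hh
      by_contra hcon
      have hzh : z ≤ h := by
        have h1 : a ≤ a - z + h := not_lt.mp hcon
        have h2 : a + z ≤ a + h := by
          calc a + z ≤ (a - z + h) + z := add_le_add_left h1 z
            _ = a + h := by abel
        exact (add_le_add_iff_left a).mp h2
      have hmem : a - (z + z) ∈ D := by
        rw [← hDiff, map_sub]
        refine le_of_lt ?_
        calc e a - e (z + z) < e a - (e a - b) := sub_lt_sub_left hz2 _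
          _ = b := by abel
      have hmem2 : a ∈ D := by
        refine hDdc a ((a - (z + z)) + h + h) ?_ ?_
        · have : z + z ≤ h + h := add_le_add hzh hzh
          calc a = (a - (z + z)) + (z + z) := by abel
            _ ≤ (a - (z + z)) + (h + h) := add_le_add_right this _
            _ = (a - (z + z)) + h + h := by abel
        · exact stab_add_mem hh (stab_add_mem hh hmem)
      rcases hmem2 with h | h
      · exact ha h
      · exact absurd h (not_lt.mpr ha0)
  
end Forward


section Cone2
variable {A : Type u} [AddCommGroup A] [LinearOrder A] [IsOrderedAddMonoid A] [Module ℚ A]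

theorem crit_neg (q : ℚ) (a : A) : -((-q)⁻¹ • (-a)) = -(q⁻¹ • a) := by
  rw [inv_neg, neg_smul, smul_neg, neg_neg]

theorem posP_zero_false {D : Set A} : ¬ posP D (0 : A × ℚ) := by
  rintro (⟨_, h⟩ | ⟨h, _⟩)
  · exact lt_irrefl _ h
  · exact h rfl

theorem posP_neg_elim {D : Set A} {x : A × ℚ} (hx : posP D x) (hx' : posP D (-x)) : False := by
  obtain ⟨a, q⟩ := x
  have hneg : (-(a, q) : A × ℚ) = (-a, -q) := rfl
  rw [hneg] at hx'
  rcases hx with ⟨hq0, ha⟩ | ⟨hqne, hiff⟩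
  · rcases hx' with ⟨_, ha'⟩ | ⟨hqne', _⟩
    · simp only at ha ha'
      exact absurd ha (not_lt.mpr (le_of_lt (by simpa using ha')))
    · simp only at hqne' hq0
      exact hqne' (by rw [hq0]; ring)
  · rcases hx' with ⟨hq0', _⟩ | ⟨_, hiff'⟩
    · simp only at hq0' hqne
      exact hqne (by linarith [neg_eq_zero.mp hq0'])
    · simp only at hiff hiff'
      rw [crit_neg] at hiff'
      rcases lt_trichotomy q 0 with h | h | h
      · exact absurd (hiff'.mp (by linarith)) (fun hm => absurd (hiff.mpr hm) (not_lt.mpr h.le))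
      · exact hqne h
      · exact absurd (hiff.mp h) (fun hm => absurd (hiff'.mpr hm) (by simp; linarith))

theorem posP_total {D : Set A} (x : A × ℚ) (hx : x ≠ 0) : posP D x ∨ posP D (-x) := by
  obtain ⟨a, q⟩ := x
  have hneg : (-(a, q) : A × ℚ) = (-a, -q) := rfl
  rcases eq_or_ne q 0 with hq0 | hqne
  · subst hq0
    have hane : a ≠ 0 := by
      intro h; exact hx (by rw [h]; rfl)
    rcases lt_trichotomy a 0 with h | h | h
    · right; rw [hneg]; exact Or.inl ⟨by simp, by simpa using h⟩
    · exact absurd h hane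
    · left; exact Or.inl ⟨rfl, h⟩
  · by_cases hmem : -(q⁻¹ • a) ∈ D
    · rcases lt_trichotomy q 0 with h | h | h
      · right; rw [hneg]; right
        refine ⟨by simpa using hqne, ?_⟩
        rw [crit_neg]
        exact ⟨fun _ => hmem, fun _ => by simpa using h⟩
      · exact absurd h hqne
      · left; right; exact ⟨hqne, ⟨fun _ => hmem, fun _ => h⟩⟩
    · rcases lt_trichotomy q 0 with h | h | h
      · left; right
        exact ⟨hqne, ⟨fun h' => absurd h' (not_lt.mpr h.le), fun hm => absurd hm hmem⟩⟩
      · exact absurd h hqne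
      · right; rw [hneg]; right
        refine ⟨by simpa using hqne, ?_⟩
        rw [crit_neg]
        exact ⟨fun h' => absurd h' (by simp; linarith), fun hm => absurd hm hmem⟩

/-- the cone of nonnegative elements in `A × ℚ` induced by the cut `D`. -/
def cone (D : Set A) (hD : ∀ s t : A, s ≤ t → t ∈ D → s ∈ D) : AddGroupCone (A × ℚ) where
  carrier := {x | posP D x ∨ x = 0}
  add_mem' := by
    rintro x y (hx | hx) (hy | hy)
    · exact Or.inl (posP_add hD hx hy)
    · subst hy; simpa using Or.inl hx
    · subst hx; simpa using Or.inl hy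
    · subst hx; subst hy; simp
  zero_mem' := Or.inr rfl
  eq_zero_of_mem_of_neg_mem' := by
    rintro x (hx | hx) (hy | hy)
    · exact absurd hy (fun h => posP_neg_elim hx h)
    · simpa using hy
    · exact hx
    · exact hx

theorem cone_isMax (D : Set A) (hD : ∀ s t : A, s ≤ t → t ∈ D → s ∈ D) :
    HasMemOrNegMem (cone D hD) where
  mem_or_neg_mem := by
    intro x
    rcases eq_or_ne x 0 with h | h
    · exact Or.inl (Or.inr h)
    · rcases posP_total (D := D) x h with h' | h'
      · exact Or.inl (Or.inl h')
      · exact Or.inr (Or.inl h')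

end Cone2

section Backward

variable {A : Type u} [AddCommGroup A] [LinearOrder A] [IsOrderedAddMonoid A] [Module ℚ A]

theorem backward (Xm : Set A) (hXpos : ∀ a ∈ Xm, 0 ≤ a)
    (hdc : ∀ a b : A, 0 ≤ a → a ≤ b → b ∈ Xm → a ∈ Xm)
    (hrhs1 : ∀ a ∈ Xm, ∃ a' ∈ Xm, ∀ h ∈ cutStabilizer (Xm ∪ {x : A | x < 0}), a + h < a')
    (hrhs2 : ∀ a : A, 0 ≤ a → a ∉ Xm → ∃ a' : A, 0 ≤ a' ∧ a' ∉ Xm ∧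
        ∀ h ∈ cutStabilizer (Xm ∪ {x : A | x < 0}), a' + h < a) :
    ∃ (B : Type u) (_ : AddCommGroup B) (_ : LinearOrder B) (_ : IsOrderedAddMonoid B),
        NatDivisible B ∧
        ∃ e : A →+ B, IsIExtension e ∧
          ∃ b : B, 0 ≤ b ∧ b ∉ Set.range ⇑e ∧ {a : A | 0 ≤ a ∧ e a ≤ b} = Xm := by
  set D : Set A := Xm ∪ {x : A | x < 0} with hDdef
  have hDdc : ∀ s t : A, s ≤ t → t ∈ D → s ∈ D := by
    intro s t hst ht
    rcases lt_or_ge s 0 with h | h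
    · exact Or.inr h
    · rcases ht with ht | ht
      · exact Or.inl (hdc s t h hst ht)
      · exact absurd (lt_of_le_of_lt hst ht) (not_lt.mpr h)
  have h0Xm : (0 : A) ∈ Xm := by
    by_contra h
    obtain ⟨a', ha'0, _, ha'lt⟩ := hrhs2 0 le_rfl h
    exact absurd (by simpa using ha'lt 0 stab_zero) (not_lt.mpr ha'0)
  have hstar1 : ∀ t ∈ D, ∃ t' ∈ D, ∀ h ∈ cutStabilizer D, t + h < t' := by
    intro t ht
    rcases ht with ht | ht
    · obtain ⟨a', ha', hbound⟩ := hrhs1 t ht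
      exact ⟨a', Or.inl ha', hbound⟩
    · obtain ⟨a', ha', hbound⟩ := hrhs1 0 h0Xm
      refine ⟨a', Or.inl ha', fun h hh => ?_⟩
      calc t + h < 0 + h := add_lt_add_left ht h
        _ < a' := by simpa using hbound h hh
  have hstar2 : ∀ t, t ∉ D → ∃ t', t' ∉ D ∧ ∀ h ∈ cutStabilizer D, t' + h < t := by
    intro t ht
    have ht0 : 0 ≤ t := not_lt.mp (fun h => ht (Or.inr h))
    have htXm : t ∉ Xm := fun h => ht (Or.inl h)
    obtain ⟨a', ha'0, ha'Xm, hbound⟩ := hrhs2 t ht0 htXm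
    refine ⟨a', ?_, hbound⟩
    rintro (h | h)
    · exact ha'Xm h
    · exact absurd h (not_lt.mpr ha'0)
  -- the ordered group B = A × ℚ
  haveI hmax := cone_isMax D hDdc
  letI := Classical.decPred (· ∈ cone D hDdc)
  letI instB : LinearOrder (A × ℚ) := LinearOrder.mkOfAddGroupCone (cone D hDdc)
  haveI instOM : IsOrderedAddMonoid (A × ℚ) := IsOrderedAddMonoid.mkOfCone (cone D hDdc)
  have hle : ∀ x y : A × ℚ, x ≤ y ↔ (posP D (y - x) ∨ y - x = 0) := fun x y => Iff.rfl
  have hlt : ∀ x y : A × ℚ, x < y ↔ posP D (y - x) := by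
    intro x y
    rw [lt_iff_le_not_ge, hle, hle]
    constructor
    · rintro ⟨(h | h), hn⟩
      · exact h
      · exfalso
        apply hn
        right
        rw [sub_eq_zero] at h ⊢
        exact h.symm
    · intro h
      refine ⟨Or.inl h, ?_⟩
      rintro (h' | h')
      · exact posP_neg_elim h (by rwa [← neg_sub] at h')
      · rw [sub_eq_zero] at h'
        subst h'
        rw [sub_self] at h
        exact posP_zero_false h
  refine ⟨A × ℚ, inferInstance, instB, instOM, ?_, ?_⟩
  · -- divisibility of B
    intro k hk p
    obtain ⟨a, r⟩ := p
    have hkq : ((k : ℚ)) ≠ 0 := by positivity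
    refine ⟨((k : ℚ)⁻¹ • a, r / k), ?_⟩
    have h1 : k • (((k : ℚ)⁻¹ • a, r / k) : A × ℚ)
        = (k • ((k : ℚ)⁻¹ • a), k • (r / k)) := rfl
    rw [h1]
    refine Prod.ext ?_ ?_
    · show k • ((k : ℚ)⁻¹ • a) = a
      rw [← Nat.cast_smul_eq_nsmul ℚ, smul_smul, mul_inv_cancel₀ hkq, one_smul]
    · show k • (r / k) = r
      rw [nsmul_eq_mul]
      field_simp
  set e : A →+ A × ℚ := AddMonoidHom.inl A ℚ with hedef
  have he : ∀ a : A, e a = (a, 0) := fun _ => rfl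
  have hemono : StrictMono ⇑e := by
    intro x y hxy
    rw [hlt, he, he]
    have hsub : ((y, (0:ℚ)) - (x, 0) : A × ℚ) = (y - x, 0) := by simp
    rw [hsub]
    exact Or.inl ⟨rfl, sub_pos.mpr hxy⟩
  have h0le : ∀ x : A, 0 ≤ x → (0 : A × ℚ) ≤ e x := by
    intro x hx
    rw [hle, he, sub_zero]
    rcases eq_or_lt_of_le hx with h | h
    · right; rw [← h]; rfl
    · exact Or.inl (Or.inl ⟨rfl, h⟩)
  refine ⟨e, ⟨hemono, ?_⟩, ((0:A), (1:ℚ)), ?_, ?_, ?_⟩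
  · -- the i-extension property
    rintro ⟨a₀, q⟩ hb' hclosed
    rw [hlt, sub_zero] at hb'
    rcases eq_or_ne q 0 with hq0 | hqne
    · -- q = 0 : the element is essentially in A
      subst hq0
      have ha₀ : 0 < a₀ := by
        rcases hb' with ⟨_, h⟩ | ⟨h, _⟩
        · exact h
        · exact absurd rfl h
      have heq : e a₀ ≤ ((a₀, 0) : A × ℚ) := le_of_eq (he a₀)
      obtain ⟨_, habs⟩ := hclosed a₀ a₀ ⟨h0le a₀ ha₀.le, heq⟩ ⟨h0le a₀ ha₀.le, heq⟩
      rw [he, hle] at habs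
      have hsub : (((a₀:A), (0:ℚ)) - (a₀ + a₀, 0) : A × ℚ) = (-a₀, 0) := by
        simp
      rw [hsub] at habs
      rcases habs with (⟨_, h⟩ | ⟨h, _⟩) | h
      · exact absurd h (by simpa using ha₀.le)
      · exact h rfl
      · have : -a₀ = 0 := congrArg Prod.fst h
        exact absurd this (by simpa using ha₀.ne')
    · -- q ≠ 0 : the main case
      have hexle : ∀ x : A, e x ≤ ((a₀, q) : A × ℚ) ↔ (0 < q ↔ q⁻¹ • (x - a₀) ∈ D) := by
        intro x
        rw [he, hle]
        have hsub : (((a₀:A), q) - (x, 0) : A × ℚ) = (a₀ - x, q) := by simp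
        rw [hsub]
        constructor
        · rintro ((⟨h, _⟩ | ⟨_, h⟩) | h)
          · exact absurd h hqne
          · rwa [← smul_neg, neg_sub] at h
          · exact absurd (congrArg Prod.snd h) hqne
        · intro h
          refine Or.inl (Or.inr ⟨hqne, ?_⟩)
          rwa [← smul_neg, neg_sub]
      set t₀ : A := q⁻¹ • (0 - a₀) with ht₀def
      have hqt₀ : q • t₀ = 0 - a₀ := by
        rw [ht₀def, smul_smul, mul_inv_cancel₀ hqne, one_smul]
      have hψ0 : q • t₀ + a₀ = 0 := by rw [hqt₀]; abel
      have hφψ : ∀ s : A, q⁻¹ • ((q • s + a₀) - a₀) = s := by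
        intro s
        rw [add_sub_cancel_right, smul_smul, inv_mul_cancel₀ hqne, one_smul]
      have hψadd : ∀ s₁ s₂ : A, (q • s₁ + a₀) + (q • s₂ + a₀) = q • (s₁ + s₂ - t₀) + a₀ := by
        intro s₁ s₂
        rw [smul_sub, smul_add, hqt₀]
        abel
      rcases lt_trichotomy q 0 with hq | hq | hq
      · -- q < 0
        have hexle' : ∀ x : A, e x ≤ ((a₀, q) : A × ℚ) ↔ q⁻¹ • (x - a₀) ∉ D := fun x =>
          (hexle x).trans ⟨fun h hp => absurd (h.mpr hp) (not_lt.mpr hq.le),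
            fun hnp => ⟨fun h' => absurd h' (not_lt.mpr hq.le), fun hp => absurd hp hnp⟩⟩
        have ht₀nD : t₀ ∉ D := by
          rcases hb' with ⟨h, _⟩ | ⟨_, hiff⟩
          · exact absurd h hqne
          · intro hmem
            apply not_lt.mpr hq.le
            apply hiff.mpr
            rw [ht₀def, zero_sub, smul_neg] at hmem
            exact hmem
        have hminus : ∀ s₁ s₂ : A, s₁ ∉ D → s₂ ∉ D → s₁ ≤ t₀ → s₂ ≤ t₀ →
            s₁ + s₂ - t₀ ∉ D := by
          intro s₁ s₂ h₁ h₂ hle₁ hle₂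
          have hx0 : ∀ s : A, s ≤ t₀ → 0 ≤ q • s + a₀ := by
            intro s hs
            have h3 := (qsmul_le_qsmul_iff_neg hq).mpr hs
            calc (0:A) = q • t₀ + a₀ := hψ0.symm
              _ ≤ q • s + a₀ := add_le_add_left h3 a₀
          have hmem : ∀ s : A, s ∉ D → e (q • s + a₀) ≤ ((a₀, q) : A × ℚ) := by
            intro s hs
            rw [hexle', hφψ]
            exact hs
          obtain ⟨_, hres⟩ := hclosed (q • s₁ + a₀) (q • s₂ + a₀)
            ⟨h0le _ (hx0 s₁ hle₁), hmem s₁ h₁⟩ ⟨h0le _ (hx0 s₂ hle₂), hmem s₂ h₂⟩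
          rw [hψadd, hexle', hφψ] at hres
          exact hres
        obtain ⟨u', hu'nD, hu'⟩ := hstar2 t₀ ht₀nD
        have hδpos : 0 < t₀ - u' := sub_pos.mpr (by simpa using hu' 0 stab_zero)
        have hK : ∀ v, v ∉ D → v - (t₀ - u') ∉ D := by
          intro v hv
          by_cases hc : v ≤ t₀
          · have h4 := hminus v u' hv hu'nD hc (le_of_lt (by simpa using hu' 0 stab_zero))
            rwa [show v + u' - t₀ = v - (t₀ - u') from by abel] at h4
          · intro hmem
            apply hu'nD
            refine hDdc u' (v - (t₀ - u')) ?_ hmem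
            have h6 : (0:A) ≤ v - t₀ := sub_nonneg.mpr (not_le.mp hc).le
            calc u' = 0 + u' := (zero_add u').symm
              _ ≤ (v - t₀) + u' := add_le_add_left h6 u'
              _ = v - (t₀ - u') := by abel
        have hδH : t₀ - u' ∈ cutStabilizer D := by
          show (fun d => (t₀ - u') + d) '' D = D
          ext x
          constructor
          · rintro ⟨d, hd, rfl⟩
            show (t₀ - u') + d ∈ D
            by_contra hnd
            have h2 := hK _ hnd
            rw [show (t₀ - u') + d - (t₀ - u') = d from by abel] at h2
            exact h2 hd
          · intro hx
            exact ⟨x - (t₀ - u'), hDdc _ x (sub_le_self x hδpos.le) hx,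
              by show (t₀ - u') + (x - (t₀ - u')) = x; abel⟩
        have hfin := hu' (t₀ - u') hδH
        rw [show u' + (t₀ - u') = t₀ from by abel] at hfin
        exact lt_irrefl t₀ hfin
      · exact absurd hq hqne
      · -- q > 0
        have hexle' : ∀ x : A, e x ≤ ((a₀, q) : A × ℚ) ↔ q⁻¹ • (x - a₀) ∈ D := fun x =>
          (hexle x).trans ⟨fun h => h.mp hq, fun hp => ⟨fun _ => hp, fun _ => hq⟩⟩
        have ht₀D : t₀ ∈ D := by
          rcases hb' with ⟨h, _⟩ | ⟨_, hiff⟩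
          · exact absurd h hqne
          · have h6 := hiff.mp hq
            rw [ht₀def, zero_sub, smul_neg]
            exact h6
        have hplus : ∀ s₁ s₂ : A, s₁ ∈ D → s₂ ∈ D → t₀ ≤ s₁ → t₀ ≤ s₂ →
            s₁ + s₂ - t₀ ∈ D := by
          intro s₁ s₂ h₁ h₂ hle₁ hle₂
          have hx0 : ∀ s : A, t₀ ≤ s → 0 ≤ q • s + a₀ := by
            intro s hs
            have h3 := (qsmul_le_qsmul_iff hq).mpr hs
            calc (0:A) = q • t₀ + a₀ := hψ0.symm
              _ ≤ q • s + a₀ := add_le_add_left h3 a₀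
          have hmem : ∀ s : A, s ∈ D → e (q • s + a₀) ≤ ((a₀, q) : A × ℚ) := by
            intro s hs
            rw [hexle', hφψ]
            exact hs
          obtain ⟨_, hres⟩ := hclosed (q • s₁ + a₀) (q • s₂ + a₀)
            ⟨h0le _ (hx0 s₁ hle₁), hmem s₁ h₁⟩ ⟨h0le _ (hx0 s₂ hle₂), hmem s₂ h₂⟩
          rw [hψadd, hexle', hφψ] at hres
          exact hres
        obtain ⟨t', ht'D, ht'⟩ := hstar1 t₀ ht₀D
        have hδpos : 0 < t' - t₀ := sub_pos.mpr (by simpa using ht' 0 stab_zero)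
        have hδH : t' - t₀ ∈ cutStabilizer D := by
          show (fun d => (t' - t₀) + d) '' D = D
          ext x
          constructor
          · rintro ⟨d, hd, rfl⟩
            show (t' - t₀) + d ∈ D
            by_cases hc : t₀ ≤ d
            · have h7 := hplus d t' hd ht'D hc (le_of_lt (by simpa using ht' 0 stab_zero))
              rw [show (t' - t₀) + d = d + t' - t₀ from by abel]
              exact h7
            · refine hDdc _ t' ?_ ht'D
              have h8 : (t' - t₀) + d ≤ (t' - t₀) + t₀ := (add_lt_add_right (not_le.mp hc) _).le
              calc (t' - t₀) + d ≤ (t' - t₀) + t₀ := h8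
                _ = t' := by abel
          · intro hx
            exact ⟨x - (t' - t₀), hDdc _ x (sub_le_self x hδpos.le) hx,
              by show (t' - t₀) + (x - (t' - t₀)) = x; abel⟩
        have hfin := ht' (t' - t₀) hδH
        rw [show t₀ + (t' - t₀) = t' from by abel] at hfin
        exact lt_irrefl t' hfin
  · -- 0 ≤ b
    rw [hle, sub_zero]
    refine Or.inl (Or.inr ⟨one_ne_zero, iff_of_true one_pos ?_⟩)
    show -(((1:ℚ))⁻¹ • (0:A)) ∈ D
    simp only [smul_zero, neg_zero]
    exact Or.inl h0Xm
  · -- b not in the range of e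
    rintro ⟨x, hx⟩
    have h9 := congrArg Prod.snd hx
    rw [he] at h9
    exact zero_ne_one h9
  · -- the cut of b is Xm
    ext a
    simp only [Set.mem_setOf_eq]
    constructor
    · rintro ⟨ha0, hab⟩
      rw [he, hle] at hab
      rw [show (((0:A), (1:ℚ)) - (a, 0) : A × ℚ) = (-a, 1) from by simp] at hab
      rcases hab with (⟨h, _⟩ | ⟨_, h⟩) | h
      · exact absurd h one_ne_zero
      · have hmem : a ∈ D := by
          have h10 := h.mp one_pos
          simpa using h10
        rcases hmem with hm | hm
        · exact hm
        · exact absurd hm (not_lt.mpr ha0)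
      · exact absurd (congrArg Prod.snd h) (by simp)
    · intro ha
      refine ⟨hXpos a ha, ?_⟩
      rw [he, hle]
      rw [show (((0:A), (1:ℚ)) - (a, 0) : A × ℚ) = (-a, 1) from by simp]
      refine Or.inl (Or.inr ⟨one_ne_zero, iff_of_true one_pos ?_⟩)
      show -(((1:ℚ))⁻¹ • (-a)) ∈ D
      simp only [inv_one, one_smul, neg_neg]
      exact Or.inl ha

end Backward

/-- Lemma C3 of Haskell–Hrushovski–Macpherson.  `A` is a divisible
ordered abelian group, `(X⁻, X⁺)` a cut in `A^{≥0}` (encoded by the lower part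
`Xm = X⁻`, a subset of `A^{≥0}` downward closed within `A^{≥0}`; `X⁺` is its
complement in `A^{≥0}`), `D = X⁻ ∪ A^{<0}` and `H = {h : h + D = D}` the convex
subgroup of the cut.  Then the cut is realized by a new nonnegative element in some
i-extension of `A` iff the image of `X⁻` in `A/H` has no maximal element and the image
of `X⁺` in `A/H` has no minimal element (spelled out elementwise on the right-hand
side). -/
theorem cut_realized_in_iextension_iff (A : Type u) [AddCommGroup A] [LinearOrder A]
    [IsOrderedAddMonoid A]
    (hA : NatDivisible A)
    (Xm : Set A) (hXpos : ∀ a ∈ Xm, 0 ≤ a)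
    (hdc : ∀ a b : A, 0 ≤ a → a ≤ b → b ∈ Xm → a ∈ Xm) :
    (∃ (B : Type u) (_ : AddCommGroup B) (_ : LinearOrder B) (_ : IsOrderedAddMonoid B),
        NatDivisible B ∧
        ∃ e : A →+ B, IsIExtension e ∧
          ∃ b : B, 0 ≤ b ∧ b ∉ Set.range ⇑e ∧ {a : A | 0 ≤ a ∧ e a ≤ b} = Xm) ↔
      ((∀ a ∈ Xm, ∃ a' ∈ Xm, ∀ h ∈ cutStabilizer (Xm ∪ {x : A | x < 0}), a + h < a') ∧
        (∀ a : A, 0 ≤ a → a ∉ Xm →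
          ∃ a' : A, 0 ≤ a' ∧ a' ∉ Xm ∧
            ∀ h ∈ cutStabilizer (Xm ∪ {x : A | x < 0}), a' + h < a)) := by
  constructor
  · rintro ⟨B, instB, instB2, instB3, _, e, hie, b, hb0, hbnr, hcut⟩
    exact forwardDir Xm hXpos hdc e hie b hb0 hbnr hcut
  · rintro ⟨h1, h2⟩
    letI : Module ℚ A := ratModule hA
    exact backward Xm hXpos hdc h1 h2

end Stmt16
end

section
/- Let A be an i-complete divisible ordered abelian group, let X ⊆ A be a downward-closed subset, and let H = {h ∈ A : h + X = X}. Then there exists a ∈ A such that either X = {x ∈ A : there is h ∈ H with x ≤ h + a} or X = {x ∈ A : x < h + a for all h ∈ H}. -/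
universe u v

namespace Stmt17

/-- The (ordered abelian) group `A` is divisible: every element is divisible by every
positive natural number. -/
def NatDivisible (A : Type u) [AddCommGroup A] : Prop :=
  ∀ k : ℕ, 0 < k → ∀ a : A, ∃ b : A, k • b = a

/-- The order embedding `e : A → B` is an i-extension: `e` is a strictly monotone group
embedding, and there is no `b ∈ B` with `b > 0` such that the cut
`ct_A(b) = {a ∈ A : 0 ≤ e a ≤ b}` is closed under addition. -/
def IsIExtension {A : Type u} {B : Type v} [AddCommGroup A] [LinearOrder A] [IsOrderedAddMonoid A]
    [AddCommGroup B] [LinearOrder B] [IsOrderedAddMonoid B] (e : A →+ B) : Prop :=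
  StrictMono ⇑e ∧
    ∀ b : B, 0 < b →
      ¬ (∀ x y : A, (0 ≤ e x ∧ e x ≤ b) → (0 ≤ e y ∧ e y ≤ b) →
          (0 ≤ e (x + y) ∧ e (x + y) ≤ b))
/-- `A` is i-complete: every i-extension of `A` (into a divisible linearly ordered
abelian group, taken in the same universe, which is no loss of generality by the
`2 ^ 2 ^ |A|` cardinality bound on i-extensions) is surjective. -/
def IComplete (A : Type u) [AddCommGroup A] [LinearOrder A] [IsOrderedAddMonoid A] : Prop :=
  ∀ (B : Type u) [AddCommGroup B] [LinearOrder B] [IsOrderedAddMonoid B], NatDivisible B →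
    ∀ e : A →+ B, IsIExtension e → Function.Surjective ⇑e

/-- The pointwise stabilizer `{h : h + X = X}` of a subset `X` under translation. -/
def cutStabilizer {A : Type u} [AddCommGroup A] [LinearOrder A] [IsOrderedAddMonoid A] (X : Set A) : Set A :=
  {h | (fun d => h + d) '' X = X}

lemma ratq (q : ℚ) : (q.den : ℚ) * q = (q.num : ℚ) := by
  rw [Rat.den_mul_eq_num]

section RatModule
variable {A : Type u} [AddCommGroup A] [LinearOrder A] [IsOrderedAddMonoid A]

noncomputable def divN (hA : NatDivisible A) (k : ℕ) (a : A) : A :=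
  if h : 0 < k then (hA k h a).choose else 0

lemma divN_spec (hA : NatDivisible A) {k : ℕ} (hk : 0 < k) (a : A) :
    k • divN hA k a = a := by
  rw [divN, dif_pos hk]; exact (hA k hk a).choose_spec

noncomputable def qs (hA : NatDivisible A) (q : ℚ) (a : A) : A :=
  q.num • divN hA q.den a

lemma den_zsmul_qs (hA : NatDivisible A) (q : ℚ) (a : A) :
    (q.den : ℤ) • qs hA q a = q.num • a := by
  rw [qs, smul_comm, natCast_zsmul, divN_spec hA q.pos a]

lemma qs_cross (hA : NatDivisible A) {n m : ℤ} (hn : n ≠ 0) {q : ℚ}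
    (h : (m : ℚ) = n * q) (a : A) : n • qs hA q a = m • a := by
  have hd : ((q.den : ℕ) : ℤ) ≠ 0 := by exact_mod_cast q.den_nz
  apply zsmul_right_injective hd
  show (q.den : ℤ) • (n • qs hA q a) = (q.den : ℤ) • (m • a)
  rw [smul_comm, den_zsmul_qs, ← mul_zsmul, ← mul_zsmul]
  congr 1
  have : ((n * q.num : ℤ) : ℚ) = (((q.den : ℤ) * m : ℤ) : ℚ) := by
    push_cast
    rw [h, ← ratq q]
    ring
  exact_mod_cast this

/-- The rational module structure on a divisible linearly ordered abelian group. -/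
noncomputable def ratModule (hA : NatDivisible A) : Module ℚ A where
  smul := qs hA
  one_smul a := by
    have h := qs_cross hA (n := 1) (m := 1) one_ne_zero (q := 1) (by norm_num) a
    simp at h; exact h
  mul_smul p q a := by
    have hpq : ((p.den : ℤ) * q.den : ℤ) ≠ 0 := by
      exact_mod_cast mul_ne_zero p.den_nz q.den_nz
    apply zsmul_right_injective hpq
    show ((p.den : ℤ) * q.den) • qs hA (p * q) a
        = ((p.den : ℤ) * q.den) • qs hA p (qs hA q a)
    rw [qs_cross hA hpq (m := p.num * q.num)
      (by push_cast; rw [← ratq p, ← ratq q]; ring) a]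
    rw [mul_zsmul' _ p.num q.num, mul_zsmul _ ((p.den : ℤ)) ((q.den : ℤ))]
    rw [smul_comm ((p.den : ℤ)) ((q.den : ℤ)), den_zsmul_qs,
      smul_comm ((q.den : ℤ)) p.num, den_zsmul_qs]
    exact smul_comm _ _ _
  smul_zero q := by
    have hd : ((q.den : ℕ) : ℤ) ≠ 0 := by exact_mod_cast q.den_nz
    apply zsmul_right_injective hd
    show (q.den : ℤ) • qs hA q 0 = (q.den : ℤ) • (0 : A)
    rw [den_zsmul_qs]; simp
  smul_add q a b := by
    have hd : ((q.den : ℕ) : ℤ) ≠ 0 := by exact_mod_cast q.den_nz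
    apply zsmul_right_injective hd
    show (q.den : ℤ) • qs hA q (a + b) = (q.den : ℤ) • (qs hA q a + qs hA q b)
    rw [den_zsmul_qs, smul_add, smul_add, den_zsmul_qs, den_zsmul_qs]
  add_smul p q a := by
    have hpq : ((p.den : ℤ) * q.den : ℤ) ≠ 0 := by
      exact_mod_cast mul_ne_zero p.den_nz q.den_nz
    apply zsmul_right_injective hpq
    show ((p.den : ℤ) * q.den) • qs hA (p + q) a
        = ((p.den : ℤ) * q.den) • (qs hA p a + qs hA q a)
    rw [qs_cross hA hpq (m := p.num * q.den + q.num * p.den)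
      (by push_cast; rw [← ratq p, ← ratq q]; ring) a]
    rw [smul_add, add_zsmul]
    congr 1
    · rw [mul_zsmul' _ ((p.den : ℤ)) ((q.den : ℤ)), den_zsmul_qs,
        smul_comm ((q.den : ℤ)) p.num, mul_zsmul a p.num ((q.den : ℤ))]
    · rw [mul_zsmul _ ((p.den : ℤ)) ((q.den : ℤ)), den_zsmul_qs,
        smul_comm ((p.den : ℤ)) q.num, mul_zsmul a q.num ((p.den : ℤ))]
  zero_smul a := by
    have h := qs_cross hA (n := 1) (m := 0) one_ne_zero (q := 0) (by norm_num) a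
    simp at h; exact h

end RatModule

section OrderSMul
variable {A : Type u} [AddCommGroup A] [LinearOrder A] [IsOrderedAddMonoid A] [Module ℚ A]

lemma ratq' (q : ℚ) : (q.den : ℚ) * q = (q.num : ℚ) := by rw [Rat.den_mul_eq_num]

lemma denq_smul (q : ℚ) (x : A) : (q.den : ℤ) • (q • x) = q.num • x := by
  rw [← Int.cast_smul_eq_zsmul ℚ ((q.den : ℤ)), ← Int.cast_smul_eq_zsmul ℚ q.num, smul_smul]
  congr 1
  push_cast
  exact ratq' q

lemma smul_lt_smul_iff_q {q : ℚ} (hq : 0 < q) {x y : A} : q • x < q • y ↔ x < y := by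
  have h1 : (0:ℤ) < q.num := Rat.num_pos.2 hq
  have hd : (0:ℤ) < (q.den : ℤ) := by exact_mod_cast q.pos
  constructor
  · intro h
    have h2 := (zsmul_lt_zsmul_iff_right hd).2 h
    rw [denq_smul, denq_smul] at h2
    exact (zsmul_lt_zsmul_iff_right h1).1 h2
  · intro h
    have h2 := (zsmul_lt_zsmul_iff_right h1).2 h
    rw [← denq_smul q x, ← denq_smul q y] at h2
    exact (zsmul_lt_zsmul_iff_right hd).1 h2

lemma smul_le_smul_iff_q {q : ℚ} (hq : 0 < q) {x y : A} : q • x ≤ q • y ↔ x ≤ y := by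
  rw [← not_lt, ← not_lt, smul_lt_smul_iff_q hq]

lemma smul_pos_q {q : ℚ} (hq : 0 < q) {x : A} (hx : 0 < x) : 0 < q • x := by
  have := (smul_lt_smul_iff_q hq).2 hx
  rwa [smul_zero] at this

lemma smul_le_q {q : ℚ} (hq : 0 < q) {x y : A} (h : x ≤ y) : q • x ≤ q • y :=
  (smul_le_smul_iff_q hq).2 h

end OrderSMul


section Cut
variable {A : Type u} [AddCommGroup A] [LinearOrder A] [IsOrderedAddMonoid A] {X : Set A}

lemma stab_zero (X : Set A) : (0 : A) ∈ cutStabilizer X := by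
  show (fun d => 0 + d) '' X = X
  simp

lemma stab_add_mem {h x : A} (hh : h ∈ cutStabilizer X) (hx : x ∈ X) : h + x ∈ X := by
  have : h + x ∈ (fun d => h + d) '' X := ⟨x, hx, rfl⟩
  rwa [hh] at this

lemma stab_sub_mem {h x : A} (hh : h ∈ cutStabilizer X) (hx : x ∈ X) : x - h ∈ X := by
  rw [show X = (fun d => h + d) '' X from hh.symm] at hx
  obtain ⟨y, hy, rfl⟩ := hx
  simpa using hy

lemma stab_neg {h : A} (hh : h ∈ cutStabilizer X) : -h ∈ cutStabilizer X := by
  show (fun d => -h + d) '' X = X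
  ext z
  constructor
  · rintro ⟨y, hy, rfl⟩
    have := stab_sub_mem hh hy
    simpa [sub_eq_add_neg, add_comm] using this
  · intro hz
    exact ⟨h + z, stab_add_mem hh hz, neg_add_cancel_left h z⟩

variable (hdc : ∀ a b : A, a ≤ b → b ∈ X → a ∈ X)
include hdc

lemma form1_of {c₀ : A} (hc₀ : c₀ ∈ X)
    (hS : ∀ s s' : A, 0 ≤ s → 0 ≤ s' → c₀ + s ∈ X → c₀ + s' ∈ X → c₀ + (s + s') ∈ X) :
    X = {x | ∃ h ∈ cutStabilizer X, x ≤ h + c₀} := by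
  have hmem : ∀ s : A, 0 ≤ s → c₀ + s ∈ X → s ∈ cutStabilizer X := by
    intro s hs hsX
    apply Set.Subset.antisymm
    · rintro _ ⟨x, hx, rfl⟩
      by_cases hxc : x ≤ c₀
      · exact hdc (s + x) (c₀ + s) (by rw [add_comm s x]; exact add_le_add_left hxc s) hsX
      · have hcx : c₀ < x := not_le.1 hxc
        have h2 := hS s (x - c₀) hs (sub_nonneg.2 hcx.le) hsX (by rwa [add_sub_cancel])
        rwa [show c₀ + (s + (x - c₀)) = s + x by abel] at h2
    · intro x hx
      exact ⟨x - s, hdc _ _ (sub_le_self x hs) hx, by show s + (x - s) = x; rw [add_comm, sub_add_cancel]⟩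
  apply Set.Subset.antisymm
  · intro x hx
    by_cases hxc : x ≤ c₀
    · exact ⟨0, stab_zero X, by rwa [zero_add]⟩
    · have hcx : c₀ < x := not_le.1 hxc
      refine ⟨x - c₀, hmem _ (sub_nonneg.2 hcx.le) (by rwa [add_sub_cancel]), ?_⟩
      rw [sub_add_cancel]
  · rintro x ⟨h, hh, hx⟩
    exact hdc x (h + c₀) hx (stab_add_mem hh hc₀)

lemma form2_of {c₀ : A} (hc₀ : c₀ ∉ X)
    (hS : ∀ s s' : A, 0 ≤ s → 0 ≤ s' → c₀ - s ∉ X → c₀ - s' ∉ X → c₀ - (s + s') ∉ X) :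
    X = {x | ∀ h ∈ cutStabilizer X, x < h + c₀} := by
  have hmem : ∀ s : A, 0 ≤ s → c₀ - s ∉ X → s ∈ cutStabilizer X := by
    intro s hs hsX
    apply Set.Subset.antisymm
    · rintro _ ⟨x, hx, rfl⟩
      by_contra hnx
      have hxlt : x < c₀ - s := lt_of_not_ge fun hle => hsX (hdc _ _ hle hx)
      have h2 : c₀ - (c₀ - s - x) ∉ X := by
        rwa [show c₀ - (c₀ - s - x) = s + x by abel]
      have h3 := hS s (c₀ - s - x) hs (sub_nonneg.2 hxlt.le) hsX h2
      apply h3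
      rwa [show c₀ - (s + (c₀ - s - x)) = x by abel]
    · intro x hx
      exact ⟨x - s, hdc _ _ (sub_le_self x hs) hx, by show s + (x - s) = x; rw [add_comm, sub_add_cancel]⟩
  apply Set.Subset.antisymm
  · intro x hx h hh
    by_contra hlt
    push_neg at hlt
    have h1 : h + c₀ ∈ X := hdc _ _ hlt hx
    have h2 := stab_sub_mem hh h1
    rw [add_sub_cancel_left] at h2
    exact hc₀ h2
  · intro x hx
    by_contra hnx
    have hxc : x < c₀ := by
      have := hx 0 (stab_zero X)
      rwa [zero_add] at this
    have hsS : (c₀ - x) ∈ cutStabilizer X :=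
      hmem _ (sub_pos.2 hxc).le (by rwa [show c₀ - (c₀ - x) = x by abel])
    have := hx (-(c₀ - x)) (stab_neg hsS)
    rw [show -(c₀ - x) + c₀ = x by abel] at this
    exact lt_irrefl x this

end Cut

section Pos
variable {A : Type u} [AddCommGroup A] [LinearOrder A] [IsOrderedAddMonoid A] [Module ℚ A] (X : Set A)


/-- Positivity predicate on `A × ℚ`, encoding `a + q·t > 0` for `t` realizing the cut `X`. -/
def posP : A × ℚ → Prop := fun p =>
  if p.2 = 0 then 0 < p.1 else if 0 < p.2 then p.2⁻¹ • (-p.1) ∈ X else p.2⁻¹ • (-p.1) ∉ X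

variable {X}

lemma posP_q_zero {p : A × ℚ} (hq : p.2 = 0) : posP X p ↔ 0 < p.1 := by
  simp [posP, hq]

lemma posP_q_pos {p : A × ℚ} (hq : 0 < p.2) : posP X p ↔ p.2⁻¹ • (-p.1) ∈ X := by
  simp [posP, hq.ne', hq]

lemma posP_q_neg {p : A × ℚ} (hq : p.2 < 0) : posP X p ↔ p.2⁻¹ • (-p.1) ∉ X := by
  simp [posP, hq.ne, not_lt_of_gt hq]

lemma posP_not_zero : ¬ posP X (0 : A × ℚ) := by
  rw [posP_q_zero rfl]
  exact lt_irrefl 0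

lemma posP_neg_iff {u : A × ℚ} (hu : u ≠ 0) : posP X (-u) ↔ ¬ posP X u := by
  obtain ⟨a, q⟩ := u
  have hneg : (-(a, q) : A × ℚ) = (-a, -q) := rfl
  rcases lt_trichotomy q 0 with h | h | h
  · rw [hneg, posP_q_pos (by simpa using h : (0:ℚ) < (-a, -q).2), posP_q_neg h]
    have : ((-a, -q) : A × ℚ).2⁻¹ • (-(-a, -q).1) = q⁻¹ • (-a) := by
      show (-q)⁻¹ • (-(-a)) = q⁻¹ • (-a)
      rw [neg_neg, inv_neg, neg_smul, ← smul_neg]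
    rw [this]
    exact not_not.symm
  · subst h
    have ha : a ≠ 0 := by
      intro h0
      exact hu (by rw [h0]; rfl)
    rw [hneg, posP_q_zero rfl, posP_q_zero rfl]
    show 0 < -a ↔ ¬ 0 < a
    rw [neg_pos]
    rcases ha.lt_or_gt with h | h
    · simp [h, h.not_gt, asymm h]
    · simp [h, h.not_gt, not_lt_of_gt h]
  · rw [hneg, posP_q_neg (by simpa using h : ((-a, -q) : A × ℚ).2 < 0), posP_q_pos h]
    have : ((-a, -q) : A × ℚ).2⁻¹ • (-(-a, -q).1) = q⁻¹ • (-a) := by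
      show (-q)⁻¹ • (-(-a)) = q⁻¹ • (-a)
      rw [neg_neg, inv_neg, neg_smul, ← smul_neg]
    rw [this]

variable (hdc : ∀ a b : A, a ≤ b → b ∈ X → a ∈ X)
include hdc

lemma avg_mem {p q : ℚ} (hp : 0 < p) (hq : 0 < q) {x y : A} (hx : x ∈ X) (hy : y ∈ X) :
    (p + q)⁻¹ • (p • x + q • y) ∈ X := by
  have hr : 0 < p + q := by positivity
  refine hdc _ (max x y) ?_ ?_
  · rw [← smul_le_smul_iff_q hr, smul_inv_smul₀ hr.ne']
    calc p • x + q • y ≤ p • max x y + q • max x y :=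
          add_le_add (smul_le_q hp (le_max_left x y)) (smul_le_q hq (le_max_right x y))
      _ = (p + q) • max x y := (add_smul p q (max x y)).symm
  · rcases max_choice x y with h | h <;> rw [h] <;> assumption

lemma avg_not_mem {p q : ℚ} (hp : 0 < p) (hq : 0 < q) {x y : A} (hx : x ∉ X) (hy : y ∉ X) :
    (p + q)⁻¹ • (p • x + q • y) ∉ X := by
  intro hmem
  have hr : 0 < p + q := by positivity
  have hle : min x y ≤ (p + q)⁻¹ • (p • x + q • y) := by
    rw [← smul_le_smul_iff_q hr, smul_inv_smul₀ hr.ne']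
    calc (p + q) • min x y = p • min x y + q • min x y := add_smul p q (min x y)
      _ ≤ p • x + q • y :=
          add_le_add (smul_le_q hp (min_le_left x y)) (smul_le_q hq (min_le_right x y))
  have : min x y ∈ X := hdc _ _ hle hmem
  rcases min_choice x y with h | h <;> rw [h] at this <;> [exact hx this; exact hy this]

/-- adding a positive "constant" element to a positive element with nonzero `q`. -/
lemma posP_add_zero_left {a b : A} {q : ℚ} (ha : 0 < a) (hq : q ≠ 0)
    (hb : posP X (b, q)) : posP X (a + b, q) := by
  rcases hq.lt_or_gt with h | h
  · have hc : q⁻¹ • (-b) ∉ X := (posP_q_neg h).1 hb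
    rw [posP_q_neg h]
    show q⁻¹ • (-(a + b)) ∉ X
    intro hmem
    apply hc
    refine hdc _ _ ?_ hmem
    show q⁻¹ • (-b) ≤ q⁻¹ • (-(a + b))
    have h1 : 0 < (-q)⁻¹ • a := smul_pos_q (inv_pos.2 (neg_pos.2 h)) ha
    have h2 : (-q)⁻¹ • a = -(q⁻¹ • a) := by rw [inv_neg, neg_smul]
    have h3 : q⁻¹ • (-(a + b)) = q⁻¹ • (-b) + -(q⁻¹ • a) := by
      rw [neg_add, smul_add, ← smul_neg, add_comm]
    rw [h3, ← h2]
    exact le_add_of_nonneg_right h1.le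
  · have hc : q⁻¹ • (-b) ∈ X := (posP_q_pos h).1 hb
    rw [posP_q_pos h]
    show q⁻¹ • (-(a + b)) ∈ X
    refine hdc _ _ ?_ hc
    have h1 : 0 < q⁻¹ • a := smul_pos_q (by positivity) ha
    have h3 : q⁻¹ • (-(a + b)) = q⁻¹ • (-b) + -(q⁻¹ • a) := by
      rw [neg_add, smul_add, ← smul_neg, add_comm]
    rw [h3]
    exact add_le_of_nonpos_right (neg_nonpos.2 h1.le)

lemma posP_add_mixed {a b : A} {p q : ℚ} (hp : 0 < p) (hq : q < 0)
    (hu : posP X (a, p)) (hv : posP X (b, q)) : posP X (a + b, p + q) := by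
  set cu := p⁻¹ • (-a) with hcu_def
  set cv := q⁻¹ • (-b) with hcv_def
  have hcu : cu ∈ X := (posP_q_pos hp).1 hu
  have hcv : cv ∉ X := (posP_q_neg hq).1 hv
  have hlt : cu < cv := lt_of_not_ge fun hle => hcv (hdc _ _ hle hcu)
  have ha : p • cu = -a := smul_inv_smul₀ hp.ne' (-a)
  have hb : q • cv = -b := smul_inv_smul₀ hq.ne (-b)
  have hab : -(a + b) = p • cu + q • cv := by rw [ha, hb, neg_add]
  rcases lt_trichotomy (p + q) 0 with hr | hr | hr
  · -- negative total weight : show the new cut point is above cv, hence not in X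
    rw [posP_q_neg hr]
    show (p + q)⁻¹ • (-(a + b)) ∉ X
    set c' := (p + q)⁻¹ • (-(a + b)) with hc'
    have hc'spec : (p + q) • c' = -(a + b) := smul_inv_smul₀ hr.ne _
    have key : (p + q) • c' < (p + q) • cv := by
      rw [hc'spec, hab]
      calc p • cu + q • cv < p • cv + q • cv :=
            add_lt_add_left ((smul_lt_smul_iff_q hp).2 hlt) _
        _ = (p + q) • cv := (add_smul p q cv).symm
    have hcvc' : cv < c' := by
      have h2 : (-(p + q)) • cv < (-(p + q)) • c' := by
        rw [neg_smul, neg_smul]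
        exact neg_lt_neg key
      exact (smul_lt_smul_iff_q (by linarith : (0:ℚ) < -(p + q))).1 h2
    intro hmem
    exact hcv (hdc _ _ hcvc'.le hmem)
  · -- zero total weight : reduces to positivity in A
    rw [posP_q_zero (by simpa using hr)]
    show 0 < a + b
    have hq' : q = -p := by linarith
    have hA : a = -(p • cu) := by rw [ha, neg_neg]
    have hB : b = p • cv := by
      rw [hq', neg_smul] at hb
      exact (neg_inj.1 hb).symm
    have : a + b = p • (cv - cu) := by rw [hA, hB, smul_sub]; abel
    rw [this]
    exact smul_pos_q hp (sub_pos.2 hlt)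
  · -- positive total weight : the new cut point is below cu, hence in X
    rw [posP_q_pos hr]
    show (p + q)⁻¹ • (-(a + b)) ∈ X
    set c' := (p + q)⁻¹ • (-(a + b)) with hc'
    have hc'spec : (p + q) • c' = -(a + b) := smul_inv_smul₀ hr.ne' _
    have key : (p + q) • c' < (p + q) • cu := by
      rw [hc'spec, hab]
      have h1 : q • cv < q • cu := by
        have h2 : (-q) • cu < (-q) • cv := (smul_lt_smul_iff_q (by linarith)).2 hlt
        rw [neg_smul, neg_smul] at h2
        exact neg_lt_neg_iff.1 h2
      calc p • cu + q • cv < p • cu + q • cu := add_lt_add_right h1 _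
        _ = (p + q) • cu := (add_smul p q cu).symm
    have : c' < cu := (smul_lt_smul_iff_q hr).1 key
    exact hdc _ _ this.le hcu

lemma posP_add {u v : A × ℚ} (hu : posP X u) (hv : posP X v) : posP X (u + v) := by
  obtain ⟨a, p⟩ := u
  obtain ⟨b, q⟩ := v
  have hadd : ((a, p) : A × ℚ) + (b, q) = (a + b, p + q) := rfl
  rw [hadd]
  rcases lt_trichotomy p 0 with hp | hp | hp
  · rcases lt_trichotomy q 0 with hq | hq | hq
    · -- both negative
      have hr : p + q < 0 := by linarith
      rw [posP_q_neg hr]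
      show (p + q)⁻¹ • (-(a + b)) ∉ X
      set cu := p⁻¹ • (-a) with hcu_def
      set cv := q⁻¹ • (-b) with hcv_def
      have hcu : cu ∉ X := (posP_q_neg hp).1 hu
      have hcv : cv ∉ X := (posP_q_neg hq).1 hv
      have ha : p • cu = -a := smul_inv_smul₀ hp.ne (-a)
      have hb : q • cv = -b := smul_inv_smul₀ hq.ne (-b)
      have hab' : -(a + b) = p • cu + q • cv := by rw [ha, hb, neg_add]
      have e1 : ((-p) + (-q))⁻¹ • ((-p) • cu + (-q) • cv) = (p + q)⁻¹ • (p • cu + q • cv) := by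
        rw [show (-p) + (-q) = -(p+q) by ring, inv_neg, neg_smul p, neg_smul q,
          show -(p • cu) + -(q • cv) = -(p • cu + q • cv) from (neg_add _ _).symm,
          neg_smul, smul_neg, neg_neg]
      rw [hab', ← e1]
      exact avg_not_mem hdc (by linarith) (by linarith) hcu hcv
    · -- q = 0 : use the zero-left lemma after commuting
      subst hq
      have hb0 : 0 < b := (posP_q_zero rfl).1 hv
      have := posP_add_zero_left hdc hb0 hp.ne hu
      rw [show b + a = a + b from add_comm b a] at this
      rw [show p + 0 = p from add_zero p]
      exact this
    · -- p < 0 < q : mixed, commuted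
      have := posP_add_mixed hdc hq hp hv hu
      rw [show b + a = a + b from add_comm b a, show q + p = p + q from add_comm q p] at this
      exact this
  · -- p = 0
    subst hp
    have ha0 : 0 < a := (posP_q_zero rfl).1 hu
    rcases eq_or_ne q 0 with hq | hq
    · subst hq
      rw [show (0:ℚ) + 0 = 0 from add_zero 0, posP_q_zero rfl]
      have hb0 : 0 < b := (posP_q_zero rfl).1 hv
      show 0 < a + b
      exact add_pos ha0 hb0
    · rw [show (0:ℚ) + q = q from zero_add q]
      exact posP_add_zero_left hdc ha0 hq hv
  · rcases lt_trichotomy q 0 with hq | hq | hq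
    · exact posP_add_mixed hdc hp hq hu hv
    · subst hq
      have hb0 : 0 < b := (posP_q_zero rfl).1 hv
      have := posP_add_zero_left hdc hb0 hp.ne' hu
      rw [show b + a = a + b from add_comm b a] at this
      rw [show p + 0 = p from add_zero p]
      exact this
    · -- both positive
      have hr : 0 < p + q := by linarith
      rw [posP_q_pos hr]
      show (p + q)⁻¹ • (-(a + b)) ∈ X
      set cu := p⁻¹ • (-a) with hcu_def
      set cv := q⁻¹ • (-b) with hcv_def
      have hcu : cu ∈ X := (posP_q_pos hp).1 hu
      have hcv : cv ∈ X := (posP_q_pos hq).1 hv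
      have ha : p • cu = -a := smul_inv_smul₀ hp.ne' (-a)
      have hb : q • cv = -b := smul_inv_smul₀ hq.ne' (-b)
      have hrw : (p + q)⁻¹ • (-(a + b)) = (p + q)⁻¹ • (p • cu + q • cv) := by
        rw [ha, hb, neg_add]
      rw [hrw]
      exact avg_mem hdc hp hq hcu hcv

end Pos
/-- The auxiliary extension group: `A × ℚ` as a type synonym, to carry a custom order. -/
def BB (A : Type u) : Type u := A × ℚ

instance (A : Type u) [AddCommGroup A] [LinearOrder A] [IsOrderedAddMonoid A] : AddCommGroup (BB A) :=
  inferInstanceAs (AddCommGroup (A × ℚ))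

section Cone
variable {A : Type u} [AddCommGroup A] [LinearOrder A] [IsOrderedAddMonoid A] [Module ℚ A]

/-- The positive cone on `BB A` determined by the cut `X`. -/
def coneC (X : Set A) (hdc : ∀ a b : A, a ≤ b → b ∈ X → a ∈ X) : AddGroupCone (BB A) where
  carrier := {u : BB A | u = 0 ∨ posP X u}
  zero_mem' := Or.inl rfl
  add_mem' := by
    rintro u v (rfl | hu) (rfl | hv)
    · left; rw [add_zero]
    · right; rwa [zero_add]
    · right; rwa [add_zero]
    · right; exact posP_add hdc hu hv
  eq_zero_of_mem_of_neg_mem' := by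
    rintro u (rfl | hu) h2
    · rfl
    · rcases h2 with h0 | hneg
      · exact neg_eq_zero.1 h0
      · have hne : u ≠ 0 := fun h => posP_not_zero (X := X) (h ▸ hu)
        exact absurd hu ((posP_neg_iff hne).1 hneg)

lemma coneC_max (X : Set A) (hdc : ∀ a b : A, a ≤ b → b ∈ X → a ∈ X) :
    HasMemOrNegMem (coneC X hdc) := by
  constructor
  intro u
  rcases eq_or_ne u 0 with rfl | hne
  · exact Or.inl (Or.inl rfl)
  · by_cases hp : posP X u
    · exact Or.inl (Or.inr hp)
    · exact Or.inr (Or.inr ((posP_neg_iff hne).2 hp))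

end Cone

/-- Corollary C7 of Haskell–Hrushovski–Macpherson.  If `A` is an
i-complete divisible ordered abelian group, `X ⊆ A` is downward closed and
`H = {h : h + X = X}`, then for some `a ∈ A` either
`X = {x : ∃ h ∈ H, x ≤ h + a}` or `X = {x : ∀ h ∈ H, x < h + a}`: every cut of `A` is
a translate of a cut of a convex subgroup. -/
theorem icomplete_cut_classification (A : Type u) [AddCommGroup A] [LinearOrder A] [IsOrderedAddMonoid A]
    (hA : NatDivisible A) (hic : IComplete A)
    (X : Set A) (hdc : ∀ a b : A, a ≤ b → b ∈ X → a ∈ X) :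
    ∃ a : A,
      X = {x : A | ∃ h ∈ cutStabilizer X, x ≤ h + a} ∨
      X = {x : A | ∀ h ∈ cutStabilizer X, x < h + a} := by
  classical
  by_contra hcon
  push_neg at hcon
  letI : Module ℚ A := ratModule hA
  set C : AddGroupCone (BB A) := coneC X hdc with hC
  haveI hmax : HasMemOrNegMem C := coneC_max X hdc
  letI : LinearOrder (BB A) := LinearOrder.mkOfAddGroupCone C
  haveI : IsOrderedAddMonoid (BB A) := IsOrderedAddMonoid.mkOfCone C
  have hle : ∀ u v : BB A, u ≤ v ↔ (v - u = 0 ∨ posP X (v - u)) := fun u v => Iff.rfl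
  have hlt : ∀ u v : BB A, u < v ↔ posP X (v - u) := by
    intro u v
    rw [lt_iff_le_not_ge, hle, hle]
    constructor
    · rintro ⟨h1 | h1, h2⟩
      · exact absurd (Or.inl (by rw [← neg_sub, h1, neg_zero])) h2
      · exact h1
    · intro hp
      refine ⟨Or.inr hp, ?_⟩
      rintro (h0 | hp')
      · have hvu : v - u = 0 := by rw [← neg_sub u v, h0, neg_zero]
        exact posP_not_zero (X := X) (hvu ▸ hp)
      · have hne : v - u ≠ 0 := fun h => posP_not_zero (X := X) (h ▸ hp)
        rw [← neg_sub v u] at hp'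
        exact absurd hp ((posP_neg_iff hne).1 hp')
  set e : A →+ BB A := AddMonoidHom.mk' (fun a => ((a, 0) : A × ℚ))
    (fun a b => by show ((a + b, (0:ℚ)) : A × ℚ) = @HAdd.hAdd (A × ℚ) (A × ℚ) (A × ℚ) _ (a, 0) (b, 0); rw [Prod.mk_add_mk, add_zero]) with he
  have heval : ∀ x : A, e x = ((x, 0) : A × ℚ) := fun x => rfl
  -- divisibility of the extension
  have hdiv : NatDivisible (BB A) := by
    intro k hk u
    have hk' : ((k : ℚ)) ≠ 0 := by exact_mod_cast hk.ne'
    refine ⟨(((k : ℚ)⁻¹ • u.1, u.2 / k) : A × ℚ), ?_⟩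
    show ((k • ((k : ℚ)⁻¹ • u.1), k • (u.2 / k)) : A × ℚ) = (u.1, u.2)
    congr 1
    · rw [← Nat.cast_smul_eq_nsmul ℚ, smul_inv_smul₀ hk']
    · rw [nsmul_eq_mul]
      field_simp
  -- the embedding is an i-extension
  have hext : IsIExtension e := by
    constructor
    · intro x y hxy
      rw [hlt]
      have hsub : e y - e x = ((y - x, 0) : A × ℚ) := by
        show ((y - x, (0:ℚ) - 0) : A × ℚ) = (y - x, 0)
        rw [sub_zero]
      rw [hsub, posP_q_zero rfl]
      exact sub_pos.2 hxy
    · intro b hb Hcl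
      have hb' : posP X b := by
        have := (hlt 0 b).1 hb
        rwa [sub_zero] at this
      have hsub : ∀ x : A, b - e x = ((b.1 - x, b.2) : A × ℚ) := by
        intro x
        show ((b.1 - x, b.2 - 0) : A × ℚ) = (b.1 - x, b.2)
        rw [sub_zero]
      have hzle : ∀ x : A, 0 ≤ x → (0 : BB A) ≤ e x := by
        intro x hx
        rw [hle, sub_zero, heval]
        rcases hx.eq_or_lt with rfl | hx'
        · exact Or.inl rfl
        · exact Or.inr ((posP_q_zero rfl).2 hx')
      rcases lt_trichotomy b.2 0 with hq | hq | hq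
      · -- negative rational part: leads to the second form
        set c₀ := b.2⁻¹ • (-b.1) with hc₀def
        have hc₀ : c₀ ∉ X := (posP_q_neg hq).1 hb'
        have hcut : ∀ t : A, 0 ≤ t → (c₀ - t ∉ X) →
            (0 ≤ e ((-b.2) • t) ∧ e ((-b.2) • t) ≤ b) := by
          intro t ht hmem
          have hbq' : (0:ℚ) < -b.2 := neg_pos.2 hq
          have htt : (0:A) ≤ (-b.2) • t := by
            rcases ht.eq_or_lt with rfl | ht'
            · rw [smul_zero]
            · exact (smul_pos_q hbq' ht').le
          refine ⟨hzle _ htt, ?_⟩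
          rw [hle, hsub]
          right
          rw [posP_q_neg (show ((b.1 - (-b.2) • t, b.2) : A × ℚ).2 < 0 from hq)]
          show b.2⁻¹ • (-(b.1 - (-b.2) • t)) ∉ X
          have hrw : b.2⁻¹ • (-(b.1 - (-b.2) • t)) = c₀ - t := by
            rw [neg_sub, smul_sub, neg_smul, smul_neg, inv_smul_smul₀ hq.ne, hc₀def, smul_neg]
            abel
          rwa [hrw]
        have hS : ∀ s s' : A, 0 ≤ s → 0 ≤ s' → c₀ - s ∉ X → c₀ - s' ∉ X →
            c₀ - (s + s') ∉ X := by
          intro s s' hs hs' h1 h2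
          have hsum := Hcl _ _ (hcut s hs h1) (hcut s' hs' h2)
          have h2' := hsum.2
          rw [← smul_add] at h2'
          rw [hle, hsub] at h2'
          rcases h2' with h0 | hp
          · exact absurd (Prod.mk_eq_zero.1 h0).2 hq.ne
          · rw [posP_q_neg (show ((b.1 - (-b.2) • (s + s'), b.2) : A × ℚ).2 < 0 from hq)] at hp
            have hrw : b.2⁻¹ • (-(b.1 - (-b.2) • (s + s'))) = c₀ - (s + s') := by
              rw [neg_sub, smul_sub, neg_smul, smul_neg, inv_smul_smul₀ hq.ne, hc₀def, smul_neg]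
              abel
            rwa [hrw] at hp
        exact (hcon c₀).2 (form2_of hdc hc₀ hS)
      · -- zero rational part: always contradictory
        have hbA : 0 < b.1 := (posP_q_zero hq).1 hb'
        have h1 : (0 : BB A) ≤ e b.1 := hzle b.1 hbA.le
        have h2 : e b.1 ≤ b := by
          rw [hle, hsub, sub_self]
          exact Or.inl (Prod.mk_eq_zero.2 ⟨rfl, hq⟩)
        have hsum := Hcl b.1 b.1 ⟨h1, h2⟩ ⟨h1, h2⟩
        have h3 := hsum.2
        rw [hle, hsub] at h3
        rcases h3 with h0 | hp
        · have := (Prod.mk_eq_zero.1 h0).1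
          rw [sub_add_eq_sub_sub, sub_self, zero_sub, neg_eq_zero] at this
          exact absurd this hbA.ne'
        · rw [posP_q_zero (show ((b.1 - (b.1 + b.1), b.2) : A × ℚ).2 = 0 from hq)] at hp
          have hneg : b.1 - (b.1 + b.1) = -b.1 := by abel
          rw [hneg] at hp
          exact absurd hp (neg_nonpos_of_nonneg hbA.le).not_gt
      · -- positive rational part: leads to the first form
        set c₀ := b.2⁻¹ • (-b.1) with hc₀def
        have hc₀ : c₀ ∈ X := (posP_q_pos hq).1 hb'
        have hcut : ∀ t : A, 0 ≤ t → (c₀ + t ∈ X) →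
            (0 ≤ e (b.2 • t) ∧ e (b.2 • t) ≤ b) := by
          intro t ht hmem
          have htt : (0:A) ≤ b.2 • t := by
            rcases ht.eq_or_lt with rfl | ht'
            · rw [smul_zero]
            · exact (smul_pos_q hq ht').le
          refine ⟨hzle _ htt, ?_⟩
          rw [hle, hsub]
          right
          rw [posP_q_pos (show (0:ℚ) < ((b.1 - b.2 • t, b.2) : A × ℚ).2 from hq)]
          show b.2⁻¹ • (-(b.1 - b.2 • t)) ∈ X
          have hrw : b.2⁻¹ • (-(b.1 - b.2 • t)) = c₀ + t := by
            rw [neg_sub, smul_sub, inv_smul_smul₀ hq.ne', hc₀def, smul_neg]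
            abel
          rwa [hrw]
        have hS : ∀ s s' : A, 0 ≤ s → 0 ≤ s' → c₀ + s ∈ X → c₀ + s' ∈ X →
            c₀ + (s + s') ∈ X := by
          intro s s' hs hs' h1 h2
          have hsum := Hcl _ _ (hcut s hs h1) (hcut s' hs' h2)
          have h2' := hsum.2
          rw [← smul_add] at h2'
          rw [hle, hsub] at h2'
          rcases h2' with h0 | hp
          · exact absurd (Prod.mk_eq_zero.1 h0).2 hq.ne'
          · rw [posP_q_pos (show (0:ℚ) < ((b.1 - b.2 • (s + s'), b.2) : A × ℚ).2 from hq)] at hp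
            have hrw : b.2⁻¹ • (-(b.1 - b.2 • (s + s'))) = c₀ + (s + s') := by
              rw [neg_sub, smul_sub, inv_smul_smul₀ hq.ne', hc₀def, smul_neg]
              abel
            rwa [hrw] at hp
        exact (hcon c₀).1 (form1_of hdc hc₀ hS)
  -- i-completeness gives surjectivity, contradiction
  obtain ⟨a, ha⟩ := hic (BB A) hdiv e hext (((0 : A), (1 : ℚ)) : A × ℚ)
  have hq01 : (0 : ℚ) = 1 := congrArg (fun u : A × ℚ => u.2) ha
  exact absurd hq01 (by norm_num)


end Stmt17
end
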